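/- arXiv:2405.19091 — 6 statements merged into one kernel-verified Lean document; each statement's English description precedes it below -/
import Mathlib

section
/- Let b > 0, let β ∈ (0,1), and let w̄ ∈ L¹(0,b) be nonnegative. Then the function ḡ(t) := ∫₀¹ [ w̄(tz)·z + z·(|ln(tz)| + 1) ] (1−z)^{β−1} z^{−β} dz belongs to L¹(0,b); i.e., ∫₀ᵇ ∫₀¹ [ w̄(tz)·z + z·(|ln(tz)| + 1) ] (1−z)^{β−1} z^{−β} dz dt < ∞. -/
open MeasureTheory

open scoped ENNReal NNReal

section Aux

open Real Set ENNReal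

lemma lint_scale {g : ℝ → ℝ≥0∞} (hg : Measurable g) {z : ℝ} (hz : 0 < z) (b : ℝ) :
    ∫⁻ t in Set.Ioc 0 b, g (t * z) = ENNReal.ofReal z⁻¹ * ∫⁻ s in Set.Ioc 0 (b * z), g s := by
  have hpre : (fun t : ℝ => t * z) ⁻¹' (Set.Ioc 0 (b * z)) = Set.Ioc 0 b := by
    ext t
    simp only [Set.mem_preimage, Set.mem_Ioc]
    constructor
    · rintro ⟨h1, h2⟩
      refine ⟨?_, le_of_mul_le_mul_right h2 hz⟩
      nlinarith
    · rintro ⟨h1, h2⟩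
      exact ⟨mul_pos h1 hz, mul_le_mul_of_nonneg_right h2 hz.le⟩
  have h1 : ∫⁻ t in Set.Ioc 0 b, g (t * z) =
      ∫⁻ s, g s ∂(Measure.map (fun t : ℝ => t * z) ((volume : Measure ℝ).restrict (Set.Ioc 0 b))) :=
    (lintegral_map hg (measurable_mul_const z)).symm
  rw [h1, ← hpre, ← Measure.restrict_map (measurable_mul_const z) measurableSet_Ioc,
    Real.map_volume_mul_right hz.ne', Measure.restrict_smul, lintegral_smul_measure,
    abs_of_pos (inv_pos.2 hz), smul_eq_mul]

lemma abs_log_le (t : ℝ) (ht : 0 < t) :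
    |Real.log t| ≤ 2 * t ^ ((2:ℝ)⁻¹) + 2 * t ^ (-(2:ℝ)⁻¹) := by
  have h1 : Real.log t ≤ 2 * t ^ ((2:ℝ)⁻¹) := by
    have := Real.log_le_rpow_div ht.le (by norm_num : (0:ℝ) < 2⁻¹)
    rw [div_eq_mul_inv, inv_inv, mul_comm] at this
    linarith
  have h2 : -Real.log t ≤ 2 * t ^ (-(2:ℝ)⁻¹) := by
    have := Real.log_le_rpow_div (inv_nonneg.2 ht.le) (by norm_num : (0:ℝ) < 2⁻¹)
    rw [Real.log_inv, div_eq_mul_inv, inv_inv, mul_comm,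
      ← Real.rpow_neg_one t, ← Real.rpow_mul ht.le] at this
    norm_num at this
    linarith
  have ha : 0 ≤ 2 * t ^ ((2:ℝ)⁻¹) := by positivity
  have hb : 0 ≤ 2 * t ^ (-(2:ℝ)⁻¹) := by positivity
  rw [abs_le]
  constructor <;> nlinarith

lemma lintegral_ofReal_lt_top_of_integrableOn {f : ℝ → ℝ} {s : Set ℝ}
    (hf : IntegrableOn f s) : ∫⁻ x in s, ENNReal.ofReal (f x) < ⊤ :=
  lt_of_le_of_lt (lintegral_ofReal_le_lintegral_enorm f) hf.2

lemma D_lt_top {b : ℝ} (hb : 0 < b) :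
    ∫⁻ t in Set.Ioc 0 b, ENNReal.ofReal |Real.log t| < ⊤ := by
  have hint : IntegrableOn (fun t : ℝ => 2 * t ^ ((2:ℝ)⁻¹) + 2 * t ^ (-(2:ℝ)⁻¹)) (Set.Ioc 0 b) := by
    have i1 : IntervalIntegrable (fun t : ℝ => t ^ ((2:ℝ)⁻¹)) volume 0 b :=
      intervalIntegral.intervalIntegrable_rpow' (by norm_num)
    have i2 : IntervalIntegrable (fun t : ℝ => t ^ (-(2:ℝ)⁻¹)) volume 0 b :=
      intervalIntegral.intervalIntegrable_rpow' (by norm_num)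
    have := (i1.const_mul 2).add (i2.const_mul 2)
    rwa [intervalIntegrable_iff_integrableOn_Ioc_of_le hb.le] at this
  refine lt_of_le_of_lt ?_ (lintegral_ofReal_lt_top_of_integrableOn hint)
  refine lintegral_mono_ae ?_
  filter_upwards [ae_restrict_mem measurableSet_Ioc] with t ht
  exact ENNReal.ofReal_le_ofReal (abs_log_le t ht.1)

lemma K_lt_top {β : ℝ} (hβ0 : 0 < β) (hβ1 : β < 1) :
    ∫⁻ z in Set.Ioc (0:ℝ) 1, ENNReal.ofReal ((1 - z) ^ (β - 1) * z ^ (-β)) < ⊤ := by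
  have hc : IntervalIntegrable
      (fun x : ℝ => (x : ℂ) ^ ((1 - β : ℂ) - 1) * (1 - (x : ℂ)) ^ ((β : ℂ) - 1)) volume 0 1 :=
    Complex.betaIntegral_convergent (by simp [hβ1]) (by simpa using hβ0)
  have hInt : IntegrableOn (fun x : ℝ =>
      ‖(x : ℂ) ^ ((1 - β : ℂ) - 1) * (1 - (x : ℂ)) ^ ((β : ℂ) - 1)‖) (Set.Ioc 0 1) :=
    ((intervalIntegrable_iff_integrableOn_Ioc_of_le zero_le_one).1 hc).norm
  refine lt_of_le_of_lt (le_of_eq ?_) (lintegral_ofReal_lt_top_of_integrableOn hInt)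
  refine setLIntegral_congr_fun measurableSet_Ioc (fun z hz => ?_)
  congr 1
  rcases eq_or_lt_of_le hz.2 with h1 | h1
  · subst h1
    have e1 : ((1:ℝ) - 1) ^ (β - 1) = 0 := by
      rw [sub_self, Real.zero_rpow (by intro h; rw [sub_eq_zero] at h; linarith)]
    rw [e1, zero_mul]
    have e2 : (1 - ((1:ℝ):ℂ)) ^ ((β:ℂ) - 1) = 0 := by
      rw [Complex.ofReal_one, sub_self, Complex.zero_cpow]
      intro h
      rw [sub_eq_zero] at h
      have : β = 1 := by exact_mod_cast h
      linarith
    rw [e2, mul_zero, norm_zero]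
  · have hz0 : (0:ℝ) < z := hz.1
    have h1z : (0:ℝ) < 1 - z := by linarith
    have hcast : (1 : ℂ) - (z : ℂ) = ((1 - z : ℝ) : ℂ) := by push_cast; ring
    rw [norm_mul, hcast,
      Complex.norm_cpow_eq_rpow_re_of_pos hz0, Complex.norm_cpow_eq_rpow_re_of_pos h1z]
    have r1 : ((1 - β : ℂ) - 1).re = -β := by simp
    have r2 : ((β : ℂ) - 1).re = β - 1 := by simp
    rw [r1, r2, mul_comm]

lemma L_lt_top {β : ℝ} (hβ0 : 0 < β) :
    ∫⁻ z in Set.Ioc (0:ℝ) 1, ENNReal.ofReal ((1 - z) ^ (β - 1)) < ⊤ := by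
  have i1 : IntervalIntegrable (fun x : ℝ => x ^ (β - 1)) volume 0 1 :=
    intervalIntegral.intervalIntegrable_rpow' (by linarith)
  have i2 := (i1.comp_sub_left 1).symm
  norm_num at i2
  exact lintegral_ofReal_lt_top_of_integrableOn
    ((intervalIntegrable_iff_integrableOn_Ioc_of_le zero_le_one).1 i2)

lemma zpow_log_bound {β : ℝ} (hβ1 : β < 1) {z : ℝ} (hz0 : 0 < z) (hz1 : z ≤ 1) :
    z ^ (1 - β) * |Real.log z| ≤ 2 / (1 - β) := by
  have h := Real.abs_log_mul_self_rpow_lt z (1 - β) hz0 hz1 (by linarith)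
  rw [abs_mul, abs_of_nonneg (Real.rpow_nonneg hz0.le _)] at h
  calc z ^ (1 - β) * |Real.log z| = |Real.log z| * z ^ (1 - β) := by ring
    _ ≤ 1 / (1 - β) := h.le
    _ ≤ 2 / (1 - β) := by
        gcongr
        · linarith

lemma inner_bound {b β : ℝ} (hb : 0 < b) (hβ0 : 0 < β) (hβ1 : β < 1)
    {w : ℝ → ℝ} (hw_meas : Measurable w) (hw_nonneg : ∀ x, 0 ≤ w x)
    {z : ℝ} (hz0 : 0 < z) (hz1 : z ≤ 1) :
    (∫⁻ t in Set.Ioc (0:ℝ) b, ENNReal.ofReal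
        ((w (t * z) * z + z * (|Real.log (t * z)| + 1)) * (1 - z) ^ (β - 1) * z ^ (-β)))
      ≤ (∫⁻ s in Set.Ioc (0:ℝ) b, ENNReal.ofReal (w s))
          * ENNReal.ofReal ((1 - z) ^ (β - 1) * z ^ (-β))
        + ((∫⁻ t in Set.Ioc (0:ℝ) b, ENNReal.ofReal |Real.log t|)
            + ENNReal.ofReal b * (ENNReal.ofReal (2 / (1 - β)) + 1))
          * ENNReal.ofReal ((1 - z) ^ (β - 1)) := by
  set C := ∫⁻ s in Set.Ioc (0:ℝ) b, ENNReal.ofReal (w s) with hC_def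
  set D := ∫⁻ t in Set.Ioc (0:ℝ) b, ENNReal.ofReal |Real.log t| with hD_def
  have h1z : (0:ℝ) ≤ 1 - z := by linarith
  have hzz : z * z ^ (-β) = z ^ (1 - β) := by
    rw [show (1:ℝ) - β = 1 + (-β) by ring, Real.rpow_add hz0, Real.rpow_one]
  have eq1 : ∀ t : ℝ, ENNReal.ofReal
      ((w (t * z) * z + z * (|Real.log (t * z)| + 1)) * (1 - z) ^ (β - 1) * z ^ (-β))
      = (ENNReal.ofReal (w (t * z)) * ENNReal.ofReal z
          + ENNReal.ofReal (z * (|Real.log (t * z)| + 1)))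
        * ENNReal.ofReal ((1 - z) ^ (β - 1) * z ^ (-β)) := by
    intro t
    rw [mul_assoc, ENNReal.ofReal_mul (add_nonneg (mul_nonneg (hw_nonneg _) hz0.le)
      (by positivity))]
    congr 1
    rw [ENNReal.ofReal_add (mul_nonneg (hw_nonneg _) hz0.le) (by positivity),
      ENNReal.ofReal_mul (hw_nonneg _)]
  have hmeasA : Measurable (fun a : ℝ => ENNReal.ofReal (w (a * z)) * ENNReal.ofReal z) :=
    (ENNReal.measurable_ofReal.comp (hw_meas.comp (measurable_mul_const z))).mul_const _
  have hmeasL : Measurable (fun a : ℝ => ENNReal.ofReal |Real.log a|) :=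
    ENNReal.measurable_ofReal.comp Real.measurable_log.abs
  have hscale := lint_scale (g := fun s => ENNReal.ofReal (w s))
    (ENNReal.measurable_ofReal.comp hw_meas) hz0 b
  simp_rw [eq1]
  rw [lintegral_mul_const' _ _ ENNReal.ofReal_ne_top, lintegral_add_left hmeasA]
  have hA : (∫⁻ t in Set.Ioc (0:ℝ) b, ENNReal.ofReal (w (t * z)) * ENNReal.ofReal z) ≤ C := by
    rw [lintegral_mul_const' _ _ ENNReal.ofReal_ne_top, hscale]
    have hsub : Set.Ioc (0:ℝ) (b * z) ⊆ Set.Ioc (0:ℝ) b :=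
      Set.Ioc_subset_Ioc_right (by nlinarith)
    calc ENNReal.ofReal z⁻¹ * (∫⁻ s in Set.Ioc (0:ℝ) (b * z), ENNReal.ofReal (w s))
          * ENNReal.ofReal z
        ≤ ENNReal.ofReal z⁻¹ * C * ENNReal.ofReal z := by
          gcongr
          exact lintegral_mono_set hsub
      _ = (ENNReal.ofReal z⁻¹ * ENNReal.ofReal z) * C := by ring
      _ = C := by
          rw [← ENNReal.ofReal_mul (inv_nonneg.2 hz0.le), inv_mul_cancel₀ hz0.ne',
            ENNReal.ofReal_one, one_mul]
  have hB : (∫⁻ t in Set.Ioc (0:ℝ) b, ENNReal.ofReal (z * (|Real.log (t * z)| + 1)))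
      ≤ ENNReal.ofReal z * (D + (ENNReal.ofReal |Real.log z| + 1) * ENNReal.ofReal b) := by
    have step1 : (∫⁻ t in Set.Ioc (0:ℝ) b, ENNReal.ofReal (z * (|Real.log (t * z)| + 1)))
        ≤ ∫⁻ t in Set.Ioc (0:ℝ) b,
            ENNReal.ofReal (z * (|Real.log t| + (|Real.log z| + 1))) := by
      refine lintegral_mono_ae ?_
      filter_upwards [ae_restrict_mem measurableSet_Ioc] with t ht
      refine ENNReal.ofReal_le_ofReal (mul_le_mul_of_nonneg_left ?_ hz0.le)
      rw [Real.log_mul ht.1.ne' hz0.ne']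
      have := abs_add_le (Real.log t) (Real.log z)
      linarith
    refine le_trans step1 (le_of_eq ?_)
    have eq2 : ∀ t : ℝ, ENNReal.ofReal (z * (|Real.log t| + (|Real.log z| + 1)))
        = ENNReal.ofReal z * (ENNReal.ofReal |Real.log t|
            + (ENNReal.ofReal |Real.log z| + 1)) := by
      intro t
      rw [ENNReal.ofReal_mul hz0.le, ENNReal.ofReal_add (abs_nonneg _) (by positivity),
        ENNReal.ofReal_add (abs_nonneg _) zero_le_one, ENNReal.ofReal_one]
    simp_rw [eq2]
    rw [lintegral_const_mul' _ _ ENNReal.ofReal_ne_top,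
      lintegral_add_left hmeasL,
      setLIntegral_const, Real.volume_Ioc, sub_zero]
  set W := ENNReal.ofReal ((1 - z) ^ (β - 1) * z ^ (-β)) with hW_def
  set Qr := ENNReal.ofReal ((1 - z) ^ (β - 1)) with hQ_def
  set U := ENNReal.ofReal z * W with hU_def
  have h1 : U ≤ Qr := by
    rw [hU_def, hW_def, hQ_def, ← ENNReal.ofReal_mul hz0.le]
    apply ENNReal.ofReal_le_ofReal
    calc z * ((1 - z) ^ (β - 1) * z ^ (-β)) = (z * z ^ (-β)) * (1 - z) ^ (β - 1) := by ring
      _ = z ^ (1 - β) * (1 - z) ^ (β - 1) := by rw [hzz]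
      _ ≤ 1 * (1 - z) ^ (β - 1) :=
          mul_le_mul_of_nonneg_right (Real.rpow_le_one hz0.le hz1 (by linarith))
            (Real.rpow_nonneg h1z _)
      _ = (1 - z) ^ (β - 1) := one_mul _
  have h2 : ENNReal.ofReal |Real.log z| * U ≤ ENNReal.ofReal (2 / (1 - β)) * Qr := by
    rw [hU_def, hW_def, hQ_def, ← ENNReal.ofReal_mul hz0.le,
      ← ENNReal.ofReal_mul (abs_nonneg _),
      ← ENNReal.ofReal_mul (div_nonneg (by norm_num) (by linarith : (0:ℝ) ≤ 1 - β))]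
    apply ENNReal.ofReal_le_ofReal
    calc |Real.log z| * (z * ((1 - z) ^ (β - 1) * z ^ (-β)))
        = (z * z ^ (-β)) * |Real.log z| * (1 - z) ^ (β - 1) := by ring
      _ = z ^ (1 - β) * |Real.log z| * (1 - z) ^ (β - 1) := by rw [hzz]
      _ ≤ (2 / (1 - β)) * (1 - z) ^ (β - 1) :=
          mul_le_mul_of_nonneg_right (zpow_log_bound hβ1 hz0 hz1) (Real.rpow_nonneg h1z _)
  calc ((∫⁻ t in Set.Ioc (0:ℝ) b, ENNReal.ofReal (w (t * z)) * ENNReal.ofReal z)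
        + ∫⁻ t in Set.Ioc (0:ℝ) b, ENNReal.ofReal (z * (|Real.log (t * z)| + 1))) * W
      ≤ (C + ENNReal.ofReal z
          * (D + (ENNReal.ofReal |Real.log z| + 1) * ENNReal.ofReal b)) * W :=
        mul_le_mul_left (add_le_add hA hB) _
    _ = C * W + (D * U + ((ENNReal.ofReal |Real.log z| * U) * ENNReal.ofReal b
          + U * ENNReal.ofReal b)) := by rw [hU_def]; ring
    _ ≤ C * W + (D * Qr + ((ENNReal.ofReal (2 / (1 - β)) * Qr) * ENNReal.ofReal b
          + Qr * ENNReal.ofReal b)) := by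
        refine add_le_add_right (add_le_add (mul_le_mul_right h1 D)
          (add_le_add (mul_le_mul_left h2 _) (mul_le_mul_left h1 _))) _
    _ = C * W + (D + ENNReal.ofReal b * (ENNReal.ofReal (2 / (1 - β)) + 1)) * Qr := by ring

end Aux


/-- the function
`ḡ(t) = ∫₀¹ [w̄(tz) z + z(|ln(tz)|+1)] (1-z)^{β-1} z^{-β} dz` belongs to `L¹(0,b)`,
i.e. the (nonnegative) double integral `∫₀ᵇ ∫₀¹ ⋯ dz dt` is finite. -/
theorem gbar_integrable
    (b β : ℝ) (hb : 0 < b) (hβ0 : 0 < β) (hβ1 : β < 1)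
    (wbar : ℝ → ℝ) (hwbar_nonneg : ∀ x, 0 ≤ wbar x)
    (hwbar_int : IntegrableOn wbar (Set.Ioc 0 b)) :
    (∫⁻ t in Set.Ioc (0:ℝ) b, ∫⁻ z in Set.Ioc (0:ℝ) 1,
        ENNReal.ofReal ((wbar (t * z) * z + z * (|Real.log (t * z)| + 1))
          * (1 - z) ^ (β - 1) * z ^ (-β)) < ⊤) ∧
    IntegrableOn (fun t => ∫ z in (0:ℝ)..1,
        (wbar (t * z) * z + z * (|Real.log (t * z)| + 1))
          * (1 - z) ^ (β - 1) * z ^ (-β)) (Set.Ioc 0 b) := by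
  obtain ⟨v, hv_meas, hv_eq⟩ := hwbar_int.1.aemeasurable
  set w : ℝ → ℝ := fun x => max (v x) 0 with hw_def
  have hw_meas : Measurable w := hv_meas.max measurable_const
  have hw_nonneg : ∀ x, 0 ≤ w x := fun x => le_max_right _ _
  have hw_eq : wbar =ᵐ[volume.restrict (Set.Ioc 0 b)] w := by
    filter_upwards [hv_eq] with x hx
    rw [hw_def]
    simp only
    rw [← hx, max_eq_left (hwbar_nonneg x)]
  have hw_int : IntegrableOn w (Set.Ioc 0 b) := hwbar_int.congr hw_eq
  have h0 : volume ({x | wbar x ≠ w x} ∩ Set.Ioc 0 b) = 0 := by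
    rw [← Measure.restrict_apply' measurableSet_Ioc]
    exact ae_iff.1 hw_eq
  obtain ⟨N, hNsub, hNmeas, hN0⟩ := exists_measurable_superset_of_null h0
  have key : ∀ᵐ t ∂(volume.restrict (Set.Ioc (0:ℝ) b)),
      ∀ᵐ z ∂(volume.restrict (Set.Ioc (0:ℝ) 1)), wbar (t * z) = w (t * z) := by
    have hS : MeasurableSet {p : ℝ × ℝ | p.1 * p.2 ∈ N} :=
      (measurable_fst.mul measurable_snd) hNmeas
    have hprod : ((volume.restrict (Set.Ioc (0:ℝ) b)).prod
        (volume.restrict (Set.Ioc (0:ℝ) 1))) {p : ℝ × ℝ | p.1 * p.2 ∈ N} = 0 := by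
      rw [Measure.prod_apply hS]
      have hz : ∀ᵐ t ∂(volume.restrict (Set.Ioc (0:ℝ) b)),
          (volume.restrict (Set.Ioc (0:ℝ) 1))
            (Prod.mk t ⁻¹' {p : ℝ × ℝ | p.1 * p.2 ∈ N}) = 0 := by
        filter_upwards [ae_restrict_mem measurableSet_Ioc] with t ht
        refine le_antisymm ?_ zero_le
        have hpre : Prod.mk t ⁻¹' {p : ℝ × ℝ | p.1 * p.2 ∈ N} = (fun z => t * z) ⁻¹' N := rfl
        rw [hpre]
        calc (volume.restrict (Set.Ioc (0:ℝ) 1)) ((fun z => t * z) ⁻¹' N)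
            ≤ volume ((fun z => t * z) ⁻¹' N) := Measure.restrict_apply_le _ _
          _ = ENNReal.ofReal |t⁻¹| * volume N := Real.volume_preimage_mul_left (ne_of_gt ht.1) N
          _ = 0 := by rw [hN0, mul_zero]
      rw [lintegral_congr_ae hz, lintegral_zero]
    have hae : ∀ᵐ p ∂((volume.restrict (Set.Ioc (0:ℝ) b)).prod
        (volume.restrict (Set.Ioc (0:ℝ) 1))), p.1 * p.2 ∉ N := by
      rw [ae_iff]
      simpa using hprod
    have hmem : ∀ᵐ p ∂((volume.restrict (Set.Ioc (0:ℝ) b)).prod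
        (volume.restrict (Set.Ioc (0:ℝ) 1))),
        p ∈ (Set.Ioc (0:ℝ) b) ×ˢ (Set.Ioc (0:ℝ) 1) := by
      rw [Measure.prod_restrict]
      exact ae_restrict_mem (measurableSet_Ioc.prod measurableSet_Ioc)
    have hcomb := Measure.ae_ae_of_ae_prod (hae.and hmem)
    filter_upwards [hcomb] with t ht
    filter_upwards [ht] with z hz
    obtain ⟨hn, hm⟩ := hz
    by_contra hne
    refine hn (hNsub ⟨hne, ?_, ?_⟩)
    · exact mul_pos hm.1.1 hm.2.1
    · calc t * z ≤ t * 1 := mul_le_mul_of_nonneg_left hm.2.2 hm.1.1.le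
        _ = t := mul_one t
        _ ≤ b := hm.1.2
  have hf'meas : Measurable (Function.uncurry fun t z : ℝ => ENNReal.ofReal
      ((w (t * z) * z + z * (|Real.log (t * z)| + 1)) * (1 - z) ^ (β - 1) * z ^ (-β))) := by
    apply ENNReal.measurable_ofReal.comp
    exact ((((hw_meas.comp (measurable_fst.mul measurable_snd)).mul measurable_snd).add
        (measurable_snd.mul (((Real.measurable_log.comp
          (measurable_fst.mul measurable_snd)).abs).add measurable_const))).mul
      ((measurable_const.sub measurable_snd).pow measurable_const)).mul
      (measurable_snd.pow measurable_const)
  have hC : (∫⁻ s in Set.Ioc (0:ℝ) b, ENNReal.ofReal (w s)) < ⊤ :=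
    lintegral_ofReal_lt_top_of_integrableOn hw_int
  have hD : (∫⁻ t in Set.Ioc (0:ℝ) b, ENNReal.ofReal |Real.log t|) < ⊤ := D_lt_top hb
  have hE : ((∫⁻ t in Set.Ioc (0:ℝ) b, ENNReal.ofReal |Real.log t|)
      + ENNReal.ofReal b * (ENNReal.ofReal (2 / (1 - β)) + 1)) < ⊤ :=
    ENNReal.add_lt_top.2 ⟨hD, ENNReal.mul_lt_top ENNReal.ofReal_lt_top
      (ENNReal.add_lt_top.2 ⟨ENNReal.ofReal_lt_top, ENNReal.one_lt_top⟩)⟩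
  have hI' : (∫⁻ t in Set.Ioc (0:ℝ) b, ∫⁻ z in Set.Ioc (0:ℝ) 1,
      ENNReal.ofReal ((w (t * z) * z + z * (|Real.log (t * z)| + 1))
        * (1 - z) ^ (β - 1) * z ^ (-β))) < ⊤ := by
    rw [lintegral_lintegral_swap hf'meas.aemeasurable]
    have hPmeas : Measurable (fun z : ℝ => ENNReal.ofReal ((1 - z) ^ (β - 1) * z ^ (-β))) :=
      ENNReal.measurable_ofReal.comp (((measurable_const.sub measurable_id').pow
        measurable_const).mul (measurable_id'.pow measurable_const))
    calc (∫⁻ z in Set.Ioc (0:ℝ) 1, ∫⁻ t in Set.Ioc (0:ℝ) b,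
          ENNReal.ofReal ((w (t * z) * z + z * (|Real.log (t * z)| + 1))
            * (1 - z) ^ (β - 1) * z ^ (-β)))
        ≤ ∫⁻ z in Set.Ioc (0:ℝ) 1,
            ((∫⁻ s in Set.Ioc (0:ℝ) b, ENNReal.ofReal (w s))
              * ENNReal.ofReal ((1 - z) ^ (β - 1) * z ^ (-β))
            + ((∫⁻ t in Set.Ioc (0:ℝ) b, ENNReal.ofReal |Real.log t|)
                + ENNReal.ofReal b * (ENNReal.ofReal (2 / (1 - β)) + 1))
              * ENNReal.ofReal ((1 - z) ^ (β - 1))) := by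
          refine lintegral_mono_ae ?_
          filter_upwards [ae_restrict_mem measurableSet_Ioc] with z hz
          exact inner_bound hb hβ0 hβ1 hw_meas hw_nonneg hz.1 hz.2
      _ = (∫⁻ s in Set.Ioc (0:ℝ) b, ENNReal.ofReal (w s))
            * (∫⁻ z in Set.Ioc (0:ℝ) 1, ENNReal.ofReal ((1 - z) ^ (β - 1) * z ^ (-β)))
          + ((∫⁻ t in Set.Ioc (0:ℝ) b, ENNReal.ofReal |Real.log t|)
              + ENNReal.ofReal b * (ENNReal.ofReal (2 / (1 - β)) + 1))
            * (∫⁻ z in Set.Ioc (0:ℝ) 1, ENNReal.ofReal ((1 - z) ^ (β - 1))) := by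
          rw [lintegral_add_left (hPmeas.const_mul _), lintegral_const_mul' _ _ hC.ne,
            lintegral_const_mul' _ _ hE.ne]
      _ < ⊤ := ENNReal.add_lt_top.2 ⟨ENNReal.mul_lt_top hC (K_lt_top hβ0 hβ1),
          ENNReal.mul_lt_top hE (L_lt_top hβ0)⟩
  have hI : (∫⁻ t in Set.Ioc (0:ℝ) b, ∫⁻ z in Set.Ioc (0:ℝ) 1,
      ENNReal.ofReal ((wbar (t * z) * z + z * (|Real.log (t * z)| + 1))
        * (1 - z) ^ (β - 1) * z ^ (-β)))
      = ∫⁻ t in Set.Ioc (0:ℝ) b, ∫⁻ z in Set.Ioc (0:ℝ) 1,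
      ENNReal.ofReal ((w (t * z) * z + z * (|Real.log (t * z)| + 1))
        * (1 - z) ^ (β - 1) * z ^ (-β)) := by
    refine lintegral_congr_ae ?_
    filter_upwards [key] with t ht
    refine lintegral_congr_ae ?_
    filter_upwards [ht] with z hz
    rw [hz]
  have hIfin : (∫⁻ t in Set.Ioc (0:ℝ) b, ∫⁻ z in Set.Ioc (0:ℝ) 1,
      ENNReal.ofReal ((wbar (t * z) * z + z * (|Real.log (t * z)| + 1))
        * (1 - z) ^ (β - 1) * z ^ (-β))) < ⊤ := by rw [hI]; exact hI'
  refine ⟨hIfin, ?_⟩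
  have hG'sm : StronglyMeasurable (fun t => ∫ z in Set.Ioc (0:ℝ) 1,
      ((w (t * z) * z + z * (|Real.log (t * z)| + 1)) * (1 - z) ^ (β - 1) * z ^ (-β))) := by
    apply StronglyMeasurable.integral_prod_right'
      (f := fun p : ℝ × ℝ => (w (p.1 * p.2) * p.2
        + p.2 * (|Real.log (p.1 * p.2)| + 1)) * (1 - p.2) ^ (β - 1) * p.2 ^ (-β))
    refine Measurable.stronglyMeasurable ?_
    exact ((((hw_meas.comp (measurable_fst.mul measurable_snd)).mul measurable_snd).add
        (measurable_snd.mul (((Real.measurable_log.comp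
          (measurable_fst.mul measurable_snd)).abs).add measurable_const))).mul
      ((measurable_const.sub measurable_snd).pow measurable_const)).mul
      (measurable_snd.pow measurable_const)
  have hGm : AEStronglyMeasurable (fun t => ∫ z in (0:ℝ)..1,
      (wbar (t * z) * z + z * (|Real.log (t * z)| + 1))
        * (1 - z) ^ (β - 1) * z ^ (-β)) (volume.restrict (Set.Ioc 0 b)) := by
    refine hG'sm.aestronglyMeasurable.congr ?_
    filter_upwards [key] with t ht
    rw [intervalIntegral.integral_of_le zero_le_one]
    refine (integral_congr_ae ?_)
    filter_upwards [ht] with z hz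
    rw [hz]
  refine ⟨hGm, ?_⟩
  rw [hasFiniteIntegral_def]
  refine lt_of_le_of_lt ?_ hIfin
  refine lintegral_mono_ae (ae_of_all _ fun t => ?_)
  calc (‖∫ z in (0:ℝ)..1, (wbar (t * z) * z + z * (|Real.log (t * z)| + 1))
        * (1 - z) ^ (β - 1) * z ^ (-β)‖₊ : ℝ≥0∞)
      = ‖∫ z in Set.Ioc (0:ℝ) 1, (wbar (t * z) * z + z * (|Real.log (t * z)| + 1))
        * (1 - z) ^ (β - 1) * z ^ (-β)‖₊ := by
        rw [intervalIntegral.integral_of_le zero_le_one]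
    _ ≤ ∫⁻ z in Set.Ioc (0:ℝ) 1, ‖(wbar (t * z) * z + z * (|Real.log (t * z)| + 1))
        * (1 - z) ^ (β - 1) * z ^ (-β)‖₊ := enorm_integral_le_lintegral_enorm _
    _ = ∫⁻ z in Set.Ioc (0:ℝ) 1, ENNReal.ofReal ((wbar (t * z) * z
        + z * (|Real.log (t * z)| + 1)) * (1 - z) ^ (β - 1) * z ^ (-β)) := by
        refine lintegral_congr_ae ?_
        filter_upwards [ae_restrict_mem measurableSet_Ioc] with z hz
        show ‖(_ : ℝ)‖ₑ = _
        rw [Real.enorm_eq_ofReal]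
        exact mul_nonneg (mul_nonneg (add_nonneg (mul_nonneg (hwbar_nonneg _) hz.1.le)
          (mul_nonneg hz.1.le (by positivity))) (Real.rpow_nonneg (by linarith [hz.2]) _))
          (Real.rpow_nonneg hz.1.le _)
end

section
/- Let b > 0, let w be a weight function satisfying conditions (i) and (ii), and let k ∈ L¹(0,b) satisfy the weighted Sonine condition WSC1 with weight w, associated kernel K ∈ L¹(0,b), and function g. Suppose f is bounded and measurable on [0,b], and u ∈ L¹(0,b) satisfies the transformed identity ∫₀ᵗ g(0,t−s) u(s) ds = ∫₀ᵗ w(0,s) k(s) f(t−s) ds for all t ∈ [0,b]. Then u solves the original first-kind Volterra integral equation: ∫₀ᵗ K(t−s) u(s) ds = f(t) for almost every t ∈ (0,b]. -/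
open MeasureTheory

/-- Weight condition (i): `w(t,t)` is bounded away from zero and bounded on `[0,b]`. -/
def WeightCondI (b : ℝ) (w : ℝ → ℝ → ℝ) : Prop :=
  ∃ μlo μhi : ℝ, 0 < μlo ∧ μlo ≤ μhi ∧
    ∀ t ∈ Set.Icc (0:ℝ) b, μlo ≤ |w t t| ∧ |w t t| ≤ μhi

/-- Weight condition (ii): `w` is differentiable in its second variable with
`|∂₂w(s,t)| ≤ w̄(t-s)` for some nonnegative `w̄ ∈ L¹(0,b)`. -/
def WeightCondII (b : ℝ) (w : ℝ → ℝ → ℝ) : Prop :=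
  ∃ w₂ : ℝ → ℝ → ℝ, ∃ wbar : ℝ → ℝ,
    (∀ x, 0 ≤ wbar x) ∧ IntegrableOn wbar (Set.Ioc 0 b) ∧
    ∀ s t : ℝ, 0 ≤ s → s ≤ t → t ≤ b →
      HasDerivWithinAt (fun y => w s y) (w₂ s t) (Set.Icc s b) t ∧ |w₂ s t| ≤ wbar (t - s)

/-- The weighted Sonine condition WSC1 for a kernel `k ∈ L¹(0,b)` with weight `w`, associated
kernel `K ∈ L¹(0,b)`, and function `g` (with partial derivative `g₂` in the second variable
dominated by `gbar ∈ L¹(0,b)`): `∫₀ᵗ w(s,z+s) K(t-z) k(z) dz = g(s,t)` for `0 ≤ s + t ≤ b`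
(`t > 0`), where `g` satisfies conditions (a) and (b). -/
def WSC1 (b : ℝ) (w : ℝ → ℝ → ℝ) (k K : ℝ → ℝ)
    (g g₂ : ℝ → ℝ → ℝ) (gbar : ℝ → ℝ) : Prop :=
  IntegrableOn k (Set.Ioc 0 b) ∧ IntegrableOn K (Set.Ioc 0 b) ∧
  (∀ s t : ℝ, 0 ≤ s → 0 < t → s + t ≤ b →
    (∫ z in (0:ℝ)..t, w s (z + s) * K (t - z) * k z) = g s t) ∧
  (∃ νlo νhi : ℝ, 0 < νlo ∧ νlo ≤ νhi ∧
    ∀ s ∈ Set.Icc (0:ℝ) b, νlo ≤ |g s 0| ∧ |g s 0| ≤ νhi) ∧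
  (∀ x, 0 ≤ gbar x) ∧ IntegrableOn gbar (Set.Ioc 0 b) ∧
  (∀ s t : ℝ, 0 ≤ s → 0 ≤ t → s + t ≤ b →
    HasDerivWithinAt (fun τ => g s τ) (g₂ s t) (Set.Icc 0 (b - s)) t ∧ |g₂ s t| ≤ gbar t)

-- ### Auxiliary material
open Set Filter
open scoped Convolution Topology

noncomputable section VIEAuxSection

abbrev Lmul : ℝ →L[ℝ] ℝ →L[ℝ] ℝ := ContinuousLinearMap.lsmul ℝ ℝ

namespace VIEAux



lemma conv_comm' (p q : ℝ → ℝ) (x : ℝ) :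
    (p ⋆[Lmul, volume] q) x = (q ⋆[Lmul, volume] p) x := by
  rw [convolution_eq_swap]
  simp only [ContinuousLinearMap.lsmul_apply, smul_eq_mul, convolution_def]
  exact integral_congr_ae (Filter.Eventually.of_forall fun t => mul_comm _ _)

lemma assoc3 (p q r : ℝ → ℝ) (hp : Integrable p (volume : Measure ℝ)) (hq : Integrable q volume)
    (hr : Integrable r volume) :
    ∀ᵐ x : ℝ, ((p ⋆[Lmul, volume] q) ⋆[Lmul, volume] r) x
      = (p ⋆[Lmul, volume] (q ⋆[Lmul, volume] r)) x := by
  have h1 : ∀ᵐ y : ℝ, ConvolutionExistsAt p q y Lmul volume := hp.ae_convolution_exists Lmul hq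
  have h2 : ∀ᵐ x : ℝ, ConvolutionExistsAt (fun x => ‖q x‖) (fun x => ‖r x‖) x
      (ContinuousLinearMap.mul ℝ ℝ) volume :=
    hq.norm.ae_convolution_exists _ hr.norm
  have h3 : Integrable ((fun x => ‖q x‖) ⋆[ContinuousLinearMap.mul ℝ ℝ, volume] fun x => ‖r x‖)
      volume := hq.norm.integrable_convolution _ hr.norm
  have h4 := hp.norm.ae_convolution_exists (ContinuousLinearMap.mul ℝ ℝ) h3
  filter_upwards [h4] with x₀ hx₀
  exact convolution_assoc Lmul Lmul Lmul Lmul (fun x y z => mul_assoc x y z)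
    hp.aestronglyMeasurable hq.aestronglyMeasurable hr.aestronglyMeasurable h1 h2 hx₀

lemma conv_vanish {b : ℝ} (p q : ℝ → ℝ) (x : ℝ) (hx : x ≤ 0) :
    (((Ioc (0:ℝ) b).indicator p) ⋆[Lmul, volume] ((Ioc (0:ℝ) b).indicator q)) x = 0 := by
  rw [convolution_def]
  rw [integral_eq_zero_of_ae]
  filter_upwards with t
  rcases le_or_gt t 0 with h | h
  · have : (Ioc (0:ℝ) b).indicator p t = 0 := by
      apply indicator_of_notMem; simp only [Set.mem_Ioc, not_and]; intro h'; linarith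
    simp [this]
  · have : (Ioc (0:ℝ) b).indicator q (x - t) = 0 := by
      apply indicator_of_notMem; simp only [Set.mem_Ioc, not_and]; intro h'; linarith
    simp [this]

lemma conv_eqI {b : ℝ} (p q : ℝ → ℝ) (t : ℝ) (ht : 0 < t) (htb : t ≤ b) :
    (((Ioc (0:ℝ) b).indicator p) ⋆[Lmul, volume] ((Ioc (0:ℝ) b).indicator q)) t
      = ∫ s in Ioo (0:ℝ) t, p s * q (t - s) := by
  rw [convolution_def, ← integral_indicator measurableSet_Ioo]
  congr 1
  ext s
  rcases lt_trichotomy s 0 with h | h | h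
  · have h1 : (Ioc (0:ℝ) b).indicator p s = 0 :=
      indicator_of_notMem (by simp only [Set.mem_Ioc, not_and]; intro; linarith) _
    have h2 : (Ioo (0:ℝ) t).indicator (fun s => p s * q (t - s)) s = 0 :=
      indicator_of_notMem (by simp only [Set.mem_Ioo, not_and]; intro; linarith) _
    simp [h1, h2]
  · subst h
    have h1 : (Ioc (0:ℝ) b).indicator p 0 = 0 := indicator_of_notMem (by simp) _
    have h2 : (Ioo (0:ℝ) t).indicator (fun s => p s * q (t - s)) 0 = 0 :=
      indicator_of_notMem (by simp) _
    simp [h1, h2]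
  · rcases lt_or_ge s t with h' | h'
    · have hs : s ∈ Ioo (0:ℝ) t := ⟨h, h'⟩
      have h1 : (Ioc (0:ℝ) b).indicator p s = p s :=
        indicator_of_mem (Set.mem_Ioc.2 ⟨h, h'.le.trans htb⟩) _
      have h2 : (Ioc (0:ℝ) b).indicator q (t - s) = q (t - s) :=
        indicator_of_mem (Set.mem_Ioc.2 ⟨by linarith, by linarith⟩) _
      rw [indicator_of_mem hs, h1, h2]; simp
    · have h1 : (Ioc (0:ℝ) b).indicator q (t - s) = 0 :=
        indicator_of_notMem (by simp only [Set.mem_Ioc, not_and]; intro; linarith) _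
      have h2 : (Ioo (0:ℝ) t).indicator (fun s => p s * q (t - s)) s = 0 :=
        indicator_of_notMem (by simp only [Set.mem_Ioo, not_and]; intro; linarith) _
      simp [h1, h2]

lemma conv_eqI' {b : ℝ} (p q : ℝ → ℝ) (hq0 : ∀ x ≤ (0:ℝ), q x = 0) (t : ℝ) (ht : 0 < t)
    (htb : t ≤ b) :
    (((Ioc (0:ℝ) b).indicator p) ⋆[Lmul, volume] q) t
      = ∫ s in Ioo (0:ℝ) t, p (t - s) * q s := by
  rw [convolution_eq_swap, ← integral_indicator measurableSet_Ioo]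
  congr 1
  ext s
  simp only [ContinuousLinearMap.lsmul_apply, smul_eq_mul]
  rcases le_or_gt s 0 with h | h
  · have h2 : (Ioo (0:ℝ) t).indicator (fun s => p (t - s) * q s) s = 0 :=
      indicator_of_notMem (by simp only [Set.mem_Ioo, not_and]; intro; linarith) _
    rw [h2, hq0 s h, mul_zero]
  · rcases lt_or_ge s t with h' | h'
    · have hs : s ∈ Ioo (0:ℝ) t := ⟨h, h'⟩
      have h1 : (Ioc (0:ℝ) b).indicator p (t - s) = p (t - s) :=
        indicator_of_mem (Set.mem_Ioc.2 ⟨by linarith, by linarith⟩) _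
      rw [indicator_of_mem hs, h1]
    · have h1 : (Ioc (0:ℝ) b).indicator p (t - s) = 0 :=
        indicator_of_notMem (by simp only [Set.mem_Ioc, not_and]; intro; linarith) _
      have h2 : (Ioo (0:ℝ) t).indicator (fun s => p (t - s) * q s) s = 0 :=
        indicator_of_notMem (by simp only [Set.mem_Ioo, not_and]; intro; linarith) _
      rw [h1, h2, zero_mul]

lemma ioo_to_interval (F : ℝ → ℝ) (t : ℝ) (ht : 0 ≤ t) :
    ∫ s in Ioo (0:ℝ) t, F s = ∫ s in (0:ℝ)..t, F s := by
  rw [intervalIntegral.integral_of_le ht, integral_Ioc_eq_integral_Ioo]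

lemma interval_flip (F : ℝ → ℝ) (t : ℝ) :
    (∫ s in (0:ℝ)..t, F (t - s)) = ∫ s in (0:ℝ)..t, F s := by
  have := intervalIntegral.integral_comp_sub_left (a := 0) (b := t) F t
  simpa using this

lemma primitive_abs_le (q : ℝ → ℝ) (hq : Integrable q (volume : Measure ℝ)) (x : ℝ) :
    |∫ s in (0:ℝ)..x, q s| ≤ ∫ s, |q s| := by
  rcases le_total 0 x with h | h
  · rw [intervalIntegral.integral_of_le h]
    refine le_trans (norm_integral_le_integral_norm q) ?_
    exact setIntegral_le_integral hq.norm (Filter.Eventually.of_forall fun s => abs_nonneg _)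
  · rw [intervalIntegral.integral_of_ge h, abs_neg]
    refine le_trans (norm_integral_le_integral_norm q) ?_
    exact setIntegral_le_integral hq.norm (Filter.Eventually.of_forall fun s => abs_nonneg _)



lemma expansion {b : ℝ} (D h : ℝ → ℝ) (hD : Measurable D)
    (hDi : IntegrableOn D (Ioc 0 b)) (hh : Integrable h (volume : Measure ℝ))
    (t : ℝ) (ht : 0 < t) (htb : t ≤ b) :
    ∫ s in Ioo (0:ℝ) t, (∫ r in Ioc (0:ℝ) (t - s), D r) * h s
      = ∫ r in Ioc (0:ℝ) b, D r * (∫ s in Ioc (0:ℝ) (t - r), h s) := by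
  set A : Set ℝ := Ioo 0 t with hA
  set B : Set ℝ := Ioc 0 b with hB
  set Φ : ℝ × ℝ → ℝ := fun p => (Ioc (0:ℝ) (t - p.1)).indicator D p.2 * h p.1 with hΦ
  have hS : MeasurableSet {p : ℝ × ℝ | 0 < p.2 ∧ p.2 ≤ t - p.1} :=
    (measurableSet_lt measurable_const measurable_snd).inter
      (measurableSet_le measurable_snd (measurable_const.sub measurable_fst))
  have hΦeq : Φ = fun p : ℝ × ℝ =>
      ({p : ℝ × ℝ | 0 < p.2 ∧ p.2 ≤ t - p.1}.indicator (fun p => D p.2) p) * h p.1 := by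
    funext p
    by_cases hp : p.2 ∈ Ioc (0:ℝ) (t - p.1)
    · rw [hΦ]; simp only
      rw [indicator_of_mem hp, indicator_of_mem (by exact hp)]
    · rw [hΦ]; simp only
      rw [indicator_of_notMem hp, indicator_of_notMem (by exact hp)]
  have hΦmeas : AEStronglyMeasurable Φ ((volume.restrict A).prod (volume.restrict B)) := by
    rw [hΦeq]
    exact (((hD.comp measurable_snd).aestronglyMeasurable).indicator hS).mul
      ((hh.aestronglyMeasurable.restrict).comp_fst)
  have hΦint : Integrable Φ ((volume.restrict A).prod (volume.restrict B)) := by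
    refine Integrable.mono' ((hh.restrict.abs).mul_prod hDi.abs) hΦmeas ?_
    filter_upwards with p
    rw [hΦ]
    simp only [Real.norm_eq_abs, abs_mul]
    have hind : |(Ioc (0:ℝ) (t - p.1)).indicator D p.2| ≤ |D p.2| := by
      by_cases hm : p.2 ∈ Ioc (0:ℝ) (t - p.1)
      · rw [indicator_of_mem hm]
      · rw [indicator_of_notMem hm]; simp
    calc |(Ioc (0:ℝ) (t - p.1)).indicator D p.2| * |h p.1|
        ≤ |D p.2| * |h p.1| := mul_le_mul_of_nonneg_right hind (abs_nonneg _)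
      _ = |h p.1| * |D p.2| := mul_comm _ _
  have swap := integral_integral_swap (f := fun s r => Φ (s, r)) hΦint
  have hL : (∫ s in A, (∫ r in B, Φ (s, r)))
      = ∫ s in A, (∫ r in Ioc (0:ℝ) (t - s), D r) * h s := by
    refine setIntegral_congr_fun measurableSet_Ioo (fun s hs => ?_)
    have : (∫ r in B, Φ (s, r)) = (∫ r in B, (Ioc (0:ℝ) (t - s)).indicator D r) * h s := by
      rw [← integral_mul_const]
    rw [this, setIntegral_indicator measurableSet_Ioc,
      inter_eq_self_of_subset_right (Ioc_subset_Ioc le_rfl (by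
        simp only [hA, Set.mem_Ioo] at hs; linarith [hs.1]))]
  have hR : (∫ r in B, (∫ s in A, Φ (s, r)))
      = ∫ r in B, D r * (∫ s in Ioc (0:ℝ) (t - r), h s) := by
    refine setIntegral_congr_fun measurableSet_Ioc (fun r hr => ?_)
    have hrB : 0 < r ∧ r ≤ b := hr
    have h1 : (∫ s in A, Φ (s, r)) = ∫ s in A, D r * ((Ioc (0:ℝ) (t - r)).indicator h s) := by
      refine setIntegral_congr_fun measurableSet_Ioo (fun s hs => ?_)
      have hsA : 0 < s ∧ s < t := hs
      by_cases hc : r ≤ t - s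
      · rw [hΦ]; simp only
        rw [indicator_of_mem (Set.mem_Ioc.2 ⟨hrB.1, hc⟩),
          indicator_of_mem (Set.mem_Ioc.2 ⟨hsA.1, by linarith⟩)]
      · push_neg at hc
        rw [hΦ]; simp only
        rw [indicator_of_notMem (by simp only [Set.mem_Ioc, not_and]; intro; linarith),
          indicator_of_notMem (by simp only [Set.mem_Ioc, not_and]; intro; linarith)]
        rw [zero_mul, mul_zero]
    rw [h1, integral_const_mul, setIntegral_indicator measurableSet_Ioc,
      inter_eq_self_of_subset_right (fun s hs => Set.mem_Ioo.2 ⟨(Set.mem_Ioc.1 hs).1, lt_of_le_of_lt (Set.mem_Ioc.1 hs).2 (by linarith [hrB.1])⟩)]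
  calc (∫ s in Ioo (0:ℝ) t, (∫ r in Ioc (0:ℝ) (t - s), D r) * h s)
      = ∫ s in A, (∫ r in B, Φ (s, r)) := hL.symm
    _ = ∫ r in B, (∫ s in A, Φ (s, r)) := swap
    _ = ∫ r in Ioc (0:ℝ) b, D r * (∫ s in Ioc (0:ℝ) (t - r), h s) := hR



lemma gronwall_zero {b ν : ℝ} (hb : 0 < b) (hν : 0 < ν) (c H : ℝ → ℝ)
    (hcn : ∀ x, 0 ≤ c x) (hci : IntegrableOn c (Ioc 0 b))
    (hHc : Continuous H) (hH0 : ∀ x ≤ (0:ℝ), H x = 0)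
    (hineq : ∀ t ∈ Icc (0:ℝ) b, ν * |H t| ≤ ∫ r in Ioc (0:ℝ) b, c r * |H (t - r)|) :
    ∀ t ∈ Icc (0:ℝ) b, H t = 0 := by
  -- bound for |H| on [-b, 2b] say; we need |H (t - r)| ≤ C for t ∈ [0,b], r ∈ (0,b]
  obtain ⟨C, hC⟩ := (isCompact_Icc (a := -b) (b := b)).exists_bound_of_continuousOn
    hHc.continuousOn
  -- choose δ
  have hcInd : Integrable ((Ioc (0:ℝ) b).indicator c) volume :=
    hci.integrable_indicator measurableSet_Ioc
  set P : ℝ → ℝ := fun x => ∫ s in (0:ℝ)..x, (Ioc (0:ℝ) b).indicator c s with hPdef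
  have hPcont : Continuous P := hcInd.continuous_primitive 0
  have hP0 : P 0 = 0 := by simp [hPdef]
  have htend : Tendsto P (𝓝 0) (𝓝 0) := by
    have := hPcont.tendsto 0; rwa [hP0] at this
  have hev : ∀ᶠ x in 𝓝 (0:ℝ), |P x| < ν / 2 := by
    have := htend (Metric.ball_mem_nhds (0:ℝ) (show (0:ℝ) < ν / 2 by positivity))
    filter_upwards [this] with x hx
    simpa [Real.dist_eq] using hx
  obtain ⟨δ₀, hδ₀pos, hδ₀⟩ := Metric.eventually_nhds_iff.mp hev
  set δ : ℝ := min (δ₀ / 2) b with hδdef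
  have hδpos : 0 < δ := lt_min (by positivity) hb
  have hδb : δ ≤ b := min_le_right _ _
  have hPδ : (∫ r in Ioc (0:ℝ) δ, c r) ≤ ν / 2 := by
    have h1 : (∫ r in Ioc (0:ℝ) δ, c r) = P δ := by
      show _ = ∫ s in (0:ℝ)..δ, (Ioc (0:ℝ) b).indicator c s
      rw [intervalIntegral.integral_of_le hδpos.le]
      refine (setIntegral_congr_fun measurableSet_Ioc (fun x hx => ?_)).symm
      exact indicator_of_mem (Set.mem_Ioc.2 ⟨(Set.mem_Ioc.1 hx).1,
        le_trans (Set.mem_Ioc.1 hx).2 hδb⟩) c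
    rw [h1]
    have : |P δ| < ν / 2 := by
      apply hδ₀
      rw [Real.dist_eq, sub_zero]
      have : |δ| = δ := abs_of_pos hδpos
      rw [this]
      calc δ ≤ δ₀ / 2 := min_le_left _ _
        _ < δ₀ := by linarith
    exact le_of_lt (lt_of_le_of_lt (le_abs_self _) this)
  -- main induction
  have main : ∀ n : ℕ, ∀ t, 0 ≤ t → t ≤ n * δ → t ≤ b → H t = 0 := by
    intro n
    induction n with
    | zero =>
      intro t ht0 htn _
      exact hH0 t (by simpa using htn)
    | succ n ih =>
      intro t ht0 htn htb
      rcases le_or_gt t (n * δ) with hle | hlt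
      · exact ih t ht0 hle htb
      have hTb : (n : ℝ) * δ < b := lt_of_lt_of_le hlt htb
      set T : ℝ := (n : ℝ) * δ with hT
      have hT0 : 0 ≤ T := by positivity
      set T' : ℝ := min (T + δ) b with hT'
      have hband : t ∈ Icc T T' := by
        refine ⟨hlt.le, le_min ?_ htb⟩
        push_cast at htn ⊢
        linarith
      have hzero : ∀ x, x ≤ T → H x = 0 := by
        intro x hx
        rcases le_or_gt x 0 with h0 | h0
        · exact hH0 x h0
        · exact ih x h0.le hx (le_trans hx hTb.le)
      have hne : (Icc T T').Nonempty := ⟨t, hband⟩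
      obtain ⟨x₀, hx₀mem, hx₀max⟩ := isCompact_Icc.exists_isMaxOn hne
        (continuous_abs.comp hHc).continuousOn
      set M := |H x₀| with hM
      have hM0 : 0 ≤ M := abs_nonneg _
      have hhalf : ∀ τ ∈ Icc T T', |H τ| ≤ M / 2 := by
        intro τ hτ
        have hτ' : T ≤ τ ∧ τ ≤ T' := hτ
        have hτIcc : τ ∈ Icc 0 b := ⟨le_trans hT0 hτ'.1, le_trans hτ'.2 (min_le_right _ _)⟩
        have hτδ : τ ≤ T + δ := le_trans hτ'.2 (min_le_left _ _)
        have h1 := hineq τ hτIcc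
        -- integrability of LHS integrand
        have hlhsint : IntegrableOn (fun r => c r * |H (τ - r)|) (Ioc (0:ℝ) b) := by
          refine Integrable.mono' (hci.mul_const C) ?_ ?_
          · exact (hci.aestronglyMeasurable).mul
              (((continuous_abs.comp (hHc.comp (continuous_const.sub continuous_id))).measurable).aestronglyMeasurable)
          · filter_upwards [ae_restrict_mem measurableSet_Ioc] with r hr
            have hτ2 := Set.mem_Icc.1 hτIcc
            have hr2 := Set.mem_Ioc.1 hr
            have h2 : τ - r ∈ Icc (-b) b := Set.mem_Icc.2
              ⟨by linarith [hτ2.1, hτ2.2, hr2.1, hr2.2], by linarith [hτ2.1, hτ2.2, hr2.1, hr2.2]⟩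
            have := hC _ h2
            rw [Real.norm_eq_abs, abs_mul, abs_abs, abs_of_nonneg (hcn r)]
            exact mul_le_mul_of_nonneg_left (by simpa using this) (hcn r)
        have hrhsint : IntegrableOn
            (fun r => c r * ((Ioc (0:ℝ) δ).indicator (fun _ => M) r)) (Ioc (0:ℝ) b) := by
          have : (fun r => c r * ((Ioc (0:ℝ) δ).indicator (fun _ => M) r))
              = (Ioc (0:ℝ) δ).indicator (fun r => c r * M) := by
            funext r
            by_cases hm : r ∈ Ioc (0:ℝ) δ
            · rw [indicator_of_mem hm, indicator_of_mem hm]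
            · rw [indicator_of_notMem hm, indicator_of_notMem hm, mul_zero]
          rw [this]
          exact (hci.mul_const M).indicator measurableSet_Ioc
        have h2 : (∫ r in Ioc (0:ℝ) b, c r * |H (τ - r)|)
            ≤ ∫ r in Ioc (0:ℝ) b, c r * ((Ioc (0:ℝ) δ).indicator (fun _ => M) r) := by
          refine setIntegral_mono_on hlhsint hrhsint measurableSet_Ioc (fun r hr => ?_)
          have hr' : 0 < r ∧ r ≤ b := hr
          rcases le_or_gt (τ - r) T with hcase | hcase
          · rw [hzero _ hcase, abs_zero, mul_zero]
            refine mul_nonneg (hcn r) (indicator_nonneg (fun _ _ => hM0) r)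
          · have hrδ : r ∈ Ioc (0:ℝ) δ := ⟨hr'.1, by linarith⟩
            rw [indicator_of_mem hrδ]
            refine mul_le_mul_of_nonneg_left ?_ (hcn r)
            have hmem : τ - r ∈ Icc T T' := ⟨hcase.le, by
              have : τ - r < τ := by linarith [hr'.1]
              exact le_trans this.le hτ'.2⟩
            exact hx₀max hmem
        have h3 : (∫ r in Ioc (0:ℝ) b, c r * ((Ioc (0:ℝ) δ).indicator (fun _ => M) r))
            = M * ∫ r in Ioc (0:ℝ) δ, c r := by
          have heq2 : (fun r => c r * ((Ioc (0:ℝ) δ).indicator (fun _ => M) r))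
              = (Ioc (0:ℝ) δ).indicator (fun r => M * c r) := by
            funext r
            by_cases hm : r ∈ Ioc (0:ℝ) δ
            · rw [indicator_of_mem hm, indicator_of_mem hm, mul_comm]
            · rw [indicator_of_notMem hm, indicator_of_notMem hm, mul_zero]
          rw [heq2, setIntegral_indicator measurableSet_Ioc,
            inter_eq_self_of_subset_right (Ioc_subset_Ioc le_rfl hδb), integral_const_mul]
        have h4 : ν * |H τ| ≤ M * (ν / 2) := by
          refine le_trans h1 (le_trans h2 ?_)
          rw [h3]
          exact mul_le_mul_of_nonneg_left hPδ hM0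
        nlinarith [abs_nonneg (H τ)]
      have hM2 : M ≤ M / 2 := by
        have := hhalf x₀ hx₀mem
        simpa [hM] using this
      have hMz : M ≤ 0 := by linarith
      have : |H t| ≤ 0 := le_trans (hx₀max hband) hMz
      exact abs_eq_zero.mp (le_antisymm this (abs_nonneg _))
  intro t ht
  obtain ⟨n, hn⟩ := exists_nat_ge (b / δ)
  refine main n t ht.1 ?_ ht.2
  have : b ≤ n * δ := by
    rw [div_le_iff₀ hδpos] at hn
    exact hn
  linarith [ht.2]



lemma ae_zero_of_primitive_zero {b : ℝ} (hb : 0 < b) (h : ℝ → ℝ)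
    (hint : Integrable h (volume : Measure ℝ))
    (hzero : ∀ t ∈ Icc (0:ℝ) b, (∫ s in (0:ℝ)..t, h s) = 0) :
    ∀ᵐ t ∂(volume.restrict (Ioc (0:ℝ) b)), h t = 0 := by
  have hloc : LocallyIntegrable h volume := hint.locallyIntegrable
  have hld := IsUnifLocDoublingMeasure.ae_tendsto_average (μ := (volume : Measure ℝ)) hloc 1
  have key : ∀ᵐ x ∂(volume : Measure ℝ), x ∈ Ioo (0:ℝ) b → h x = 0 := by
    filter_upwards [hld] with x hx hxm
    obtain ⟨hx0, hxb⟩ := hxm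
    set ε : ℝ := min x (b - x) / 2 with hε
    have hεpos : 0 < ε := by
      apply div_pos _ two_pos
      exact lt_min hx0 (by linarith)
    set δ : ℕ → ℝ := fun j => ε / (j + 1) with hδ
    have hδpos : ∀ j : ℕ, 0 < δ j := fun j => div_pos hεpos (by positivity)
    have hδtend : Tendsto δ atTop (𝓝[>] 0) := by
      rw [tendsto_nhdsWithin_iff]
      constructor
      · have h1 : Tendsto (fun j : ℕ => 1 / ((j : ℝ) + 1)) atTop (𝓝 0) :=
          tendsto_one_div_add_atTop_nhds_zero_nat
        have h2 := h1.const_mul ε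
        have h3 : (fun j : ℕ => ε * (1 / ((j:ℝ) + 1))) = δ := by
          funext j; rw [hδ]; ring
        rw [mul_zero] at h2
        rwa [h3] at h2
      · exact Eventually.of_forall fun j => hδpos j
    have hev : ∀ᶠ j in (atTop : Filter ℕ), x ∈ Metric.closedBall x (1 * δ j) :=
      Eventually.of_forall fun j => by
        simp only [one_mul]
        exact Metric.mem_closedBall_self (hδpos j).le
    have htends := hx (fun _ => x) δ hδtend hev
    -- each average is zero
    have havg : ∀ j : ℕ, (⨍ y in Metric.closedBall x (δ j), h y ∂volume) = 0 := by
      intro j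
      have hball : Metric.closedBall x (δ j) = Icc (x - δ j) (x + δ j) :=
        Real.closedBall_eq_Icc
      have hδε : δ j ≤ ε := by
        rw [hδ]
        apply div_le_self hεpos.le
        push_cast; linarith
      have hεx : ε < x := by
        rw [hε]
        have : min x (b - x) ≤ x := min_le_left _ _
        linarith [hεpos]
      have hεbx : ε < b - x := by
        rw [hε]
        have : min x (b - x) ≤ b - x := min_le_right _ _
        linarith [hεpos]
      have hint0 : (∫ y in Icc (x - δ j) (x + δ j), h y) = 0 := by
        rw [integral_Icc_eq_integral_Ioc]
        have h1 : (∫ s in (0:ℝ)..(x + δ j), h s) = 0 :=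
          hzero _ ⟨by nlinarith [hδpos j], by nlinarith [hδε]⟩
        have h2 : (∫ s in (0:ℝ)..(x - δ j), h s) = 0 :=
          hzero _ ⟨by nlinarith [hδε], by nlinarith [hδpos j]⟩
        have h3 : (∫ s in (x - δ j)..(x + δ j), h s) = 0 := by
          rw [← intervalIntegral.integral_interval_sub_left
            (hint.intervalIntegrable) (hint.intervalIntegrable), h1, h2, sub_zero]
        rw [← intervalIntegral.integral_of_le (by linarith [hδpos j])]
        exact h3
      rw [hball, setAverage_eq, hint0, smul_zero]
    have hzero_tend : Tendsto (fun j : ℕ => (⨍ y in Metric.closedBall x (δ j), h y ∂volume))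
        atTop (𝓝 0) := by
      simp only [havg]
      exact tendsto_const_nhds
    exact (tendsto_nhds_unique htends hzero_tend).symm ▸ rfl
  -- transfer to restrict (Ioc 0 b)
  have hae1 : ∀ᵐ t ∂(volume.restrict (Ioc (0:ℝ) b)), t ∈ Ioc (0:ℝ) b :=
    ae_restrict_mem measurableSet_Ioc
  have hae2 : ∀ᵐ t ∂(volume.restrict (Ioc (0:ℝ) b)), t ≠ b := by
    rw [ae_iff]
    have : {t : ℝ | ¬ t ≠ b} = {b} := by ext y; simp
    rw [this]
    rw [Measure.restrict_apply (measurableSet_singleton b)]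
    exact measure_mono_null (inter_subset_left) (by simp)
  filter_upwards [ae_restrict_of_ae key, hae1, hae2] with t h1 h2 h3
  exact h1 ⟨h2.1, lt_of_le_of_ne h2.2 h3⟩


lemma flip_mul (p q : ℝ → ℝ) (t : ℝ) :
    (∫ s in (0:ℝ)..t, p (t - s) * q s) = ∫ s in (0:ℝ)..t, p s * q (t - s) := by
  have h1 : (∫ s in (0:ℝ)..t, (fun z => p z * q (t - z)) (t - s))
      = ∫ s in (0:ℝ)..t, p s * q (t - s) := by
    have := intervalIntegral.integral_comp_sub_left (a := 0) (b := t)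
      (fun z => p z * q (t - z)) t
    simpa using this
  calc (∫ s in (0:ℝ)..t, p (t - s) * q s)
      = ∫ s in (0:ℝ)..t, (fun z => p z * q (t - z)) (t - s) :=
        intervalIntegral.integral_congr (fun s _ => by simp only []; rw [sub_sub_cancel])
    _ = ∫ s in (0:ℝ)..t, p s * q (t - s) := h1


end VIEAux

end VIEAuxSection

open VIEAux

/-- Theorem 2.4: if `f` is bounded and measurable and `u ∈ L¹(0,b)` satisfies the
transformed identity `∫₀ᵗ g(0,t-s)u(s)ds = ∫₀ᵗ w(0,s)k(s)f(t-s)ds` on `[0,b]`, then `u` solves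
the original first-kind VIE `∫₀ᵗ K(t-s)u(s)ds = f(t)` for a.e. `t ∈ (0,b]`. -/
theorem transformed_solves_firstKindVIE
    (b : ℝ) (hb : 0 < b)
    (w : ℝ → ℝ → ℝ) (hwI : WeightCondI b w) (hwII : WeightCondII b w)
    (k K : ℝ → ℝ) (g g₂ : ℝ → ℝ → ℝ) (gbar : ℝ → ℝ)
    (hWSC : WSC1 b w k K g g₂ gbar)
    (f : ℝ → ℝ) (hf : Measurable f) (hfb : ∃ M : ℝ, ∀ t ∈ Set.Icc (0:ℝ) b, |f t| ≤ M)
    (u : ℝ → ℝ) (hu : IntegrableOn u (Set.Ioc 0 b))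
    (heq : ∀ t ∈ Set.Icc (0:ℝ) b,
      (∫ s in (0:ℝ)..t, g 0 (t - s) * u s)
        = ∫ s in (0:ℝ)..t, w 0 s * k s * f (t - s)) :
    ∀ᵐ t ∂(volume.restrict (Set.Ioc (0:ℝ) b)),
      (∫ s in (0:ℝ)..t, K (t - s) * u s) = f t := by
  obtain ⟨hkI, hKI, hSon, ⟨νlo, νhi, hνlo, hνhi, hν⟩, hgbar_nn, hgbar_int, hgd⟩ := hWSC
  obtain ⟨w₂, wbar, hwbar_nn, hwbar_int, hwd⟩ := hwII
  obtain ⟨M, hM⟩ := hfb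
  -- continuity of g 0 and w 0 on [0,b]
  have hg0cont : ContinuousOn (fun τ => g 0 τ) (Icc 0 b) := by
    intro τ hτ
    have h1 := (hgd 0 τ le_rfl hτ.1 (by simpa using hτ.2)).1.continuousWithinAt
    rwa [sub_zero] at h1
  have hw0cont : ContinuousOn (w 0) (Icc 0 b) := fun τ hτ =>
    (hwd 0 τ le_rfl hτ.1 hτ.2).1.continuousWithinAt
  -- clamp
  set cl : ℝ → ℝ := fun x => max 0 (min x b) with hcl_def
  have hcl_cont : Continuous cl := continuous_const.max (continuous_id.min continuous_const)
  have hcl_mem : ∀ x, cl x ∈ Icc (0:ℝ) b := fun x =>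
    ⟨le_max_left _ _, max_le hb.le (min_le_right _ _)⟩
  have hcl_id : ∀ x ∈ Icc (0:ℝ) b, cl x = x := by
    intro x hx
    rw [hcl_def]
    simp only []
    rw [min_eq_left hx.2, max_eq_right hx.1]
  set g0c : ℝ → ℝ := fun x => g 0 (cl x) with hg0c_def
  have hg0c_cont : Continuous g0c := hg0cont.comp_continuous hcl_cont hcl_mem
  have hg0c_eq : ∀ x ∈ Icc (0:ℝ) b, g0c x = g 0 x := by
    intro x hx
    rw [hg0c_def]
    simp only []
    rw [hcl_id x hx]
  -- integrable pieces
  have hfI : IntegrableOn f (Ioc 0 b) volume := by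
    refine Integrable.mono'
      (show Integrable (fun _ => M) (volume.restrict (Ioc (0:ℝ) b)) from
        integrableOn_const measure_Ioc_lt_top.ne)
      hf.aestronglyMeasurable.restrict ?_
    filter_upwards [ae_restrict_mem measurableSet_Ioc] with x hx
    simpa using hM x ⟨hx.1.le, hx.2⟩
  have haI : IntegrableOn (fun z => w 0 z * k z) (Ioc 0 b) := by
    obtain ⟨Cw, hCw⟩ := isCompact_Icc.exists_bound_of_continuousOn hw0cont
    refine Integrable.mono' (hkI.norm.const_mul Cw) ?_ ?_
    · exact ((hw0cont.aestronglyMeasurable measurableSet_Icc).mono_measure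
        (Measure.restrict_mono Ioc_subset_Icc_self le_rfl)).mul hkI.aestronglyMeasurable
    · filter_upwards [ae_restrict_mem measurableSet_Ioc] with x hx
      rw [norm_mul]
      exact mul_le_mul_of_nonneg_right (hCw x ⟨hx.1.le, hx.2⟩) (norm_nonneg _)
  have hg0cI : IntegrableOn g0c (Ioc 0 b) :=
    (hg0c_cont.continuousOn.integrableOn_Icc).mono_set Ioc_subset_Icc_self
  -- indicator versions
  set Kt : ℝ → ℝ := (Ioc (0:ℝ) b).indicator K with hKt_def
  set ut : ℝ → ℝ := (Ioc (0:ℝ) b).indicator u with hut_def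
  set aF : ℝ → ℝ := (Ioc (0:ℝ) b).indicator (fun z => w 0 z * k z) with haF_def
  set ft : ℝ → ℝ := (Ioc (0:ℝ) b).indicator f with hft_def
  set g0t : ℝ → ℝ := (Ioc (0:ℝ) b).indicator g0c with hg0t_def
  have hKt : Integrable Kt volume := hKI.integrable_indicator measurableSet_Ioc
  have hut : Integrable ut volume := hu.integrable_indicator measurableSet_Ioc
  have haF : Integrable aF volume := haI.integrable_indicator measurableSet_Ioc
  have hft : Integrable ft volume := hfI.integrable_indicator measurableSet_Ioc
  have hg0t : Integrable g0t volume := hg0cI.integrable_indicator measurableSet_Ioc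
  -- transformed identity, convolution form
  have heq' : ∀ t, 0 < t → t ≤ b →
      (g0t ⋆[Lmul, volume] ut) t = (aF ⋆[Lmul, volume] ft) t := by
    intro t ht htb
    rw [hg0t_def, hut_def, conv_eqI g0c u t ht htb, haF_def, hft_def,
      conv_eqI (fun z => w 0 z * k z) f t ht htb,
      ioo_to_interval _ t ht.le, ioo_to_interval _ t ht.le]
    have hL : (∫ s in (0:ℝ)..t, g0c s * u (t - s)) = ∫ s in (0:ℝ)..t, g 0 (t - s) * u s := by
      rw [← flip_mul g0c u t]
      refine intervalIntegral.integral_congr (fun s hs => ?_)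
      rw [Set.uIcc_of_le ht.le] at hs
      rw [hg0c_eq (t - s) ⟨by linarith [hs.2], by linarith [hs.1]⟩]
    have hR : (∫ s in (0:ℝ)..t, (fun z => w 0 z * k z) s * f (t - s))
        = ∫ s in (0:ℝ)..t, w 0 s * k s * f (t - s) := by
      refine intervalIntegral.integral_congr (fun s _ => ?_)
      simp only []
    rw [hL, hR]
    exact heq t ⟨ht.le, htb⟩
  -- Sonine identity, convolution form
  have hSon' : ∀ τ, 0 < τ → τ ≤ b → (Kt ⋆[Lmul, volume] aF) τ = g 0 τ := by
    intro τ hτ hτb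
    rw [hKt_def, haF_def, conv_eqI K (fun z => w 0 z * k z) τ hτ hτb,
      ioo_to_interval _ τ hτ.le, ← flip_mul K (fun z => w 0 z * k z) τ]
    have : (∫ z in (0:ℝ)..τ, K (τ - z) * (fun z => w 0 z * k z) z)
        = ∫ z in (0:ℝ)..τ, w 0 (z + 0) * K (τ - z) * k z := by
      refine intervalIntegral.integral_congr (fun z _ => ?_)
      simp only [add_zero]
      ring
    rw [this]
    exact hSon 0 τ le_rfl hτ (by simpa using hτb)
  -- pointwise steps
  have step3 : ∀ t, 0 < t → t ≤ b →
      (Kt ⋆[Lmul, volume] (g0t ⋆[Lmul, volume] ut)) t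
        = (Kt ⋆[Lmul, volume] (aF ⋆[Lmul, volume] ft)) t := by
    intro t ht htb
    rw [convolution_def, convolution_def]
    refine integral_congr_ae (Eventually.of_forall fun s => ?_)
    dsimp only
    by_cases hs : s ∈ Ioc (0:ℝ) b
    · rcases le_or_gt (t - s) 0 with hts | hts
      · rw [hg0t_def, hut_def, haF_def, hft_def, conv_vanish g0c u (t - s) hts, conv_vanish (fun z => w 0 z * k z) f (t - s) hts]
      · have h1 : t - s ≤ b := by linarith [hs.1]
        rw [heq' (t - s) hts h1]
    · have : Kt s = 0 := by rw [hKt_def]; exact indicator_of_notMem hs K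
      rw [this]
      simp
  have step5 : ∀ t, 0 < t → t ≤ b →
      ((Kt ⋆[Lmul, volume] aF) ⋆[Lmul, volume] ft) t = (g0t ⋆[Lmul, volume] ft) t := by
    intro t ht htb
    rw [convolution_def, convolution_def]
    refine integral_congr_ae (Eventually.of_forall fun s => ?_)
    dsimp only
    rcases le_or_gt s 0 with hs | hs
    · have h1 : (Kt ⋆[Lmul, volume] aF) s = 0 := by
        rw [hKt_def, haF_def]; exact conv_vanish _ _ s hs
      have h2 : g0t s = 0 := by
        rw [hg0t_def]
        exact indicator_of_notMem (by simp only [Set.mem_Ioc, not_and]; intro; linarith) g0c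
      rw [h1, h2]
    · rcases lt_or_ge s t with h' | h'
      · have hsI : s ∈ Ioc (0:ℝ) b := ⟨hs, by linarith⟩
        have h1 : (Kt ⋆[Lmul, volume] aF) s = g 0 s := hSon' s hs (by linarith)
        have h2 : g0t s = g 0 s := by
          rw [hg0t_def, indicator_of_mem hsI g0c]
          exact hg0c_eq s ⟨hs.le, by linarith⟩
        rw [h1, h2]
      · have h3 : ft (t - s) = 0 := by
          rw [hft_def]
          exact indicator_of_notMem (by simp only [Set.mem_Ioc, not_and]; intro; linarith) f
        rw [h3]
        simp
  have step6 : ∀ x : ℝ, ((g0t ⋆[Lmul, volume] Kt) ⋆[Lmul, volume] ut) x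
      = ((Kt ⋆[Lmul, volume] g0t) ⋆[Lmul, volume] ut) x := by
    intro x
    rw [convolution_def, convolution_def]
    refine integral_congr_ae (Eventually.of_forall fun s => ?_)
    dsimp only
    rw [conv_comm' g0t Kt s]
  -- associativity (a.e.)
  have A_a := assoc3 Kt g0t ut hKt hg0t hut
  have A_b := assoc3 Kt aF ft hKt haF hft
  have A_c := assoc3 g0t Kt ut hg0t hKt hut
  set Ft : ℝ → ℝ := Kt ⋆[Lmul, volume] ut with hFt_def
  have hFt : Integrable Ft volume := hKt.integrable_convolution Lmul hut
  have key1 : ∀ᵐ t ∂(volume.restrict (Ioc (0:ℝ) b)),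
      (g0t ⋆[Lmul, volume] Ft) t = (g0t ⋆[Lmul, volume] ft) t := by
    filter_upwards [ae_restrict_mem measurableSet_Ioc, ae_restrict_of_ae A_a,
      ae_restrict_of_ae A_b, ae_restrict_of_ae A_c] with t htI ha hbb hc
    calc (g0t ⋆[Lmul, volume] Ft) t
        = ((g0t ⋆[Lmul, volume] Kt) ⋆[Lmul, volume] ut) t := hc.symm
      _ = ((Kt ⋆[Lmul, volume] g0t) ⋆[Lmul, volume] ut) t := step6 t
      _ = (Kt ⋆[Lmul, volume] (g0t ⋆[Lmul, volume] ut)) t := ha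
      _ = (Kt ⋆[Lmul, volume] (aF ⋆[Lmul, volume] ft)) t := step3 t htI.1 htI.2
      _ = ((Kt ⋆[Lmul, volume] aF) ⋆[Lmul, volume] ft) t := hbb.symm
      _ = (g0t ⋆[Lmul, volume] ft) t := step5 t htI.1 htI.2
  -- difference
  set hd : ℝ → ℝ := fun x => Ft x - ft x with hhd_def
  have hd_int : Integrable hd volume := hFt.sub hft
  have hd_neg : ∀ x ≤ (0:ℝ), hd x = 0 := by
    intro x hx
    rw [hhd_def]
    simp only []
    have h1 : Ft x = 0 := by rw [hFt_def, hKt_def, hut_def]; exact conv_vanish _ _ x hx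
    have h2 : ft x = 0 := by
      rw [hft_def]
      exact indicator_of_notMem (by simp only [Set.mem_Ioc, not_and]; intro; linarith) f
    rw [h1, h2, sub_zero]
  have key2 : ∀ᵐ t ∂(volume.restrict (Ioc (0:ℝ) b)), (g0t ⋆[Lmul, volume] hd) t = 0 := by
    have hex1 := hg0t.ae_convolution_exists Lmul hFt
    have hex2 := hg0t.ae_convolution_exists Lmul hft
    filter_upwards [key1, ae_restrict_of_ae hex1, ae_restrict_of_ae hex2] with t h1 h2 h3
    have hI1 : Integrable (fun s => g0t s * Ft (t - s)) volume := h2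
    have hI2 : Integrable (fun s => g0t s * ft (t - s)) volume := h3
    have e1 : (g0t ⋆[Lmul, volume] hd) t
        = ∫ s, (g0t s * Ft (t - s) - g0t s * ft (t - s)) := by
      rw [convolution_def]
      refine integral_congr_ae (Eventually.of_forall fun s => ?_)
      dsimp only
      rw [hhd_def]
      simp only [ContinuousLinearMap.lsmul_apply, smul_eq_mul]
      ring
    rw [e1, integral_sub hI1 hI2]
    have e2 : (∫ s, g0t s * Ft (t - s)) = (g0t ⋆[Lmul, volume] Ft) t := by
      rw [convolution_def]
      simp only [ContinuousLinearMap.lsmul_apply, smul_eq_mul]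
    have e3 : (∫ s, g0t s * ft (t - s)) = (g0t ⋆[Lmul, volume] ft) t := by
      rw [convolution_def]
      simp only [ContinuousLinearMap.lsmul_apply, smul_eq_mul]
    rw [e2, e3, h1, sub_self]
  -- derivative of g0c
  set D : ℝ → ℝ := fun r => derivWithin g0c (Ici r) r with hD_def
  have hD_meas : Measurable D := measurable_derivWithin_Ici g0c
  have hg0Icc : ∀ x, 0 ≤ x → x ≤ b → HasDerivWithinAt g0c (g₂ 0 x) (Icc 0 b) x := by
    intro x hx0 hxb
    have h1 : HasDerivWithinAt (fun y => g 0 y) (g₂ 0 x) (Icc 0 b) x := by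
      have := (hgd 0 x le_rfl hx0 (by simpa using hxb)).1
      rwa [sub_zero] at this
    exact h1.congr (fun y hy => hg0c_eq y hy) (hg0c_eq x ⟨hx0, hxb⟩)
  have hD_eq : ∀ r ∈ Ico (0:ℝ) b, D r = g₂ 0 r := by
    intro r hr
    have h2 := hg0Icc r hr.1 hr.2.le
    have h3 : Icc (0:ℝ) b ∈ 𝓝[Ici r] r :=
      mem_nhdsWithin.2 ⟨Iio b, isOpen_Iio, hr.2, fun y hy => ⟨le_trans hr.1 hy.2, hy.1.le⟩⟩
    have h4 : HasDerivWithinAt g0c (g₂ 0 r) (Ici r) r := h2.mono_of_mem_nhdsWithin h3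
    exact h4.derivWithin (uniqueDiffOn_Ici r r (Set.mem_Ici.2 le_rfl))
  have hDI : IntegrableOn D (Ioc 0 b) := by
    refine Integrable.mono' hgbar_int hD_meas.aestronglyMeasurable.restrict ?_
    have hne_b : ∀ᵐ r ∂(volume.restrict (Ioc (0:ℝ) b)), r ≠ b := by
      rw [ae_iff]
      have he : {r : ℝ | ¬ r ≠ b} = {b} := by ext y; simp
      rw [he, Measure.restrict_apply (measurableSet_singleton b)]
      exact measure_mono_null inter_subset_left (by simp)
    filter_upwards [ae_restrict_mem measurableSet_Ioc, hne_b] with r hr hrb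
    rw [Real.norm_eq_abs, hD_eq r ⟨hr.1.le, lt_of_le_of_ne hr.2 hrb⟩]
    exact (hgd 0 r le_rfl hr.1.le (by simpa using hr.2)).2
  -- FTC for g0c
  have hindD : Integrable ((Ioc (0:ℝ) b).indicator D) volume :=
    hDI.integrable_indicator measurableSet_Ioc
  set PDc : ℝ → ℝ := fun x => ∫ r in (0:ℝ)..x, (Ioc (0:ℝ) b).indicator D r with hPDc_def
  have hPDc_cont : Continuous PDc := hindD.continuous_primitive 0
  have hPDeq : ∀ x, 0 ≤ x → x ≤ b → PDc x = ∫ r in Ioc (0:ℝ) x, D r := by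
    intro x hx0 hxb
    show (∫ r in (0:ℝ)..x, (Ioc (0:ℝ) b).indicator D r) = _
    rw [intervalIntegral.integral_of_le hx0, setIntegral_indicator measurableSet_Ioc,
      inter_eq_self_of_subset_left (Ioc_subset_Ioc le_rfl hxb)]
  have hFTC : ∀ τ, 0 ≤ τ → τ ≤ b → g0c τ = g 0 0 + PDc τ := by
    intro τ hτ0 hτb
    rcases eq_or_lt_of_le hτ0 with h0 | h0
    · rw [← h0]
      have : PDc 0 = 0 := by
        show (∫ r in (0:ℝ)..0, (Ioc (0:ℝ) b).indicator D r) = 0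
        simp
      rw [this, add_zero]
      exact hg0c_eq 0 ⟨le_rfl, hb.le⟩
    · have hderiv : ∀ x ∈ Ioo (0:ℝ) τ, HasDerivWithinAt g0c
          ((Ioc (0:ℝ) b).indicator D x) (Ioi x) x := by
        intro x hx
        have hx0 : 0 < x := hx.1
        have hxb : x < b := lt_of_lt_of_le hx.2 hτb
        have h2 := hg0Icc x hx0.le hxb.le
        have h3 : Icc (0:ℝ) b ∈ 𝓝[Ioi x] x :=
          mem_nhdsWithin.2 ⟨Iio b, isOpen_Iio, hxb,
            fun y hy => ⟨(hx0.trans hy.2).le, hy.1.le⟩⟩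
        have h4 : HasDerivWithinAt g0c (g₂ 0 x) (Ioi x) x := h2.mono_of_mem_nhdsWithin h3
        have hDx : (Ioc (0:ℝ) b).indicator D x = g₂ 0 x := by
          rw [indicator_of_mem (Set.mem_Ioc.2 ⟨hx0, hxb.le⟩) D, hD_eq x ⟨hx0.le, hxb⟩]
        rw [hDx]
        exact h4
      have hint : IntervalIntegrable ((Ioc (0:ℝ) b).indicator D) volume 0 τ :=
        hindD.intervalIntegrable
      have := intervalIntegral.integral_eq_sub_of_hasDeriv_right_of_le hτ0
        hg0c_cont.continuousOn hderiv hint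
      have hg00 : g0c 0 = g 0 0 := hg0c_eq 0 ⟨le_rfl, hb.le⟩
      show g0c τ = g 0 0 + ∫ r in (0:ℝ)..τ, (Ioc (0:ℝ) b).indicator D r
      rw [this, hg00]
      ring
  -- primitive of hd
  set HB : ℝ → ℝ := fun x => ∫ s in (0:ℝ)..x, hd s with hHB_def
  have hHBcont : Continuous HB := hd_int.continuous_primitive 0
  have hHBneg : ∀ x ≤ (0:ℝ), HB x = 0 := by
    intro x hx
    show (∫ s in (0:ℝ)..x, hd s) = 0
    rw [intervalIntegral.integral_of_ge hx]
    have : EqOn hd (fun _ => (0:ℝ)) (Ioc x 0) := fun s hs => hd_neg s hs.2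
    rw [setIntegral_congr_fun measurableSet_Ioc this]
    simp
  have hHBIoc : ∀ x, (∫ s in Ioc (0:ℝ) x, hd s) = HB x := by
    intro x
    rcases le_or_gt 0 x with hx | hx
    · exact (intervalIntegral.integral_of_le hx).symm
    · rw [Set.Ioc_eq_empty (by intro hc; exact absurd hx (not_lt.2 hc.le)),
        Measure.restrict_empty, integral_zero_measure, hHBneg x hx.le]
  have hCH := fun x => primitive_abs_le hd hd_int x
  -- expansion of the convolution
  set R : ℝ → ℝ := fun τ => ∫ r in Ioc (0:ℝ) b, D r * HB (τ - r) with hR_def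
  set Q : ℝ → ℝ := fun τ => g 0 0 * HB τ + R τ with hQ_def
  have hexp : ∀ t, 0 < t → t ≤ b → (g0t ⋆[Lmul, volume] hd) t = Q t := by
    intro t ht htb
    rw [hg0t_def, conv_eqI' g0c hd hd_neg t ht htb]
    have e1 : (∫ s in Ioo (0:ℝ) t, g0c (t - s) * hd s)
        = ∫ s in Ioo (0:ℝ) t, (g 0 0 * hd s + PDc (t - s) * hd s) := by
      refine setIntegral_congr_fun measurableSet_Ioo (fun s hs => ?_)
      have hs' := hs
      rw [hFTC (t - s) (by linarith [hs'.2]) (by linarith [hs'.1])]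
      ring
    have hint1 : IntegrableOn (fun s => g 0 0 * hd s) (Ioo (0:ℝ) t) :=
      (hd_int.restrict).const_mul _
    have hint2 : IntegrableOn (fun s => PDc (t - s) * hd s) (Ioo (0:ℝ) t) := by
      set CD : ℝ := ∫ s, |(Ioc (0:ℝ) b).indicator D s| with hCD_def
      refine Integrable.mono' (((hd_int.norm).const_mul CD).restrict) ?_ ?_
      · exact ((hPDc_cont.comp (continuous_const.sub continuous_id)).aestronglyMeasurable.restrict).mul
          hd_int.aestronglyMeasurable.restrict
      · filter_upwards with s
        rw [norm_mul]
        refine mul_le_mul_of_nonneg_right ?_ (norm_nonneg _)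
        exact primitive_abs_le _ hindD (t - s)
    rw [e1, integral_add hint1 hint2]
    have e2 : (∫ s in Ioo (0:ℝ) t, g 0 0 * hd s) = g 0 0 * HB t := by
      rw [integral_const_mul]
      congr 1
      rw [← integral_Ioc_eq_integral_Ioo]
      exact hHBIoc t
    have e3 : (∫ s in Ioo (0:ℝ) t, PDc (t - s) * hd s) = R t := by
      have e3a : (∫ s in Ioo (0:ℝ) t, PDc (t - s) * hd s)
          = ∫ s in Ioo (0:ℝ) t, (∫ r in Ioc (0:ℝ) (t - s), D r) * hd s := by
        refine setIntegral_congr_fun measurableSet_Ioo (fun s hs => ?_)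
        rw [hPDeq (t - s) (by linarith [hs.2]) (by linarith [hs.1])]
      have e3b := expansion D hd hD_meas hDI hd_int t ht htb
      have e3c : (∫ r in Ioc (0:ℝ) b, D r * (∫ s in Ioc (0:ℝ) (t - r), hd s))
          = ∫ r in Ioc (0:ℝ) b, D r * HB (t - r) := by
        refine setIntegral_congr_fun measurableSet_Ioc (fun r _ => ?_)
        rw [hHBIoc (t - r)]
      rw [e3a, e3b, e3c]
    rw [e2, e3]
  -- continuity of Q
  have hRcont : Continuous R := by
    rw [hR_def]
    set CH : ℝ := ∫ s, |hd s| with hCH_def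
    refine continuous_of_dominated ?_ ?_ (hDI.norm.mul_const CH) ?_
    · intro x
      exact (hD_meas.aestronglyMeasurable.restrict).mul
        ((hHBcont.comp (continuous_const.sub continuous_id)).aestronglyMeasurable.restrict)
    · intro x
      filter_upwards with r
      rw [norm_mul]
      exact mul_le_mul_of_nonneg_left (hCH (x - r)) (norm_nonneg _)
    · filter_upwards with r
      exact continuous_const.mul (hHBcont.comp (continuous_sub_right r))
  have hQcont : Continuous Q := by
    rw [hQ_def]
    exact (continuous_const.mul hHBcont).add hRcont
  -- Q vanishes a.e. on (0,b]
  have key3 : ∀ᵐ t ∂(volume.restrict (Ioc (0:ℝ) b)), Q t = 0 := by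
    filter_upwards [key2, ae_restrict_mem measurableSet_Ioc] with t h1 h2
    rw [← hexp t h2.1 h2.2]
    exact h1
  -- Q vanishes on [0,b] by continuity
  have hQzero : ∀ t ∈ Icc (0:ℝ) b, Q t = 0 := by
    have hZclosed : IsClosed {x : ℝ | Q x = 0} := isClosed_eq hQcont continuous_const
    have hae' : ∀ᵐ x ∂(volume : Measure ℝ), x ∈ Ioc (0:ℝ) b → Q x = 0 :=
      (ae_restrict_iff' measurableSet_Ioc).mp key3
    have hnull : volume {x : ℝ | ¬ (x ∈ Ioc (0:ℝ) b → Q x = 0)} = 0 := hae'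
    intro t ht
    have hcl : t ∈ closure {x : ℝ | Q x = 0} := by
      rw [Metric.mem_closure_iff]
      intro ε hε
      set lo : ℝ := max 0 (t - ε/2) with hlo_def
      set hi : ℝ := min b (t + ε/2) with hhi_def
      have hlo0 : 0 ≤ lo := le_max_left _ _
      have hhib : hi ≤ b := min_le_left _ _
      have hlot : t - ε/2 ≤ lo := le_max_right _ _
      have hhit : hi ≤ t + ε/2 := min_le_right _ _
      have hlohi : lo < hi := by
        apply max_lt
        · exact lt_min hb (by linarith [ht.1])
        · exact lt_min (by linarith [ht.2]) (by linarith)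
      have hpos : 0 < volume (Ioo lo hi) := by
        rw [Real.volume_Ioo]
        exact ENNReal.ofReal_pos.2 (by linarith)
      by_contra hcon
      push_neg at hcon
      have hsub : Ioo lo hi ⊆ {x : ℝ | ¬ (x ∈ Ioc (0:ℝ) b → Q x = 0)} := by
        intro x hx
        intro himp
        have hxI : x ∈ Ioc (0:ℝ) b := ⟨lt_of_le_of_lt hlo0 hx.1, le_trans hx.2.le hhib⟩
        have hQx : Q x = 0 := himp hxI
        have hdist : dist t x < ε := by
          rw [Real.dist_eq, abs_lt]
          constructor
          · have : x < t + ε/2 := lt_of_lt_of_le hx.2 hhit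
            linarith
          · have : t - ε/2 < x := lt_of_le_of_lt hlot hx.1
            linarith
        exact absurd hdist (by simpa using hcon x hQx)
      have := measure_mono_null hsub hnull
      rw [this] at hpos
      exact absurd hpos (lt_irrefl 0)
    rwa [hZclosed.closure_eq] at hcl
  -- Gronwall
  have hνg00 : νlo ≤ |g 0 0| := (hν 0 ⟨le_rfl, hb.le⟩).1
  have hineq : ∀ t ∈ Icc (0:ℝ) b, νlo * |HB t| ≤ ∫ r in Ioc (0:ℝ) b, |D r| * |HB (t - r)| := by
    intro t ht
    have hQt : g 0 0 * HB t + R t = 0 := hQzero t ht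
    have hRt : g 0 0 * HB t = - R t := by linarith
    calc νlo * |HB t| ≤ |g 0 0| * |HB t| :=
          mul_le_mul_of_nonneg_right hνg00 (abs_nonneg _)
      _ = |g 0 0 * HB t| := (abs_mul _ _).symm
      _ = |R t| := by rw [hRt, abs_neg]
      _ ≤ ∫ r in Ioc (0:ℝ) b, |D r * HB (t - r)| := by
          have h1 : |R t| = ‖R t‖ := (Real.norm_eq_abs _).symm
          rw [h1, hR_def]
          refine le_trans (norm_integral_le_integral_norm _) ?_
          refine le_of_eq (integral_congr_ae (Eventually.of_forall fun r => ?_))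
          dsimp only
          rw [Real.norm_eq_abs]
      _ = ∫ r in Ioc (0:ℝ) b, |D r| * |HB (t - r)| := by
          refine integral_congr_ae (Eventually.of_forall fun r => ?_)
          dsimp only
          rw [abs_mul]
  have hHBzero : ∀ t ∈ Icc (0:ℝ) b, HB t = 0 :=
    gronwall_zero hb hνlo (fun r => |D r|) HB (fun x => abs_nonneg _) hDI.abs
      hHBcont hHBneg hineq
  -- conclude h = 0 a.e.
  have hzero : ∀ t ∈ Icc (0:ℝ) b, (∫ s in (0:ℝ)..t, hd s) = 0 := hHBzero
  have haez := ae_zero_of_primitive_zero hb hd hd_int hzero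
  filter_upwards [haez, ae_restrict_mem measurableSet_Ioc] with t h1 h2
  have hFt_eq : Ft t = ∫ s in (0:ℝ)..t, K (t - s) * u s := by
    rw [hFt_def, hKt_def, hut_def, conv_eqI K u t h2.1 h2.2, ioo_to_interval _ _ h2.1.le]
    exact (flip_mul K u t).symm
  have hft_eq : ft t = f t := by rw [hft_def]; exact indicator_of_mem h2 f
  have h3 : Ft t - ft t = 0 := h1
  rw [← hFt_eq, ← hft_eq]
  linarith
end

section
/- Let b > 0, let w be a weight function satisfying conditions (i) and (ii), and let k ∈ L¹(0,b) satisfy the weighted Sonine condition WSC1 with weight w and associated kernel K ∈ L¹(0,b). Then K satisfies the classical Sonine condition: there exists u ∈ L¹(0,b) such that ∫₀ᵗ K(t−s) u(s) ds = 1 for almost every t ∈ (0,b]. -/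
open MeasureTheory Set Filter Topology
open scoped ENNReal NNReal Convolution

noncomputable abbrev RL : ℝ →L[ℝ] ℝ →L[ℝ] ℝ := ContinuousLinearMap.mul ℝ ℝ

/-- convenient name -/
noncomputable def cv (f g : ℝ → ℝ) : ℝ → ℝ := convolution f g RL volume

lemma cv_def (f g : ℝ → ℝ) (x : ℝ) : cv f g x = ∫ t, f t * g (x - t) := rfl

lemma cv_norm_le (f g : ℝ → ℝ) (hf : AEStronglyMeasurable f volume)
    (hg : AEStronglyMeasurable g volume) (x : ℝ) :
    ‖cv f g x‖ ≤ cv (‖f ·‖) (‖g ·‖) x := by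
  have hmeas : AEStronglyMeasurable (fun t => RL (f t) (g (x - t))) volume :=
    hf.convolution_integrand_snd RL hg x
  have hmeas' : AEStronglyMeasurable (fun t => f t * g (x - t)) volume := hmeas
  have hnorm : (fun t => ‖f t‖ * ‖g (x - t)‖) = fun t => ‖f t * g (x - t)‖ := by
    ext t; rw [norm_mul]
  by_cases h : Integrable (fun t => f t * g (x - t)) volume
  · rw [cv_def, cv_def, hnorm]
    exact norm_integral_le_integral_norm _
  · have h2 : ¬ Integrable (fun t => ‖f t * g (x - t)‖) volume := by
      rw [integrable_norm_iff hmeas']; exact h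
    rw [cv_def, cv_def, hnorm, integral_undef h, integral_undef h2, norm_zero]

lemma cv_integrable {f g : ℝ → ℝ} (hf : Integrable f volume) (hg : Integrable g volume) :
    Integrable (cv f g) volume :=
  hf.integrable_convolution RL hg

lemma cv_L1_bound {f g : ℝ → ℝ} (hf : Integrable f volume) (hg : Integrable g volume) :
    ∫ x, ‖cv f g x‖ ≤ (∫ x, ‖f x‖) * ∫ x, ‖g x‖ := by
  have h1 : Integrable (cv (‖f ·‖) (‖g ·‖)) volume := cv_integrable hf.norm hg.norm
  calc ∫ x, ‖cv f g x‖ ≤ ∫ x, cv (‖f ·‖) (‖g ·‖) x :=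
        integral_mono (cv_integrable hf hg).norm h1
          (cv_norm_le f g hf.aestronglyMeasurable hg.aestronglyMeasurable)
    _ = (∫ x, ‖f x‖) * ∫ x, ‖g x‖ := by
        have := integral_convolution RL hf.norm hg.norm
        simpa [cv] using this

lemma cv_ae_exists {f g : ℝ → ℝ} (hf : Integrable f volume) (hg : Integrable g volume) :
    ∀ᵐ x, ConvolutionExistsAt f g x RL volume :=
  hf.ae_convolution_exists RL hg

/-- a.e. right-distributivity of convolution over subtraction. -/
lemma cv_sub_right {f g h : ℝ → ℝ} (hf : Integrable f volume) (hg : Integrable g volume)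
    (hh : Integrable h volume) :
    ∀ᵐ x, cv f g x - cv f h x = cv f (fun t => g t - h t) x := by
  filter_upwards [cv_ae_exists hf hg, cv_ae_exists hf hh] with x h1 h2
  have h1' : Integrable (fun t => f t * g (x - t)) volume := h1.integrable
  have h2' : Integrable (fun t => f t * h (x - t)) volume := h2.integrable
  rw [cv_def, cv_def, cv_def, ← integral_sub h1' h2']
  congr 1; ext t; ring

/-- a.e. left-distributivity of convolution over subtraction. -/
lemma cv_sub_left {f g h : ℝ → ℝ} (hf : Integrable f volume) (hg : Integrable g volume)
    (hh : Integrable h volume) :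
    ∀ᵐ x, cv f h x - cv g h x = cv (fun t => f t - g t) h x := by
  filter_upwards [cv_ae_exists hf hh, cv_ae_exists hg hh] with x h1 h2
  have h1' : Integrable (fun t => f t * h (x - t)) volume := h1.integrable
  have h2' : Integrable (fun t => g t * h (x - t)) volume := h2.integrable
  rw [cv_def, cv_def, cv_def, ← integral_sub h1' h2']
  congr 1; ext t; ring

/-- If `δ` satisfies `δ = -(ρ ⋆ δ)` a.e. on `Iic c`, with `ρ` supported on positives and of
small `L¹` norm, then `δ` vanishes a.e. on `Iic c`. -/
lemma cv_vanish {ρ δ : ℝ → ℝ} (hρ : Integrable ρ volume) (hδ : Integrable δ volume)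
    (hρ0 : ∀ x, x ≤ 0 → ρ x = 0) (hε : (∫ x, ‖ρ x‖) < 1) {c : ℝ}
    (heq : ∀ᵐ t, t ≤ c → δ t = -(cv ρ δ t)) :
    ∀ᵐ t, t ≤ c → δ t = 0 := by
  set e : ℝ → ℝ := Set.indicator (Iic c) δ with he_def
  have he : Integrable e volume := hδ.indicator measurableSet_Iic
  have hkey : ∀ t, t ≤ c → cv ρ δ t = cv ρ e t := by
    intro t ht; rw [cv_def, cv_def]; congr 1; ext s
    rcases le_or_gt s 0 with hs | hs
    · rw [hρ0 s hs, zero_mul, zero_mul]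
    · have hmem : t - s ∈ Iic c := mem_Iic.mpr (by linarith)
      rw [he_def, Set.indicator_of_mem hmem]
  have hae : ∀ᵐ t, ‖e t‖ ≤ ‖cv ρ e t‖ := by
    filter_upwards [heq] with t ht
    rcases le_or_gt t c with h | h
    · rw [he_def, Set.indicator_of_mem (mem_Iic.mpr h), ht h, ← hkey t h, norm_neg]
    · rw [he_def, Set.indicator_of_notMem (by simpa using h.not_ge), norm_zero]
      exact norm_nonneg _
  have hA : (∫ t, ‖e t‖) ≤ (∫ x, ‖ρ x‖) * ∫ t, ‖e t‖ :=
    le_trans (integral_mono_ae he.norm (cv_integrable hρ he).norm hae) (cv_L1_bound hρ he)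
  have hnn : 0 ≤ ∫ t, ‖e t‖ := integral_nonneg fun t => norm_nonneg _
  have hA0 : (∫ t, ‖e t‖) = 0 := le_antisymm (by nlinarith) hnn
  have hz : (fun t => ‖e t‖) =ᵐ[volume] 0 :=
    (integral_eq_zero_iff_of_nonneg (fun t => norm_nonneg _) he.norm).mp hA0
  filter_upwards [hz] with t ht htc
  have : e t = δ t := Set.indicator_of_mem (mem_Iic.mpr htc) δ
  have h0 : ‖e t‖ = 0 := ht
  rw [this] at h0
  exact norm_eq_zero.mp h0



lemma exists_deriv_rep (b : ℝ) (hb : 0 < b) (g g₂ : ℝ → ℝ → ℝ) (gbar : ℝ → ℝ)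
    (hgbar_nonneg : ∀ x, 0 ≤ gbar x) (hgbar_int : IntegrableOn gbar (Set.Ioc 0 b))
    (hgd : ∀ s t : ℝ, 0 ≤ s → 0 ≤ t → s + t ≤ b →
      HasDerivWithinAt (fun τ => g s τ) (g₂ s t) (Set.Icc 0 (b - s)) t ∧ |g₂ s t| ≤ gbar t) :
    ∃ d : ℝ → ℝ, Measurable d ∧ (∀ τ, 0 ≤ τ → τ ≤ b → ‖d τ‖ ≤ gbar τ) ∧
      (∀ t, 0 ≤ t → t ≤ b → (∫ τ in (0:ℝ)..t, d τ) = g 0 t - g 0 0) := by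
  have hgderiv : ∀ t : ℝ, 0 ≤ t → t ≤ b →
      HasDerivWithinAt (fun τ => g 0 τ) (g₂ 0 t) (Icc 0 b) t ∧ |g₂ 0 t| ≤ gbar t := by
    intro t h0 hb'
    have := hgd 0 t le_rfl h0 (by simpa using hb')
    simpa [sub_zero] using this
  have hg0cont : ContinuousOn (g 0) (Icc 0 b) := fun t ht =>
    ((hgderiv t ht.1 ht.2).1.continuousWithinAt)
  set G0 : ℝ → ℝ := fun τ => g 0 (min τ b) with hG0_def
  set d : ℝ → ℝ := fun τ => derivWithin G0 (Ioi τ) τ with hd_def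
  have hd_meas : Measurable d := measurable_derivWithin_Ioi G0
  have hG0deriv : ∀ τ, 0 ≤ τ → τ < b → HasDerivWithinAt G0 (g₂ 0 τ) (Ioi τ) τ := by
    intro τ h0 hτb
    have h1 : HasDerivWithinAt (g 0) (g₂ 0 τ) (Ioc τ b) τ :=
      (hgderiv τ h0 hτb.le).1.mono (fun x hx => ⟨le_trans h0 hx.1.le, hx.2⟩)
    have h2 : HasDerivWithinAt G0 (g₂ 0 τ) (Ioc τ b) τ := by
      apply h1.congr
      · intro x hx; simp [hG0_def, min_eq_left hx.2]
      · simp [hG0_def, min_eq_left hτb.le]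
    exact h2.mono_of_mem_nhdsWithin (Ioc_mem_nhdsGT_of_mem ⟨le_rfl, hτb⟩)
  have hd_eq : ∀ τ, 0 ≤ τ → τ < b → d τ = g₂ 0 τ := fun τ h0 hτb =>
    (hG0deriv τ h0 hτb).derivWithin (uniqueDiffWithinAt_Ioi τ)
  have hd_bound : ∀ τ, 0 ≤ τ → τ ≤ b → ‖d τ‖ ≤ gbar τ := by
    intro τ h0 hτb
    rcases lt_or_eq_of_le hτb with h | h
    · rw [hd_eq τ h0 h, Real.norm_eq_abs]; exact (hgderiv τ h0 hτb).2
    · subst h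
      have hconst : HasDerivWithinAt G0 0 (Ioi τ) τ := by
        apply (hasDerivWithinAt_const τ (Ioi τ) (g 0 τ)).congr
        · intro x hx; simp [hG0_def, min_eq_right (le_of_lt (show τ < x from hx))]
        · simp [hG0_def]
      have : d τ = 0 := hconst.derivWithin (uniqueDiffWithinAt_Ioi τ)
      rw [this]; simpa using hgbar_nonneg τ
  refine ⟨d, hd_meas, hd_bound, ?_⟩
  intro t h0 hbt
  have hcont : ContinuousOn G0 (Icc 0 t) := by
    apply hg0cont.comp (Continuous.continuousOn (by continuity))
    intro x hx; exact ⟨le_min hx.1 hb.le, min_le_right _ _⟩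
  have hderiv : ∀ x ∈ Ioo 0 t, HasDerivWithinAt G0 (d x) (Ioi x) x := by
    intro x hx
    rw [hd_eq x hx.1.le (lt_of_lt_of_le hx.2 hbt)]
    exact hG0deriv x hx.1.le (lt_of_lt_of_le hx.2 hbt)
  have hint : IntervalIntegrable d volume 0 t := by
    rw [intervalIntegrable_iff_integrableOn_Ioc_of_le h0]
    apply Integrable.mono' (hgbar_int.mono_set (Ioc_subset_Ioc le_rfl hbt))
      hd_meas.aestronglyMeasurable
    rw [ae_restrict_iff' measurableSet_Ioc]
    exact Filter.Eventually.of_forall fun τ hτ => hd_bound τ hτ.1.le (hτ.2.trans hbt)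
  have := intervalIntegral.integral_eq_sub_of_hasDeriv_right_of_le h0 hcont hderiv hint
  rw [this]
  simp [hG0_def, min_eq_left hbt, min_eq_left hb.le]

lemma exists_tilt {b : ℝ} {dc : ℝ → ℝ} (hdc : IntegrableOn dc (Ioc 0 b) volume)
    (hmeas : Measurable dc) :
    ∃ N : ℕ, (∫ τ in Ioc (0:ℝ) b, Real.exp (-(N * τ)) * ‖dc τ‖) < 1 := by
  have htend : Filter.Tendsto (fun n : ℕ => ∫ τ in Ioc (0:ℝ) b, Real.exp (-(n * τ)) * ‖dc τ‖)
      Filter.atTop (𝓝 (∫ τ in Ioc (0:ℝ) b, (0:ℝ))) := by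
    apply tendsto_integral_of_dominated_convergence (fun τ => ‖dc τ‖)
    · intro n
      exact ((Real.continuous_exp.comp (by continuity)).aestronglyMeasurable).mul
        hmeas.norm.aestronglyMeasurable
    · exact hdc.norm
    · intro n
      rw [ae_restrict_iff' measurableSet_Ioc]
      refine Filter.Eventually.of_forall fun τ hτ => ?_
      have h1 : Real.exp (-(n*τ)) ≤ 1 := Real.exp_le_one_iff.mpr (by nlinarith [hτ.1])
      have h2 : (0:ℝ) < Real.exp (-(n*τ)) := Real.exp_pos _
      rw [norm_mul, norm_norm, Real.norm_of_nonneg h2.le]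
      nlinarith [norm_nonneg (dc τ)]
    · rw [ae_restrict_iff' measurableSet_Ioc]
      refine Filter.Eventually.of_forall fun τ hτ => ?_
      have hpow : (fun n : ℕ => Real.exp (-(n * τ)) * ‖dc τ‖)
          = fun n : ℕ => Real.exp (-τ) ^ n * ‖dc τ‖ := by
        funext n; rw [← Real.exp_nat_mul]; ring_nf
      rw [hpow]
      have hlim : Filter.Tendsto (fun n : ℕ => Real.exp (-τ) ^ n) Filter.atTop (𝓝 0) :=
        tendsto_pow_atTop_nhds_zero_of_lt_one (Real.exp_pos _).le
          (by rw [Real.exp_lt_one_iff]; linarith [hτ.1])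
      simpa using hlim.mul_const ‖dc τ‖
  rw [integral_zero] at htend
  exact (htend.eventually_lt_const one_pos).exists

lemma exists_L1_fixedPoint {ρ f0 : ℝ → ℝ} (hρ : Integrable ρ volume) (hf0 : Integrable f0 volume)
    (hε : (∫ x, ‖ρ x‖) < 1) :
    ∃ u : ℝ → ℝ, Integrable u volume ∧ u =ᵐ[volume] fun t => f0 t - cv ρ u t := by
  haveI : Fact ((1:ℝ≥0∞) ≤ 1) := ⟨le_rfl⟩
  have hεnn : 0 ≤ ∫ x, ‖ρ x‖ := integral_nonneg fun x => norm_nonneg _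
  have hTint : ∀ v : Lp ℝ 1 (volume : Measure ℝ),
      Integrable (fun t => f0 t - cv ρ (⇑v) t) volume :=
    fun v => hf0.sub (cv_integrable hρ (L1.integrable_coeFn v))
  set T : Lp ℝ 1 (volume : Measure ℝ) → Lp ℝ 1 (volume : Measure ℝ) :=
    fun v => (hTint v).toL1 _ with hT_def
  have hlip : ∀ v w : Lp ℝ 1 (volume : Measure ℝ),
      dist (T v) (T w) ≤ (∫ x, ‖ρ x‖) * dist v w := by
    intro v w
    have h1 : T v - T w = ((hTint v).sub (hTint w)).toL1 _ :=
      (Integrable.toL1_sub _ _ (hTint v) (hTint w)).symm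
    rw [dist_eq_norm, h1, L1.norm_of_fun_eq_integral_norm]
    have h2 : (∫ t, ‖((fun t => f0 t - cv ρ (⇑v) t) - fun t => f0 t - cv ρ (⇑w) t) t‖)
        = ∫ t, ‖cv ρ (fun s => ⇑w s - ⇑v s) t‖ := by
      apply integral_congr_ae
      filter_upwards [cv_sub_right hρ (L1.integrable_coeFn w) (L1.integrable_coeFn v)] with t ht
      simp only [Pi.sub_apply]
      rw [show f0 t - cv ρ (⇑v) t - (f0 t - cv ρ (⇑w) t) = cv ρ (⇑w) t - cv ρ (⇑v) t by ring, ht]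
    rw [h2]
    calc (∫ t, ‖cv ρ (fun s => ⇑w s - ⇑v s) t‖)
        ≤ (∫ x, ‖ρ x‖) * ∫ t, ‖⇑w t - ⇑v t‖ :=
          cv_L1_bound hρ ((L1.integrable_coeFn w).sub (L1.integrable_coeFn v))
      _ = (∫ x, ‖ρ x‖) * dist v w := by
          congr 1
          rw [L1.dist_eq_integral_dist]
          apply integral_congr_ae
          refine Filter.Eventually.of_forall fun t => ?_
          simp [Real.dist_eq, abs_sub_comm]
  have hεlt : (⟨∫ x, ‖ρ x‖, hεnn⟩ : NNReal) < 1 := by exact_mod_cast hε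
  have hcontr : ContractingWith ⟨∫ x, ‖ρ x‖, hεnn⟩ T :=
    ⟨hεlt, LipschitzWith.of_dist_le_mul fun v w => hlip v w⟩
  haveI : Nonempty (Lp ℝ 1 (volume : Measure ℝ)) := ⟨0⟩
  have hfix : T (ContractingWith.fixedPoint T hcontr) = ContractingWith.fixedPoint T hcontr :=
    hcontr.fixedPoint_isFixedPt
  refine ⟨⇑(ContractingWith.fixedPoint T hcontr), L1.integrable_coeFn _, ?_⟩
  have h1 : ⇑(T (ContractingWith.fixedPoint T hcontr)) =ᵐ[volume]
      fun t => f0 t - cv ρ (⇑(ContractingWith.fixedPoint T hcontr)) t :=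
    Integrable.coeFn_toL1 (hTint _)
  rw [hfix] at h1
  exact h1

lemma cv_tilt (b lam : ℝ) (hb : 0 < b) (φ ψ' : ℝ → ℝ) {t : ℝ} (ht : t ∈ Ioc (0:ℝ) b) :
    cv (indicator (Ioc 0 b) (fun z => Real.exp (-(lam * z)) * φ z))
       (indicator (Ioc 0 b) (fun z => Real.exp (-(lam * z)) * ψ' z)) t
    = Real.exp (-(lam * t)) * ∫ s in Ioo (0:ℝ) t, φ s * ψ' (t - s) := by
  rw [cv_def]
  have hcong : (fun s : ℝ => indicator (Ioc 0 b) (fun z => Real.exp (-(lam*z)) * φ z) s *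
      indicator (Ioc 0 b) (fun z => Real.exp (-(lam*z)) * ψ' z) (t - s))
      = indicator (Ioo 0 t) (fun s => Real.exp (-(lam*t)) * (φ s * ψ' (t - s))) := by
    funext s
    by_cases hs : s ∈ Ioo (0:ℝ) t
    · have h1 : s ∈ Ioc (0:ℝ) b := ⟨hs.1, le_trans hs.2.le ht.2⟩
      have h2 : t - s ∈ Ioc (0:ℝ) b := ⟨by simp [hs.2], by linarith [ht.2, hs.1]⟩
      rw [indicator_of_mem h1, indicator_of_mem h2, indicator_of_mem hs]
      have hE : Real.exp (-(lam*s)) * Real.exp (-(lam*(t-s))) = Real.exp (-(lam*t)) := by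
        rw [← Real.exp_add]; congr 1; ring
      calc Real.exp (-(lam*s)) * φ s * (Real.exp (-(lam*(t-s))) * ψ' (t-s))
          = Real.exp (-(lam*s)) * Real.exp (-(lam*(t-s))) * (φ s * ψ' (t-s)) := by ring
        _ = Real.exp (-(lam*t)) * (φ s * ψ' (t-s)) := by rw [hE]
    · rw [indicator_of_notMem hs]
      rcases le_or_gt s 0 with h | h
      · rw [indicator_of_notMem (fun hm : s ∈ Ioc (0:ℝ) b => absurd hm.1 h.not_gt), zero_mul]
      · have hts : t ≤ s := by
          by_contra hcc; push_neg at hcc; exact hs ⟨h, hcc⟩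
        have h3 : t - s ∉ Ioc (0:ℝ) b := fun hm => absurd hm.1 (by linarith)
        rw [indicator_of_notMem h3, mul_zero]
  rw [hcong, integral_indicator measurableSet_Ioo, integral_const_mul]
/-- statement (A): if `k` satisfies WSC1 with associated kernel `K`, then `K`
satisfies the classical Sonine condition: there is `u ∈ L¹(0,b)` with
`∫₀ᵗ K(t-s)u(s)ds = 1` for a.e. `t ∈ (0,b]`. -/
theorem WSC1_associated_kernel_satisfies_CSC
    (b : ℝ) (hb : 0 < b)
    (w : ℝ → ℝ → ℝ) (hwI : WeightCondI b w) (hwII : WeightCondII b w)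
    (k K : ℝ → ℝ) (g g₂ : ℝ → ℝ → ℝ) (gbar : ℝ → ℝ)
    (hWSC : WSC1 b w k K g g₂ gbar) :
    ∃ u : ℝ → ℝ, IntegrableOn u (Set.Ioc 0 b) ∧
      ∀ᵐ t ∂(volume.restrict (Set.Ioc (0:ℝ) b)),
        (∫ s in (0:ℝ)..t, K (t - s) * u s) = 1 := by
  classical
  obtain ⟨hk_int, hK_int, hconv, ⟨νlo, νhi, hνlo, hννhi, hg0bd⟩, hgbar_nonneg, hgbar_int, hgd⟩ :=
    hWSC
  obtain ⟨w₂, wbar, hwbar_nonneg, hwbar_int, hw⟩ := hwII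
  obtain ⟨d, hd_meas, hd_bound, hFTC⟩ := exists_deriv_rep b hb g g₂ gbar hgbar_nonneg hgbar_int hgd
  set c := g 0 0 with hc_def
  have hc_lb : νlo ≤ |c| := (hg0bd 0 ⟨le_rfl, hb.le⟩).1
  have hc : c ≠ 0 := by
    intro h; rw [h, abs_zero] at hc_lb; linarith
  have hw0cont : ContinuousOn (w 0) (Icc 0 b) := fun t ht =>
    ((hw 0 t le_rfl ht.1 ht.2).1.continuousWithinAt)
  set f : ℝ → ℝ := fun z => w 0 z * k z with hf_def
  have hf_int : IntegrableOn f (Ioc 0 b) volume := by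
    set cl : ℝ → ℝ := fun z => max 0 (min z b) with hcl_def
    have hcl_cont : Continuous cl := continuous_const.max (continuous_id.min continuous_const)
    have hcl_mem : ∀ z, cl z ∈ Icc (0:ℝ) b := fun z =>
      ⟨le_max_left _ _, max_le hb.le (min_le_right _ _)⟩
    have hW_cont : Continuous fun z => w 0 (cl z) := hw0cont.comp_continuous hcl_cont hcl_mem
    obtain ⟨M, hM⟩ := isCompact_Icc.exists_bound_of_continuousOn hw0cont
    have h1 : IntegrableOn (fun z => w 0 (cl z) * k z) (Ioc 0 b) volume :=
      hk_int.bdd_mul hW_cont.aestronglyMeasurable (Filter.Eventually.of_forall fun z => hM _ (hcl_mem z))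
    apply h1.congr_fun ?_ measurableSet_Ioc
    intro z hz
    simp only [hf_def, hcl_def]
    rw [min_eq_left hz.2, max_eq_right hz.1.le]
  have hmain : ∀ t ∈ Ioc (0:ℝ) b, (∫ s in Ioo (0:ℝ) t, f s * K (t - s)) = g 0 t := by
    intro t ht
    have h0 := hconv 0 t le_rfl ht.1 (by simpa using ht.2)
    calc ∫ s in Ioo (0:ℝ) t, f s * K (t - s)
        = ∫ s in Ioc (0:ℝ) t, f s * K (t - s) := (integral_Ioc_eq_integral_Ioo).symm
      _ = ∫ z in (0:ℝ)..t, f z * K (t - z) := (intervalIntegral.integral_of_le ht.1.le).symm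
      _ = ∫ z in (0:ℝ)..t, w 0 (z + 0) * K (t - z) * k z :=
          intervalIntegral.integral_congr (fun z _ => by simp only [hf_def, add_zero]; ring)
      _ = g 0 t := h0
  set dc : ℝ → ℝ := fun τ => d τ / c with hdc_def
  have hdc_meas : Measurable dc := hd_meas.div_const c
  have hd_int : IntegrableOn d (Ioc 0 b) volume := by
    apply Integrable.mono' hgbar_int hd_meas.aestronglyMeasurable
    rw [ae_restrict_iff' measurableSet_Ioc]
    exact Filter.Eventually.of_forall fun τ hτ => hd_bound τ hτ.1.le hτ.2
  have hdc_int : IntegrableOn dc (Ioc 0 b) volume := hd_int.div_const c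
  obtain ⟨N, hN⟩ := exists_tilt hdc_int hdc_meas
  set lam : ℝ := (N : ℝ) with hlam_def
  have hlam : 0 ≤ lam := Nat.cast_nonneg N
  have hE_pos : ∀ τ : ℝ, 0 < Real.exp (-(lam * τ)) := fun τ => Real.exp_pos _
  have hE_le1 : ∀ τ : ℝ, 0 ≤ τ → Real.exp (-(lam * τ)) ≤ 1 := fun τ h =>
    Real.exp_le_one_iff.mpr (by nlinarith)
  set rlam : ℝ → ℝ := indicator (Ioc 0 b) (fun τ => Real.exp (-(lam * τ)) * dc τ) with hrlam_def
  set flam : ℝ → ℝ := indicator (Ioc 0 b) (fun z => Real.exp (-(lam * z)) * (f z / c)) with hflam_def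
  set Klam : ℝ → ℝ := indicator (Ioc 0 b) (fun z => Real.exp (-(lam * z)) * K z) with hKlam_def
  have hind : ∀ φ : ℝ → ℝ, IntegrableOn φ (Ioc 0 b) volume →
      Integrable (indicator (Ioc 0 b) fun z => Real.exp (-(lam * z)) * φ z) volume := by
    intro φ hφ
    rw [integrable_indicator_iff measurableSet_Ioc]
    apply Integrable.mono' hφ.norm
      ((Real.continuous_exp.comp ((continuous_const.mul continuous_id).neg)).aestronglyMeasurable.mul hφ.aestronglyMeasurable)
    rw [ae_restrict_iff' measurableSet_Ioc]
    refine Filter.Eventually.of_forall fun z hz => ?_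
    show ‖Real.exp (-(lam * z)) * φ z‖ ≤ ‖φ z‖
    rw [norm_mul, Real.norm_of_nonneg (hE_pos z).le]
    nlinarith [hE_le1 z hz.1.le, norm_nonneg (φ z), hE_pos z]
  have hrlam_int : Integrable rlam volume := hind dc hdc_int
  have hflam_int : Integrable flam volume := hind _ (hf_int.div_const c)
  have hKlam_int : Integrable Klam volume := hind K hK_int
  have hrlam0 : ∀ x, x ≤ 0 → rlam x = 0 := fun x hx =>
    indicator_of_notMem (fun hm : x ∈ Ioc (0:ℝ) b => absurd hm.1 hx.not_gt) _
  have hεlt : (∫ x, ‖rlam x‖) < 1 := by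
    have h1 : (fun x => ‖rlam x‖) = indicator (Ioc 0 b) fun τ => ‖Real.exp (-(lam * τ)) * dc τ‖ := by
      funext x; rw [hrlam_def, norm_indicator_eq_indicator_norm]
    rw [h1, integral_indicator measurableSet_Ioc]
    have h2 : EqOn (fun τ => ‖Real.exp (-(lam * τ)) * dc τ‖)
        (fun τ => Real.exp (-(lam * τ)) * ‖dc τ‖) (Ioc 0 b) := fun τ _ => by
      simp only [norm_mul, Real.norm_of_nonneg (hE_pos τ).le]
    rw [setIntegral_congr_fun measurableSet_Ioc h2]
    exact hN
  obtain ⟨u', hu'_int, hU⟩ := exists_L1_fixedPoint hrlam_int hflam_int hεlt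
  have hu'0 : ∀ᵐ t : ℝ, t ≤ 0 → u' t = 0 := by
    apply cv_vanish hrlam_int hu'_int hrlam0 hεlt
    filter_upwards [hU] with t ht h0
    rw [ht]
    have : flam t = 0 := by
      rw [hflam_def]
      exact indicator_of_notMem (fun hm : t ∈ Ioc (0:ℝ) b => absurd hm.1 h0.not_gt) _
    rw [this]; ring
  set Φ : ℝ → ℝ := cv u' Klam with hΦ_def
  have hΦ_int : Integrable Φ volume := cv_integrable hu'_int hKlam_int
  have hstep1 : cv u' Klam = cv (fun t => flam t - cv rlam u' t) Klam :=
    convolution_congr RL hU EventuallyEq.rfl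
  have hassoc : ∀ᵐ x : ℝ, cv (cv rlam u') Klam x = cv rlam Φ x := by
    have h1 : ∀ᵐ y : ℝ, ConvolutionExistsAt rlam u' y RL volume := cv_ae_exists hrlam_int hu'_int
    have h3 : ∀ᵐ x₀ : ℝ, ConvolutionExistsAt (fun x => ‖rlam x‖)
        (convolution (fun x => ‖u' x‖) (fun x => ‖Klam x‖) RL volume) x₀ RL volume :=
      cv_ae_exists hrlam_int.norm (cv_integrable hu'_int.norm hKlam_int.norm)
    filter_upwards [h3] with x₀ h3'
    exact convolution_assoc (L := RL) (L₂ := RL) (L₃ := RL) (L₄ := RL)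
      (fun x y z => mul_assoc x y z) hrlam_int.aestronglyMeasurable
      hu'_int.aestronglyMeasurable hKlam_int.aestronglyMeasurable h1
      (cv_ae_exists hu'_int.norm hKlam_int.norm) h3'
  have hΦeq : ∀ᵐ t : ℝ, Φ t = cv flam Klam t - cv rlam Φ t := by
    filter_upwards [cv_sub_left hflam_int (cv_integrable hrlam_int hu'_int) hKlam_int, hassoc]
      with t h2 h3
    conv_lhs => rw [hΦ_def, hstep1]
    rw [← h2, h3]
  set ψ : ℝ → ℝ := indicator (Ioc 0 b) (fun z => Real.exp (-(lam * z))) with hψ_def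
  have hψ_int : Integrable ψ volume := by
    rw [hψ_def, integrable_indicator_iff measurableSet_Ioc]
    exact (Real.continuous_exp.comp ((continuous_const.mul continuous_id).neg)).integrableOn_Ioc
  have hcvfK : ∀ t ∈ Ioc (0:ℝ) b, cv flam Klam t = Real.exp (-(lam * t)) * (g 0 t / c) := by
    intro t ht
    have h := cv_tilt b lam hb (fun z => f z / c) K ht
    rw [← hflam_def, ← hKlam_def] at h
    rw [h]
    congr 1
    have h2 : EqOn (fun s => f s / c * K (t - s)) (fun s => (f s * K (t - s)) / c)
        (Ioo 0 t) := fun s _ => by ring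
    rw [setIntegral_congr_fun measurableSet_Ioo h2, integral_div, hmain t ht]
  have hcvρψ : ∀ t ∈ Ioc (0:ℝ) b,
      cv rlam ψ t = Real.exp (-(lam * t)) * ((g 0 t - c) / c) := by
    intro t ht
    have h := cv_tilt b lam hb dc (fun _ => (1:ℝ)) ht
    simp only [mul_one] at h
    rw [← hrlam_def, ← hψ_def] at h
    rw [h]
    congr 1
    calc ∫ s in Ioo (0:ℝ) t, dc s
        = ∫ s in Ioc (0:ℝ) t, dc s := (integral_Ioc_eq_integral_Ioo).symm
      _ = ∫ s in (0:ℝ)..t, dc s := (intervalIntegral.integral_of_le ht.1.le).symm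
      _ = (∫ s in (0:ℝ)..t, d s) / c := by
          simp only [hdc_def]; rw [intervalIntegral.integral_div]
      _ = (g 0 t - c) / c := by rw [hFTC t ht.1.le ht.2]
  have hψeq : ∀ t : ℝ, t ≤ b → ψ t = cv flam Klam t - cv rlam ψ t := by
    intro t htb
    rcases le_or_gt t 0 with h0 | h0
    · have hψ0 : ψ t = 0 := by
        rw [hψ_def]
        exact indicator_of_notMem (fun hm : t ∈ Ioc (0:ℝ) b => absurd hm.1 h0.not_gt) _
      have hzero : ∀ (q : ℝ → ℝ), (∀ x, x ≤ 0 → q x = 0) → cv q Klam t = 0 ∧ cv q ψ t = 0 := by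
        intro q hq
        constructor <;>
        · rw [cv_def]
          have : ∀ s : ℝ, (q s * Klam (t - s) = 0) ∧ (q s * ψ (t - s) = 0) := by
            intro s
            rcases le_or_gt s 0 with hs | hs
            · rw [hq s hs, zero_mul, zero_mul]; exact ⟨rfl, rfl⟩
            · have h3 : t - s ∉ Ioc (0:ℝ) b := fun hm => absurd hm.1 (by linarith)
              constructor
              · rw [hKlam_def, indicator_of_notMem h3, mul_zero]
              · rw [hψ_def, indicator_of_notMem h3, mul_zero]
          first
          | · rw [show (fun s => q s * Klam (t - s)) = fun _ => (0:ℝ) from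
                funext fun s => (this s).1]
              exact integral_zero _ _
          | · rw [show (fun s => q s * ψ (t - s)) = fun _ => (0:ℝ) from
                funext fun s => (this s).2]
              exact integral_zero _ _
      have hA : cv flam Klam t = 0 :=
        (hzero flam (fun x hx => by
          rw [hflam_def]
          exact indicator_of_notMem (fun hm : x ∈ Ioc (0:ℝ) b => absurd hm.1 hx.not_gt) _)).1
      have hB : cv rlam ψ t = 0 := (hzero rlam hrlam0).2
      rw [hψ0, hA, hB]; ring
    · have ht : t ∈ Ioc (0:ℝ) b := ⟨h0, htb⟩
      have hψt : ψ t = Real.exp (-(lam * t)) := by rw [hψ_def, indicator_of_mem ht]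
      rw [hψt, hcvfK t ht, hcvρψ t ht]
      field_simp
      ring
  have hδ0 : ∀ᵐ t : ℝ, t ≤ b → Φ t - ψ t = 0 := by
    apply cv_vanish (δ := fun t => Φ t - ψ t) hrlam_int (hΦ_int.sub hψ_int) hrlam0 hεlt
    filter_upwards [hΦeq, cv_sub_right hrlam_int hΦ_int hψ_int] with t h1 h2 htb
    have h3 := hψeq t htb
    have h4 : Φ t - ψ t = -(cv rlam Φ t - cv rlam ψ t) := by rw [h1, h3]; ring
    rw [h4, h2]
  refine ⟨indicator (Ioc 0 b) (fun s => Real.exp (lam * s) * u' s), ?_, ?_⟩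
  · have h1 : IntegrableOn (fun s => Real.exp (lam * s) * u' s) (Ioc 0 b) volume := by
      apply Integrable.mono' ((hu'_int.norm.const_mul (Real.exp (lam * b))).integrableOn)
        (((Real.continuous_exp.comp (continuous_const.mul continuous_id)).aestronglyMeasurable).mul
          hu'_int.aestronglyMeasurable.restrict)
      rw [ae_restrict_iff' measurableSet_Ioc]
      refine Filter.Eventually.of_forall fun s hs => ?_
      show ‖Real.exp (lam * s) * u' s‖ ≤ Real.exp (lam * b) * ‖u' s‖
      rw [norm_mul, Real.norm_of_nonneg (Real.exp_pos (lam * s)).le]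
      have h2 : Real.exp (lam * s) ≤ Real.exp (lam * b) :=
        Real.exp_le_exp.mpr (mul_le_mul_of_nonneg_left hs.2 hlam)
      nlinarith [norm_nonneg (u' s), Real.exp_pos (lam * s)]
    exact ((integrable_indicator_iff measurableSet_Ioc).mpr h1).integrableOn
  · rw [ae_restrict_iff' measurableSet_Ioc]
    filter_upwards [hδ0] with t hδt ht
    have hψt : ψ t = Real.exp (-(lam * t)) := by rw [hψ_def, indicator_of_mem ht]
    have hΦt : Φ t = Real.exp (-(lam * t)) := by
      have h5 := hδt ht.2
      rw [sub_eq_zero] at h5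
      rw [h5, hψt]
    have hkey : Φ t = Real.exp (-(lam * t)) *
        ∫ s in Ioo (0:ℝ) t, K (t - s) * (Real.exp (lam * s) * u' s) := by
      rw [hΦ_def, cv_def]
      have hcong : ∀ᵐ s : ℝ, u' s * Klam (t - s)
          = indicator (Ioo 0 t)
            (fun s => Real.exp (-(lam * t)) * (K (t - s) * (Real.exp (lam * s) * u' s))) s := by
        filter_upwards [hu'0] with s hs0
        by_cases hs : s ∈ Ioo (0:ℝ) t
        · have h2 : t - s ∈ Ioc (0:ℝ) b := ⟨by simp [hs.2], by linarith [ht.2, hs.1]⟩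
          rw [indicator_of_mem hs, hKlam_def, indicator_of_mem h2]
          have hE2 : Real.exp (-(lam * (t - s)))
              = Real.exp (-(lam * t)) * Real.exp (lam * s) := by
            rw [← Real.exp_add]; congr 1; ring
          rw [hE2]; ring
        · rw [indicator_of_notMem hs]
          rcases le_or_gt s 0 with h | h
          · rw [hs0 h, zero_mul]
          · have hts : t ≤ s := by
              by_contra hcc; push_neg at hcc; exact hs ⟨h, hcc⟩
            have h3 : Klam (t - s) = 0 := by
              rw [hKlam_def]
              exact indicator_of_notMem (fun hm => absurd hm.1 (by linarith)) _
            rw [h3, mul_zero]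
      rw [integral_congr_ae hcong, integral_indicator measurableSet_Ioo, integral_const_mul]
    rw [intervalIntegral.integral_of_le ht.1.le, integral_Ioc_eq_integral_Ioo]
    have hEq : EqOn
        (fun s => K (t - s) * indicator (Ioc 0 b) (fun s => Real.exp (lam * s) * u' s) s)
        (fun s => K (t - s) * (Real.exp (lam * s) * u' s)) (Ioo 0 t) := by
      intro s hs
      have hmem : s ∈ Ioc (0:ℝ) b := ⟨hs.1, le_trans hs.2.le ht.2⟩
      simp only
      rw [indicator_of_mem hmem]
    rw [setIntegral_congr_fun measurableSet_Ioo hEq]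
    have hEne : Real.exp (-(lam * t)) ≠ 0 := (Real.exp_pos _).ne'
    have h6 := hkey
    rw [hΦt] at h6
    exact (mul_left_cancel₀ hEne (by rw [mul_one]; exact h6)).symm
end

section
/- Let b > 0, let w be a weight function satisfying conditions (i) and (ii), and let k ∈ L¹(0,b) satisfy the weighted Sonine condition WSC2 with weight w and some kernel K ∈ L¹(0,b). Then k satisfies the classical Sonine condition: there exists u ∈ L¹(0,b) such that ∫₀ᵗ k(t−s) u(s) ds = 1 for almost every t ∈ (0,b]. -/
open MeasureTheory Set
open scoped NNReal

noncomputable def mconv (f g : ℝ → ℝ) : ℝ → ℝ :=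
  convolution f g (ContinuousLinearMap.mul ℝ ℝ) volume

lemma mconv_apply (f g : ℝ → ℝ) (x : ℝ) : mconv f g x = ∫ s, f s * g (x - s) := by
  simp [mconv, convolution]

lemma mconv_zero_of_nonpos {f g : ℝ → ℝ} (hf : ∀ x ≤ 0, f x = 0) (hg : ∀ x ≤ 0, g x = 0)
    {x : ℝ} (hx : x ≤ 0) : mconv f g x = 0 := by
  have h : ∀ s : ℝ, f s * g (x - s) = 0 := by
    intro s
    rcases le_or_gt s 0 with h | h
    · rw [hf s h, zero_mul]
    · rw [hg (x - s) (by linarith), mul_zero]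
  rw [mconv_apply]
  simp [h]

lemma mconv_congr_left {f f' : ℝ → ℝ} (g : ℝ → ℝ) (h : f =ᵐ[volume] f') :
    mconv f g = mconv f' g := by
  funext x
  rw [mconv_apply, mconv_apply]
  exact integral_congr_ae (h.mono fun s hs => by simp only [hs])

lemma mconv_integrable {f g : ℝ → ℝ} (hf : Integrable f volume) (hg : Integrable g volume) :
    Integrable (mconv f g) volume :=
  hf.integrable_convolution (ContinuousLinearMap.mul ℝ ℝ) hg

lemma mconv_existsAt_ae {f g : ℝ → ℝ} (hf : Integrable f volume) (hg : Integrable g volume) :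
    ∀ᵐ x ∂(volume : Measure ℝ), ConvolutionExistsAt f g x (ContinuousLinearMap.mul ℝ ℝ) volume :=
  hf.ae_convolution_exists (ContinuousLinearMap.mul ℝ ℝ) hg

lemma abs_mconv_le {f g : ℝ → ℝ} {x : ℝ} :
    |mconv f g x| ≤ mconv (fun y => |f y|) (fun y => |g y|) x := by
  rw [mconv_apply, mconv_apply]
  calc |∫ s, f s * g (x - s)| ≤ ∫ s, |f s * g (x - s)| := by
        simpa [Real.norm_eq_abs, abs_mul] using norm_integral_le_integral_norm (μ := (volume : Measure ℝ)) (fun s => f s * g (x - s))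
    _ = ∫ s, |f s| * |g (x - s)| := by simp [abs_mul]

lemma integral_mconv {f g : ℝ → ℝ} (hf : Integrable f volume) (hg : Integrable g volume) :
    ∫ x, mconv f g x = (∫ x, f x) * (∫ x, g x) := by
  simpa [mconv] using integral_convolution (ContinuousLinearMap.mul ℝ ℝ) hf hg

lemma mconv_l1_bound {f g : ℝ → ℝ} (hf : Integrable f volume) (hg : Integrable g volume) :
    ∫ x, |mconv f g x| ≤ (∫ x, |f x|) * (∫ x, |g x|) := by
  have hfa := hf.abs
  have hga := hg.abs
  have hint := mconv_integrable hfa hga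
  have h1 : ∀ᵐ x ∂(volume : Measure ℝ), |mconv f g x| ≤ mconv (fun y => |f y|) (fun y => |g y|) x :=
    Filter.Eventually.of_forall fun x => abs_mconv_le
  calc ∫ x, |mconv f g x| ≤ ∫ x, mconv (fun y => |f y|) (fun y => |g y|) x :=
        integral_mono_ae (mconv_integrable hf hg).abs hint h1
    _ = (∫ x, |f x|) * (∫ x, |g x|) := integral_mconv hfa hga

/-- subtracting convolutions: at points where both exist. -/
lemma mconv_sub {f g a : ℝ → ℝ} {x : ℝ}
    (h1 : ConvolutionExistsAt f a x (ContinuousLinearMap.mul ℝ ℝ) volume)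
    (h2 : ConvolutionExistsAt g a x (ContinuousLinearMap.mul ℝ ℝ) volume) :
    mconv f a x - mconv g a x = mconv (f - g) a x := by
  have h1' : Integrable (fun s => f s * a (x - s)) volume := h1
  have h2' : Integrable (fun s => g s * a (x - s)) volume := h2
  rw [mconv_apply, mconv_apply, mconv_apply, ← integral_sub h1' h2']
  congr 1; funext s; simp [sub_mul]

/-- The resolvent: for an integrable kernel `a` with `‖a‖₁ ≤ 1/2` and any integrable `q`,
there is an integrable `r` with `r = 1_{(0,∞)}(q + r ⋆ a)` everywhere. -/
lemma resolvent_exists {a q : ℝ → ℝ} (ha : Integrable a volume)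
    (hanorm : (∫ x, |a x|) ≤ 1/2) (hq : Integrable q volume) :
    ∃ r : ℝ → ℝ, Integrable r volume ∧
      ∀ x, r x = Set.indicator (Set.Ioi 0) (fun y => q y + mconv r a y) x := by
  classical
  have hint : ∀ f : ℝ →₁[volume] ℝ, Integrable
      (Set.indicator (Set.Ioi 0) fun y => q y + mconv (⇑f) a y) volume := fun f =>
    ((hq.add (mconv_integrable (L1.integrable_coeFn f) ha))).indicator measurableSet_Ioi
  set T : (ℝ →₁[volume] ℝ) → (ℝ →₁[volume] ℝ) := fun f => (hint f).toL1 _ with hT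
  have hcontr : ∀ f g : ℝ →₁[volume] ℝ, dist (T f) (T g) ≤ (1/2) * dist f g := by
    intro f g
    have hTf := (hint f).coeFn_toL1
    have hTg := (hint g).coeFn_toL1
    have hsub : Integrable (⇑f - ⇑g) volume := (L1.integrable_coeFn f).sub (L1.integrable_coeFn g)
    have key : ∀ᵐ x ∂(volume : Measure ℝ),
        |(T f : ℝ → ℝ) x - (T g : ℝ → ℝ) x| ≤ |mconv (⇑f - ⇑g) a x| := by
      filter_upwards [hTf, hTg, mconv_existsAt_ae (L1.integrable_coeFn f) ha,
        mconv_existsAt_ae (L1.integrable_coeFn g) ha] with x h1 h2 h3 h4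
      rw [h1, h2]
      rw [← mconv_sub h3 h4]
      rcases le_or_gt x 0 with hx | hx
      · simp [Set.indicator_of_notMem (by simpa using hx : x ∉ Set.Ioi 0)]
      · simp only [Set.indicator_of_mem (Set.mem_Ioi.mpr hx)]
        simp [abs_sub_comm]
    calc dist (T f) (T g) = ∫ x, |(T f : ℝ → ℝ) x - (T g : ℝ → ℝ) x| := by
          rw [L1.dist_eq_integral_dist]; simp only [Real.dist_eq]
      _ ≤ ∫ x, |mconv (⇑f - ⇑g) a x| := by
          refine integral_mono_ae ?_ (mconv_integrable hsub ha).abs key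
          exact ((L1.integrable_coeFn (T f)).sub (L1.integrable_coeFn (T g))).abs
      _ ≤ (∫ x, |(⇑f - ⇑g) x|) * (∫ x, |a x|) := mconv_l1_bound hsub ha
      _ ≤ (∫ x, |(⇑f - ⇑g) x|) * (1/2) := by
          refine mul_le_mul_of_nonneg_left hanorm ?_
          positivity
      _ = (1/2) * dist f g := by
          rw [mul_comm]; congr 1
          rw [L1.dist_eq_integral_dist]
          simp only [Real.dist_eq, Pi.sub_apply]
  have hlip : LipschitzWith (1/2 : ℝ≥0) T := by
    apply LipschitzWith.of_dist_le_mul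
    intro f g
    simpa using hcontr f g
  have hc : ContractingWith (1/2 : ℝ≥0) T := ⟨by exact_mod_cast (by norm_num : ((1:ℝ)/2) < 1), hlip⟩
  obtain ⟨ρ, hρfix⟩ := hc.exists_fixedPoint (0 : ℝ →₁[volume] ℝ) (edist_ne_top _ _)
  obtain ⟨hfix, -⟩ := hρfix
  -- hfix : T ρ = ρ
  have hρae : (⇑ρ : ℝ → ℝ) =ᵐ[volume]
      Set.indicator (Set.Ioi 0) (fun y => q y + mconv (⇑ρ) a y) := by
    conv_lhs => rw [← hfix]
    exact (hint ρ).coeFn_toL1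
  refine ⟨Set.indicator (Set.Ioi 0) (fun y => q y + mconv (⇑ρ) a y), (hint ρ), fun x => ?_⟩
  have : mconv (Set.indicator (Set.Ioi 0) (fun y => q y + mconv (⇑ρ) a y)) a = mconv (⇑ρ) a :=
    mconv_congr_left a hρae.symm
  rw [this]

lemma indicator_eq_self_of_zero {f : ℝ → ℝ} (hf : ∀ x ≤ 0, f x = 0) :
    Set.indicator (Set.Ioi 0) f = f := by
  funext x
  rcases le_or_gt x 0 with hx | hx
  · rw [Set.indicator_of_notMem (by simpa using hx), hf x hx]
  · rw [Set.indicator_of_mem (Set.mem_Ioi.mpr hx)]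

lemma mconv_eq_intervalIntegral {f g : ℝ → ℝ} (hf : ∀ x ≤ 0, f x = 0) (hg : ∀ x ≤ 0, g x = 0)
    {t : ℝ} (ht : 0 < t) : mconv f g t = ∫ s in (0:ℝ)..t, f s * g (t - s) := by
  have h := congrFun (posConvolution_eq_convolution_indicator f g
    (ContinuousLinearMap.mul ℝ ℝ) volume) t
  rw [indicator_eq_self_of_zero hf, indicator_eq_self_of_zero hg] at h
  rw [mconv, ← h, posConvolution, Set.indicator_of_mem (Set.mem_Ioi.mpr ht)]
  simp

/-- Integrability of `s ↦ f s * g (t - s)` for integrable `f` and bounded measurable `g`. -/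
lemma integrable_mul_shift_bdd {f g : ℝ → ℝ} (hf : Integrable f volume) (hg : Measurable g)
    {C : ℝ} (hC : ∀ x, |g x| ≤ C) (t : ℝ) :
    Integrable (fun s => f s * g (t - s)) volume := by
  refine Integrable.mono' (hf.abs.const_mul C) ?_ ?_
  · exact hf.aestronglyMeasurable.mul
      ((hg.comp (measurable_const.sub measurable_id)).aestronglyMeasurable)
  · refine Filter.Eventually.of_forall fun s => ?_
    rw [Real.norm_eq_abs, abs_mul]
    exact mul_le_mul_of_nonneg_left (hC _) (abs_nonneg _) |>.trans
      (le_of_eq (mul_comm _ _))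

lemma mconv_const_right {f a : ℝ → ℝ} (d : ℝ) (x : ℝ) :
    mconv f (fun y => d * a y) x = d * mconv f a x := by
  rw [mconv_apply, mconv_apply, ← MeasureTheory.integral_const_mul]
  congr 1; funext s; ring

/-- choice of exponential weight making the L¹ norm small -/
lemma exists_exp_weight_small {a : ℝ → ℝ} (ha : Integrable a volume)
    (h0 : ∀ x ≤ 0, a x = 0) :
    ∃ n : ℕ, (∫ x, |Real.exp (-(n : ℝ) * x) * a x|) ≤ 1/2 := by
  have hbd : ∀ (n : ℕ), ∀ᵐ x ∂(volume : Measure ℝ),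
      ‖|Real.exp (-(n : ℝ) * x) * a x|‖ ≤ |a x| := by
    intro n
    refine Filter.Eventually.of_forall fun x => ?_
    rw [Real.norm_eq_abs, abs_abs, abs_mul, Real.abs_exp]
    rcases le_or_gt x 0 with hx | hx
    · simp [h0 x hx]
    · have : Real.exp (-(n : ℝ) * x) ≤ 1 := by
        rw [Real.exp_le_one_iff]
        have : (0:ℝ) ≤ (n:ℝ) := Nat.cast_nonneg n
        nlinarith
      nlinarith [abs_nonneg (a x), Real.exp_pos (-(n:ℝ) * x)]
  have htend : Filter.Tendsto (fun n : ℕ => ∫ x, |Real.exp (-(n : ℝ) * x) * a x|)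
      Filter.atTop (nhds (∫ x : ℝ, (0:ℝ))) := by
    refine tendsto_integral_of_dominated_convergence (fun x => |a x|) ?_ ha.abs hbd ?_
    · intro n
      have hm : AEStronglyMeasurable (fun x => Real.exp (-(n : ℝ) * x) * a x) volume :=
        (Continuous.aestronglyMeasurable (by continuity)).mul ha.aestronglyMeasurable
      exact hm.norm.congr (Filter.Eventually.of_forall fun x => Real.norm_eq_abs _)
    · refine Filter.Eventually.of_forall fun x => ?_
      rcases le_or_gt x 0 with hx | hx
      · simpa [h0 x hx] using tendsto_const_nhds
      · have h1 : Filter.Tendsto (fun n : ℕ => -(n : ℝ) * x) Filter.atTop Filter.atBot := by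
          have h2 : Filter.Tendsto (fun n : ℕ => (n : ℝ)) Filter.atTop Filter.atTop :=
            tendsto_natCast_atTop_atTop
          have h3 : Filter.Tendsto (fun n : ℕ => (n : ℝ) * x) Filter.atTop Filter.atTop :=
            h2.atTop_mul_const hx
          have h4 : Filter.Tendsto (fun n : ℕ => -((n : ℝ) * x)) Filter.atTop Filter.atBot :=
            Filter.tendsto_neg_atTop_atBot.comp h3
          simpa only [neg_mul] using h4
        have h3 : Filter.Tendsto (fun n : ℕ => Real.exp (-(n : ℝ) * x)) Filter.atTop (nhds 0) :=
          Real.tendsto_exp_atBot.comp h1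
        have h4 : Filter.Tendsto (fun n : ℕ => Real.exp (-(n : ℝ) * x) * a x)
            Filter.atTop (nhds (0 * a x)) := h3.mul_const (a x)
        rw [zero_mul] at h4
        simpa only [abs_zero] using h4.abs
  rw [integral_zero] at htend
  have := (htend.eventually (gt_mem_nhds (by norm_num : (0:ℝ) < 1/2))).exists
  obtain ⟨n, hn⟩ := this
  exact ⟨n, le_of_lt hn⟩


open MeasureTheory

section Assoc
open Filter

/-- a.e. associativity of convolution of three integrable functions -/
lemma mconv_assoc {f g h : ℝ → ℝ} (hf : Integrable f volume) (hg : Integrable g volume)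
    (hh : Integrable h volume) :
    ∀ᵐ t ∂(volume : Measure ℝ), mconv (mconv f g) h t = mconv f (mconv g h) t := by
  have hfg : ∀ᵐ y ∂(volume : Measure ℝ),
      ConvolutionExistsAt f g y (ContinuousLinearMap.mul ℝ ℝ) volume :=
    mconv_existsAt_ae hf hg
  have hgk : ∀ᵐ x ∂(volume : Measure ℝ),
      ConvolutionExistsAt (fun y => ‖g y‖) (fun y => ‖h y‖) x (ContinuousLinearMap.mul ℝ ℝ)
        volume := by
    have := mconv_existsAt_ae hg.norm hh.norm
    exact this
  have hfgk := mconv_existsAt_ae hf.norm (mconv_integrable hg.norm hh.norm)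
  filter_upwards [hfgk] with t ht
  exact convolution_assoc (ContinuousLinearMap.mul ℝ ℝ) (ContinuousLinearMap.mul ℝ ℝ)
    (ContinuousLinearMap.mul ℝ ℝ) (ContinuousLinearMap.mul ℝ ℝ)
    (fun x y z => mul_assoc x y z) hf.aestronglyMeasurable hg.aestronglyMeasurable
    hh.aestronglyMeasurable hfg hgk ht

/-- pointwise associativity of convolution when the last function is bounded measurable -/
lemma mconv_assoc_bdd {f g h : ℝ → ℝ} (hf : Integrable f volume) (hg : Integrable g volume)
    (hh : Measurable h) {C : ℝ} (hC : ∀ x, |h x| ≤ C) (t : ℝ) :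
    mconv (mconv f g) h t = mconv f (mconv g h) t := by
  have hfg : ∀ᵐ y ∂(volume : Measure ℝ),
      ConvolutionExistsAt f g y (ContinuousLinearMap.mul ℝ ℝ) volume :=
    mconv_existsAt_ae hf hg
  have hgk : ∀ᵐ x ∂(volume : Measure ℝ),
      ConvolutionExistsAt g h x (ContinuousLinearMap.mul ℝ ℝ) volume :=
    Filter.Eventually.of_forall fun x => integrable_mul_shift_bdd hg hh hC x
  have hbase : Integrable (fun p : ℝ × ℝ => f p.2 * g (p.1 - p.2)) (volume.prod volume) :=
    hf.convolution_integrand (ContinuousLinearMap.mul ℝ ℝ) hg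
  have hi : Integrable
      (Function.uncurry fun x y => f y * (g (x - y) * h (t - x))) (volume.prod volume) := by
    have hmeas : AEStronglyMeasurable (fun p : ℝ × ℝ => h (t - p.1)) (volume.prod volume) :=
      ((hh.comp (measurable_const.sub measurable_fst))).aestronglyMeasurable
    have := Integrable.bdd_mul (hg := hbase) (f := fun p : ℝ × ℝ => h (t - p.1)) (c := C) hmeas
      (Filter.Eventually.of_forall fun p => by
        rw [Real.norm_eq_abs]; exact hC _)
    refine this.congr (Filter.Eventually.of_forall fun p => ?_)
    simp only [Function.uncurry]
    ring
  exact convolution_assoc' (ContinuousLinearMap.mul ℝ ℝ) (ContinuousLinearMap.mul ℝ ℝ)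
    (ContinuousLinearMap.mul ℝ ℝ) (ContinuousLinearMap.mul ℝ ℝ)
    (fun x y z => mul_assoc x y z) hfg hgk hi

end Assoc

noncomputable def oneIoi : ℝ → ℝ := Set.indicator (Set.Ioi 0) (fun _ => (1:ℝ))

lemma oneIoi_meas : Measurable oneIoi := measurable_const.indicator measurableSet_Ioi

lemma oneIoi_abs_le : ∀ x, |oneIoi x| ≤ 1 := by
  intro x
  unfold oneIoi
  rcases Classical.em (x ∈ Set.Ioi (0:ℝ)) with hx | hx
  · rw [Set.indicator_of_mem hx]; norm_num
  · rw [Set.indicator_of_notMem hx]; norm_num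

lemma mconv_oneIoi (X : ℝ → ℝ) (t : ℝ) : mconv X oneIoi t = ∫ s in Set.Iio t, X s := by
  rw [mconv_apply, ← MeasureTheory.integral_indicator measurableSet_Iio]
  congr 1; funext s
  rcases lt_or_ge s t with hs | hs
  · rw [Set.indicator_of_mem (Set.mem_Iio.mpr hs)]
    rw [show oneIoi (t - s) = 1 from Set.indicator_of_mem (Set.mem_Ioi.mpr (by linarith)) _]
    ring
  · rw [Set.indicator_of_notMem (by simpa using hs)]
    rw [show oneIoi (t - s) = 0 from Set.indicator_of_notMem (by simp; linarith) _]
    ring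

/-- The weighted Sonine condition WSC2 for a kernel `k ∈ L¹(0,b)` with weight `w`, associated
kernel `K ∈ L¹(0,b)`, and function `G` (with partial derivative `G₂` in the second variable
dominated by `Gbar ∈ L¹(0,b)`): `∫₀ᵗ w(s,z+s) k(t-z) K(z) dz = G(s,t)` for `0 ≤ s + t ≤ b`
(`t > 0`), where `G` satisfies conditions (a) and (b). -/
def WSC2 (b : ℝ) (w : ℝ → ℝ → ℝ) (k K : ℝ → ℝ)
    (G G₂ : ℝ → ℝ → ℝ) (Gbar : ℝ → ℝ) : Prop :=
  IntegrableOn k (Set.Ioc 0 b) ∧ IntegrableOn K (Set.Ioc 0 b) ∧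
  (∀ s t : ℝ, 0 ≤ s → 0 < t → s + t ≤ b →
    (∫ z in (0:ℝ)..t, w s (z + s) * k (t - z) * K z) = G s t) ∧
  (∃ νlo νhi : ℝ, 0 < νlo ∧ νlo ≤ νhi ∧
    ∀ s ∈ Set.Icc (0:ℝ) b, νlo ≤ |G s 0| ∧ |G s 0| ≤ νhi) ∧
  (∀ x, 0 ≤ Gbar x) ∧ IntegrableOn Gbar (Set.Ioc 0 b) ∧
  (∀ s t : ℝ, 0 ≤ s → 0 ≤ t → s + t ≤ b →
    HasDerivWithinAt (fun τ => G s τ) (G₂ s t) (Set.Icc 0 (b - s)) t ∧ |G₂ s t| ≤ Gbar t)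

/-- Theorem 4.1, statement (B): if `k` satisfies WSC2, then `k` satisfies the
classical Sonine condition: there exists `u ∈ L¹(0,b)` with `∫₀ᵗ k(t-s)u(s)ds = 1` for a.e.
`t ∈ (0,b]`. -/
theorem WSC2_implies_CSC
    (b : ℝ) (hb : 0 < b)
    (w : ℝ → ℝ → ℝ) (hwI : WeightCondI b w) (hwII : WeightCondII b w)
    (k K : ℝ → ℝ) (G G₂ : ℝ → ℝ → ℝ) (Gbar : ℝ → ℝ)
    (hWSC : WSC2 b w k K G G₂ Gbar) :
    ∃ u : ℝ → ℝ, IntegrableOn u (Set.Ioc 0 b) ∧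
      ∀ᵐ t ∂(volume.restrict (Set.Ioc (0:ℝ) b)),
        (∫ s in (0:ℝ)..t, k (t - s) * u s) = 1 := by
  classical
  obtain ⟨hk, hK, heq, ⟨νlo, νhi, hνlo, -, hG0⟩, hGbarpos, hGbarint, hGd⟩ := hWSC
  set g : ℝ → ℝ := G 0 with hg_def
  set c : ℝ := G 0 0 with hc_def
  have hc : c ≠ 0 := by
    have := (hG0 0 ⟨le_refl 0, hb.le⟩).1
    intro h
    rw [hc_def] at h
    rw [h] at this
    simp at this
    linarith
  -- derivative facts for g = G 0
  have hgd : ∀ t ∈ Set.Icc (0:ℝ) b, HasDerivWithinAt g (G₂ 0 t) (Set.Icc 0 b) t := by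
    intro t ht
    have := (hGd 0 t le_rfl ht.1 (by simpa using ht.2)).1
    simpa [hg_def] using this
  have hgcont : ContinuousOn g (Set.Icc 0 b) := fun t ht =>
    (hgd t ht).continuousWithinAt
  have hderivat : ∀ t ∈ Set.Ioo (0:ℝ) b, HasDerivAt g (G₂ 0 t) t := by
    intro t ht
    exact (hgd t ⟨ht.1.le, ht.2.le⟩).hasDerivAt (Icc_mem_nhds ht.1 ht.2)
  have hderiv_eq : ∀ t ∈ Set.Ioo (0:ℝ) b, deriv g t = G₂ 0 t := fun t ht =>
    (hderivat t ht).deriv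
  -- the truncated derivative
  set g' : ℝ → ℝ := Set.indicator (Set.Ioc 0 b) (deriv g) with hg'_def
  have hg'meas : Measurable g' := (measurable_deriv g).indicator measurableSet_Ioc
  have hg'zero : ∀ x ≤ (0:ℝ), g' x = 0 := fun x hx =>
    Set.indicator_of_notMem (fun h => absurd h.1 (not_lt.mpr hx)) _
  have hg'int : Integrable g' volume := by
    refine Integrable.mono' ((integrable_indicator_iff measurableSet_Ioc).mpr hGbarint) 
      hg'meas.aestronglyMeasurable ?_
    have hbne : ∀ᵐ x ∂(volume : Measure ℝ), x ≠ b := by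
      rw [ae_iff]
      simpa using measure_singleton (b : ℝ)
    filter_upwards [hbne] with x hxb
    rw [Real.norm_eq_abs, hg'_def]
    rcases Classical.em (x ∈ Set.Ioc 0 b) with hx | hx
    · rw [Set.indicator_of_mem hx, Set.indicator_of_mem hx]
      have hxo : x ∈ Set.Ioo 0 b := ⟨hx.1, lt_of_le_of_ne hx.2 hxb⟩
      rw [hderiv_eq x hxo]
      exact (hGd 0 x le_rfl hxo.1.le (by simpa using hx.2)).2
    · rw [Set.indicator_of_notMem hx, Set.indicator_of_notMem hx]
      simp
  -- FTC
  have hftc : ∀ t ∈ Set.Ioc (0:ℝ) b, (∫ s in (0:ℝ)..t, g' s) = g t - c := by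
    intro t ht
    have hint : IntervalIntegrable g' volume 0 t := hg'int.intervalIntegrable
    have h1 : (∫ s in (0:ℝ)..t, g' s) = ∫ s in (0:ℝ)..t, deriv g s := by
      refine intervalIntegral.integral_congr_ae ?_
      rw [Set.uIoc_of_le ht.1.le]
      filter_upwards [] with s
      intro hs
      exact Set.indicator_of_mem (Set.mem_Ioc.mpr ⟨hs.1, hs.2.trans ht.2⟩) (deriv g)
    rw [h1]
    have hdw : ∀ x ∈ Set.Ioo (0:ℝ) t, HasDerivWithinAt g (deriv g x) (Set.Ioi x) x := by
      intro x hx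
      have hxo : x ∈ Set.Ioo (0:ℝ) b := ⟨hx.1, hx.2.trans_le ht.2⟩
      rw [hderiv_eq x hxo]
      exact (hderivat x hxo).hasDerivWithinAt
    have := intervalIntegral.integral_eq_sub_of_hasDeriv_right_of_le ht.1.le
      (hgcont.mono (Set.Icc_subset_Icc le_rfl ht.2))
      hdw
      ?_
    · rw [this]
    · refine intervalIntegrable_iff.mpr ?_
      rw [Set.uIoc_of_le ht.1.le]
      exact (hg'int.integrableOn).congr_fun
        (fun x hx => Set.indicator_of_mem (Set.mem_Ioc.mpr ⟨hx.1, hx.2.trans ht.2⟩)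
          (deriv g)) measurableSet_Ioc
  -- the resolvent kernel data
  set a₀ : ℝ → ℝ := fun x => -g' x / c with ha₀_def
  have ha₀meas : Measurable a₀ := hg'meas.neg.div_const c
  have ha₀int : Integrable a₀ volume := (hg'int.neg).div_const c
  have ha₀zero : ∀ x ≤ (0:ℝ), a₀ x = 0 := fun x hx => by
    simp [ha₀_def, hg'zero x hx]
  have hg'fun : g' = fun x => -c * a₀ x := by
    funext x; rw [ha₀_def]; field_simp
  obtain ⟨n, hn⟩ := exists_exp_weight_small ha₀int ha₀zero
  set ea : ℝ → ℝ := fun x => Real.exp (-(n : ℝ) * x) * a₀ x with hea_def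
  have heaint : Integrable ea volume := by
    refine Integrable.mono' ha₀int.abs ?_ ?_
    · exact ((Real.continuous_exp.comp (continuous_const.mul continuous_id)).aestronglyMeasurable).mul
        ha₀meas.aestronglyMeasurable
    · refine Filter.Eventually.of_forall fun x => ?_
      rw [Real.norm_eq_abs, hea_def]
      rcases le_or_gt x 0 with hx | hx
      · simp [ha₀zero x hx]
      · rw [abs_mul, Real.abs_exp]
        have h1 : Real.exp (-(n : ℝ) * x) ≤ 1 := by
          rw [Real.exp_le_one_iff]
          have : (0:ℝ) ≤ (n:ℝ) := Nat.cast_nonneg n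
          nlinarith
        nlinarith [abs_nonneg (a₀ x), Real.exp_pos (-(n:ℝ) * x)]
  have hn' : (∫ x, |ea x|) ≤ 1/2 := hn
  obtain ⟨r, hrint, hreq⟩ := resolvent_exists heaint hn' (heaint.div_const c)
  have hr0 : ∀ x ≤ (0:ℝ), r x = 0 := fun x hx => by
    rw [hreq x]
    exact Set.indicator_of_notMem (by simpa using hx) _
  -- undo the exponential weighting, truncated to (0, b]
  set ρ : ℝ → ℝ := Set.indicator (Set.Ioc 0 b) (fun x => Real.exp ((n : ℝ) * x) * r x) with hρ_def
  have hρzero : ∀ x, x ∉ Set.Ioc (0:ℝ) b → ρ x = 0 := fun x hx => Set.indicator_of_notMem hx _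
  have hρzero' : ∀ x ≤ (0:ℝ), ρ x = 0 := fun x hx =>
    hρzero x (fun hmem => absurd hmem.1 (not_lt.mpr hx))
  have hρint : Integrable ρ volume := by
    refine Integrable.mono' (hrint.abs.const_mul (Real.exp ((n:ℝ)*b))) ?_ ?_
    · exact (((Real.continuous_exp.comp (continuous_const.mul continuous_id)).aestronglyMeasurable).mul
        hrint.aestronglyMeasurable).indicator measurableSet_Ioc
    · refine Filter.Eventually.of_forall fun x => ?_
      rw [Real.norm_eq_abs, hρ_def]
      rcases Classical.em (x ∈ Set.Ioc (0:ℝ) b) with hx | hx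
      · rw [Set.indicator_of_mem hx, abs_mul, Real.abs_exp]
        have h1 : Real.exp ((n:ℝ)*x) ≤ Real.exp ((n:ℝ)*b) := by
          apply Real.exp_le_exp.mpr
          have : (0:ℝ) ≤ (n:ℝ) := Nat.cast_nonneg n
          nlinarith [hx.2]
        nlinarith [abs_nonneg (r x), Real.exp_pos ((n:ℝ)*x)]
      · rw [Set.indicator_of_notMem hx, abs_zero]
        positivity
  -- resolvent equation for ρ, pointwise on (0, b]
  have hρeq : ∀ x ∈ Set.Ioc (0:ℝ) b, ρ x = a₀ x / c + mconv ρ a₀ x := by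
    intro x hx
    have h1 : ρ x = Real.exp ((n:ℝ)*x) * r x := Set.indicator_of_mem hx _
    have h2 : r x = ea x / c + mconv r ea x := by
      rw [hreq x]
      exact Set.indicator_of_mem (Set.mem_Ioi.mpr hx.1) _
    rw [h1, h2, mul_add]
    congr 1
    · rw [hea_def]
      rw [show Real.exp ((n:ℝ)*x) * (Real.exp (-(n:ℝ)*x) * a₀ x / c)
          = (Real.exp ((n:ℝ)*x) * Real.exp (-(n:ℝ)*x)) * (a₀ x / c) from by ring]
      rw [← Real.exp_add]
      norm_num
    · rw [mconv_apply, mconv_apply, ← MeasureTheory.integral_const_mul]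
      congr 1; funext s
      rcases le_or_gt s 0 with hs | hs
      · simp [hr0 s hs, hρzero' s hs]
      rcases le_or_gt s b with hsb | hsb
      · have hρs : ρ s = Real.exp ((n:ℝ)*s) * r s := Set.indicator_of_mem (Set.mem_Ioc.mpr ⟨hs, hsb⟩) _
        rw [hρs, hea_def]
        rw [show Real.exp ((n:ℝ)*x) * (r s * (Real.exp (-(n:ℝ)*(x-s)) * a₀ (x-s)))
            = (Real.exp ((n:ℝ)*x) * Real.exp (-(n:ℝ)*(x-s))) * (r s * a₀ (x-s)) from by ring]
        rw [← Real.exp_add]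
        rw [show (n:ℝ)*x + -(n:ℝ)*(x-s) = (n:ℝ)*s from by ring]
        ring
      · have h0 : a₀ (x-s) = 0 := ha₀zero _ (by linarith [hx.2])
        have hea0 : ea (x-s) = 0 := by rw [hea_def]; simp [h0]
        have hρ0 : ρ s = 0 := hρzero s (fun hmem => absurd hmem.2 (not_le.mpr hsb))
        simp [h0, hea0, hρ0]
  -- the weighted kernel v and truncated kernel k₀
  have hwcont : ContinuousOn (w 0) (Set.Icc 0 b) := by
    obtain ⟨w₂, wbar, -, -, hw⟩ := hwII
    intro t ht
    exact ((hw 0 t le_rfl ht.1 ht.2).1).continuousWithinAt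
  obtain ⟨Cw, hCw⟩ : ∃ Cw, ∀ x ∈ Set.Icc (0:ℝ) b, ‖w 0 x‖ ≤ Cw :=
    isCompact_Icc.exists_bound_of_continuousOn hwcont
  set v : ℝ → ℝ := Set.indicator (Set.Ioc 0 b) (fun z => w 0 z * K z) with hv_def
  have hv0 : ∀ x ≤ (0:ℝ), v x = 0 := fun x hx =>
    Set.indicator_of_notMem (fun hmem => absurd hmem.1 (not_lt.mpr hx)) _
  have hvint : Integrable v volume := by
    rw [hv_def, integrable_indicator_iff measurableSet_Ioc]
    refine Integrable.bdd_mul (c := Cw) hK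
      ((hwcont.mono Set.Ioc_subset_Icc_self).aestronglyMeasurable measurableSet_Ioc) ?_
    rw [MeasureTheory.ae_restrict_iff' measurableSet_Ioc]
    exact Filter.Eventually.of_forall fun x hx => hCw x ⟨hx.1.le, hx.2⟩
  set k₀ : ℝ → ℝ := Set.indicator (Set.Ioc 0 b) k with hk₀_def
  have hk₀int : Integrable k₀ volume := (integrable_indicator_iff measurableSet_Ioc).mpr hk
  have hk₀0 : ∀ x ≤ (0:ℝ), k₀ x = 0 := fun x hx =>
    Set.indicator_of_notMem (fun hmem => absurd hmem.1 (not_lt.mpr hx)) _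
  -- the convolution v ⋆ k₀ equals g on (0, b]
  have hΦ : ∀ t ∈ Set.Ioc (0:ℝ) b, mconv v k₀ t = g t := by
    intro t ht
    rw [mconv_eq_intervalIntegral hv0 hk₀0 ht.1]
    rw [hg_def, ← heq 0 t le_rfl ht.1 (by simpa using ht.2)]
    rw [intervalIntegral.integral_of_le ht.1.le, intervalIntegral.integral_of_le ht.1.le]
    refine setIntegral_congr_ae measurableSet_Ioc ?_
    have hane : ∀ᵐ z ∂(volume : Measure ℝ), z ≠ t := by
      rw [ae_iff]; simpa using measure_singleton t
    filter_upwards [hane] with z hz hzin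
    have hz1 : z ∈ Set.Ioo 0 t := ⟨hzin.1, lt_of_le_of_ne hzin.2 hz⟩
    have hvz : v z = w 0 z * K z :=
      Set.indicator_of_mem (Set.mem_Ioc.mpr ⟨hz1.1, hz1.2.le.trans ht.2⟩) _
    have hkz : k₀ (t - z) = k (t - z) :=
      Set.indicator_of_mem (Set.mem_Ioc.mpr ⟨by linarith [hz1.2], by linarith [ht.2, hz1.1]⟩) _
    rw [hvz, hkz, add_zero]
    ring
  have hΦ0 : ∀ x ≤ (0:ℝ), mconv v k₀ x = 0 := fun x hx =>
    mconv_zero_of_nonpos hv0 hk₀0 hx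
  -- the primitive of g'
  set HH : ℝ → ℝ := fun x => ∫ s in (0:ℝ)..x, g' s with hHH_def
  have hHHcont : Continuous HH :=
    intervalIntegral.continuous_primitive (fun a b => hg'int.intervalIntegrable) 0
  have hHH0 : ∀ x ≤ (0:ℝ), HH x = 0 := by
    intro x hx
    rw [hHH_def]
    simp only []
    rw [intervalIntegral.integral_of_ge hx]
    rw [setIntegral_congr_fun measurableSet_Ioc (fun s hs => hg'zero s hs.2)]
    simp
  have habs : ∀ (S : Set ℝ), |∫ s in S, g' s| ≤ ∫ y, |g' y| := by
    intro S
    calc |∫ s in S, g' s| ≤ ∫ s in S, |g' s| := by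
          simpa [Real.norm_eq_abs] using
            norm_integral_le_integral_norm (μ := volume.restrict S) g'
      _ ≤ ∫ y, |g' y| :=
          setIntegral_le_integral hg'int.abs (Filter.Eventually.of_forall fun y => abs_nonneg _)
  have hHHb : ∀ x, |HH x| ≤ ∫ y, |g' y| := by
    intro x
    rw [hHH_def]
    simp only []
    rcases le_or_gt 0 x with hx | hx
    · rw [intervalIntegral.integral_of_le hx]; exact habs _
    · rw [intervalIntegral.integral_of_ge hx.le, abs_neg]; exact habs _
  have hHHIio : ∀ x, HH x = ∫ s in Set.Iio x, g' s := by
    intro x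
    rcases le_or_gt x 0 with hx | hx
    · rw [hHH0 x hx]
      rw [setIntegral_congr_fun measurableSet_Iio
        (fun s (hs : s ∈ Set.Iio x) => hg'zero s (le_of_lt (lt_of_lt_of_le hs hx)))]
      simp
    · rw [hHH_def]
      simp only []
      rw [intervalIntegral.integral_of_le hx.le]
      rw [hg'_def, setIntegral_indicator measurableSet_Ioc,
        setIntegral_indicator measurableSet_Ioc]
      rcases le_or_gt x b with hxb | hxb
      · have e1 : Set.Ioc 0 x ∩ Set.Ioc 0 b = Set.Ioc 0 x := by
          rw [Set.inter_eq_left]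
          exact Set.Ioc_subset_Ioc le_rfl hxb
        have e2 : Set.Iio x ∩ Set.Ioc 0 b = Set.Ioo 0 x := by
          ext s
          simp only [Set.mem_inter_iff, Set.mem_Iio, Set.mem_Ioc, Set.mem_Ioo]
          constructor
          · rintro ⟨h1, h2, h3⟩; exact ⟨h2, h1⟩
          · rintro ⟨h1, h2⟩; exact ⟨h2, h1, by linarith⟩
        rw [e1, e2, ← integral_Ioc_eq_integral_Ioo]
      · have e1 : Set.Ioc 0 x ∩ Set.Ioc 0 b = Set.Ioc 0 b := by
          rw [Set.inter_eq_right]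
          exact Set.Ioc_subset_Ioc le_rfl hxb.le
        have e2 : Set.Iio x ∩ Set.Ioc 0 b = Set.Ioc 0 b := by
          rw [Set.inter_eq_right]
          intro s hs
          exact lt_of_le_of_lt hs.2 hxb
        rw [e1, e2]
  have hHHconv : HH = mconv g' oneIoi := by
    funext x
    rw [mconv_oneIoi, hHHIio]
  -- the Sonine associate kernel
  set u : ℝ → ℝ := fun x => (1/c) * v x + mconv ρ v x with hu_def
  have hu0 : ∀ x ≤ (0:ℝ), u x = 0 := fun x hx => by
    rw [hu_def]
    simp [hv0 x hx, mconv_zero_of_nonpos hρzero' hv0 hx]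
  have huint : Integrable u volume := (hvint.const_mul _).add (mconv_integrable hρint hvint)
  refine ⟨u, huint.integrableOn, ?_⟩
  rw [ae_restrict_iff' measurableSet_Ioc]
  have E1 := mconv_existsAt_ae hvint hk₀int
  have E2 := mconv_existsAt_ae (mconv_integrable hρint hvint) hk₀int
  have E3 := mconv_assoc hρint hvint hk₀int
  filter_upwards [E1, E2, E3] with t hE1 hE2 hE3 ht
  have h0t : 0 < t := ht.1
  -- step 1 : the interval integral is a convolution
  have s1 : (∫ s in (0:ℝ)..t, k (t - s) * u s) = mconv u k₀ t := by
    rw [mconv_eq_intervalIntegral hu0 hk₀0 h0t]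
    rw [intervalIntegral.integral_of_le h0t.le, intervalIntegral.integral_of_le h0t.le]
    refine setIntegral_congr_ae measurableSet_Ioc ?_
    have hane : ∀ᵐ s ∂(volume : Measure ℝ), s ≠ t := by
      rw [ae_iff]; simpa using measure_singleton t
    filter_upwards [hane] with s hs hsin
    have hk0 : k₀ (t - s) = k (t - s) :=
      Set.indicator_of_mem (Set.mem_Ioc.mpr
        ⟨sub_pos.mpr (lt_of_le_of_ne hsin.2 hs), by linarith [hsin.1, ht.2]⟩) _
    rw [hk0]; ring
  -- step 2 : split off the two parts of u
  have s2 : mconv u k₀ t = (1/c) * mconv v k₀ t + mconv (mconv ρ v) k₀ t := by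
    have hE1' : Integrable (fun s => v s * k₀ (t - s)) volume := hE1
    have hE2' : Integrable (fun s => mconv ρ v s * k₀ (t - s)) volume := hE2
    rw [mconv_apply, mconv_apply, mconv_apply, ← MeasureTheory.integral_const_mul,
      ← integral_add (hE1'.const_mul (1/c)) hE2']
    congr 1; funext s
    rw [hu_def]; ring
  -- step 3 : associativity and identification with g
  have s3 : mconv (mconv ρ v) k₀ t = mconv ρ (mconv v k₀) t := hE3
  -- step 4 : decompose g = c + HH inside the convolution
  have s4 : mconv ρ (mconv v k₀) t = ∫ s, ρ s * (c * oneIoi (t - s) + HH (t - s)) := by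
    rw [mconv_apply]
    congr 1; funext s
    rcases le_or_gt s 0 with hs | hs
    · simp [hρzero' s hs]
    rcases le_or_gt s b with hsb | hsb
    swap
    · simp [hρzero s (fun hmem => absurd hmem.2 (not_le.mpr hsb))]
    rcases le_or_gt (t - s) 0 with hts | hts
    · rw [hΦ0 _ hts, hHH0 _ hts,
        show oneIoi (t - s) = 0 from Set.indicator_of_notMem (by simpa using hts) _]
      ring
    · have hmem : t - s ∈ Set.Ioc (0:ℝ) b := ⟨hts, by linarith [ht.2]⟩
      rw [hΦ (t - s) hmem,
        show oneIoi (t - s) = 1 from Set.indicator_of_mem (Set.mem_Ioi.mpr hts) _,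
        show HH (t - s) = g (t - s) - c from hftc (t - s) hmem]
      ring
  -- step 5 : split the integral
  have i1 : Integrable (fun s => ρ s * oneIoi (t - s)) volume :=
    integrable_mul_shift_bdd hρint oneIoi_meas oneIoi_abs_le t
  have i2 : Integrable (fun s => ρ s * HH (t - s)) volume :=
    integrable_mul_shift_bdd hρint hHHcont.measurable hHHb t
  have s5 : (∫ s, ρ s * (c * oneIoi (t - s) + HH (t - s)))
      = c * (∫ s, ρ s * oneIoi (t - s)) + ∫ s, ρ s * HH (t - s) := by
    rw [← MeasureTheory.integral_const_mul, ← integral_add (i1.const_mul c) i2]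
    congr 1; funext s; ring
  -- step 6 : the two pieces as integrals over Iio t
  have s6 : (∫ s, ρ s * oneIoi (t - s)) = ∫ s in Set.Iio t, ρ s := by
    rw [← mconv_oneIoi ρ t, mconv_apply]
  have s7 : (∫ s, ρ s * HH (t - s)) = ∫ x in Set.Iio t, mconv ρ g' x := by
    have e1 : (∫ s, ρ s * HH (t - s)) = mconv ρ HH t := (mconv_apply _ _ _).symm
    rw [e1, hHHconv, ← mconv_assoc_bdd hρint hg'int oneIoi_meas oneIoi_abs_le t,
      mconv_oneIoi]
  -- step 7 : the resolvent identity under the integral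
  have i3 : IntegrableOn (fun x => c * ρ x + mconv ρ g' x) (Set.Iio t) volume :=
    ((hρint.const_mul c).add (mconv_integrable hρint hg'int)).integrableOn
  have s8 : c * (∫ s in Set.Iio t, ρ s) + (∫ x in Set.Iio t, mconv ρ g' x)
      = ∫ x in Set.Iio t, (c * ρ x + mconv ρ g' x) := by
    rw [← MeasureTheory.integral_const_mul,
      ← integral_add ((hρint.integrableOn).const_mul c) (mconv_integrable hρint hg'int).integrableOn]
  have s9 : (∫ x in Set.Iio t, (c * ρ x + mconv ρ g' x)) = ∫ x in Set.Iio t, a₀ x := by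
    refine setIntegral_congr_fun measurableSet_Iio ?_
    intro x hx
    rcases le_or_gt x 0 with hx0 | hx0
    · simp [hρzero' x hx0, mconv_zero_of_nonpos hρzero' hg'zero hx0, ha₀zero x hx0]
    · have hxm : x ∈ Set.Ioc (0:ℝ) b := ⟨hx0, by
        have : x < t := hx
        linarith [ht.2]⟩
      have e1 : mconv ρ g' x = -c * mconv ρ a₀ x := by
        rw [hg'fun, mconv_const_right]
      show c * ρ x + mconv ρ g' x = a₀ x
      rw [hρeq x hxm, e1]
      field_simp
      ring
  have s10 : (∫ x in Set.Iio t, a₀ x) = -(1/c) * (g t - c) := by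
    have e1 : (∫ x in Set.Iio t, a₀ x) = ∫ x in Set.Iio t, (-(1/c)) * g' x := by
      refine setIntegral_congr_fun measurableSet_Iio fun x _ => ?_
      rw [ha₀_def]; ring
    rw [e1, MeasureTheory.integral_const_mul, ← hHHIio t,
      show HH t = g t - c from hftc t ht]
  -- put everything together
  rw [s1, s2, s3, s4, s5, s6, s7, s8, s9, s10, hΦ t ht]
  field_simp
  ring
end

section
/- Let b > 0, let k : (0,b] → [0,∞] be nonincreasing (antitone), and let K : (0,b] → ℝ be a function for which there exist Q₀ > 0 and t̂₀ ∈ (0,b] with K(t) ≥ Q₀ for all t ∈ (0, t̂₀). Suppose the Sonine relation ∫₀ᵗ K(t−s) k(s) ds = 1 holds for all t ∈ (0,b]. Then k(t) < ∞ for every t ∈ (0,b]. -/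
open MeasureTheory ENNReal

/-- Lemma 4.2: if `k : (0,b] → [0,∞]` is nonincreasing, `K` is bounded below by
`Q₀ > 0` on `(0, t̂₀)`, and the Sonine relation `∫₀ᵗ K(t-s)k(s)ds = 1` holds on `(0,b]`, then
`k(t) < ∞` for every `t ∈ (0,b]`. -/
theorem sonine_kernel_finite
    (b : ℝ) (hb : 0 < b)
    (k : ℝ → ℝ≥0∞) (hk : AntitoneOn k (Set.Ioc 0 b))
    (K : ℝ → ℝ) (Q₀ t₀ : ℝ) (hQ₀ : 0 < Q₀) (ht₀ : t₀ ∈ Set.Ioc (0:ℝ) b)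
    (hK : ∀ t ∈ Set.Ioo (0:ℝ) t₀, Q₀ ≤ K t)
    (hSonine : ∀ t ∈ Set.Ioc (0:ℝ) b,
      (∫⁻ s in Set.Ioc (0:ℝ) t, ENNReal.ofReal (K (t - s)) * k s) = 1) :
    ∀ t ∈ Set.Ioc (0:ℝ) b, k t < ⊤ := by
  intro t ht
  by_contra h
  push_neg at h
  have hkt : k t = ⊤ := top_le_iff.mp h
  obtain ⟨ht0, htb⟩ := ht
  set a : ℝ := max 0 (t - t₀) with ha
  have hat : a < t := by
    apply max_lt ht0
    linarith [ht₀.1]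
  have hsub : Set.Ioo a t ⊆ Set.Ioc (0:ℝ) t := fun s hs =>
    ⟨lt_of_le_of_lt (le_max_left _ _) hs.1, le_of_lt hs.2⟩
  have hkey : ∀ s ∈ Set.Ioo a t, ENNReal.ofReal (K (t - s)) * k s = ⊤ := by
    intro s hs
    have hs0 : 0 < s := lt_of_le_of_lt (le_max_left _ _) hs.1
    have hks : k s = ⊤ := by
      have := hk ⟨hs0, le_trans hs.2.le htb⟩ ⟨ht0, htb⟩ hs.2.le
      rw [hkt] at this
      exact top_le_iff.mp this
    have hKs : Q₀ ≤ K (t - s) := by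
      apply hK
      constructor
      · linarith [hs.2]
      · have : t - t₀ ≤ a := le_max_right _ _
        linarith [hs.1]
    rw [hks, ENNReal.mul_top]
    simp only [ne_eq, ENNReal.ofReal_eq_zero, not_le]
    linarith
  have h1 := hSonine t ⟨ht0, htb⟩
  have h2 : (⊤ : ℝ≥0∞) ≤ ∫⁻ s in Set.Ioc (0:ℝ) t, ENNReal.ofReal (K (t - s)) * k s := by
    calc (⊤ : ℝ≥0∞) = ∫⁻ s in Set.Ioo a t, (⊤ : ℝ≥0∞) := by
          rw [setLIntegral_const]
          rw [Real.volume_Ioo]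
          rw [ENNReal.top_mul]
          simp [hat]
      _ = ∫⁻ s in Set.Ioo a t, ENNReal.ofReal (K (t - s)) * k s := by
          refine setLIntegral_congr_fun measurableSet_Ioo ?_
          exact fun s hs => (hkey s hs).symm
      _ ≤ _ := lintegral_mono_set hsub
  rw [h1] at h2
  exact absurd h2 (by simp)
end

section
/- Let b > 0 and let k, K : (0,b) → [0,∞) be integrable functions satisfying the classical Sonine relation ∫₀ᵗ k(z) K(t−z) dz = 1 for all t ∈ (0,b]. Suppose K is differentiable on (0,b) with K′(t) ≤ 0 for all t ∈ (0,b), and lim_{t→0⁺} t K(t) = 0. Then the function D(t) := − ∫₀ᵗ (t−z) k(z) K′(t−z) dz satisfies ∫₀ᵇ D(t) dt ≤ b + ‖k‖_{L¹(0,b)} ‖K‖_{L¹(0,b)}; in particular D ∈ L¹(0,b). -/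
open MeasureTheory

open Set ENNReal in
/-- Core estimate: on a compact subinterval `[ε, c] ⊂ (0, b)`, the lintegral of
`s ↦ s * (-K'(s))` is bounded by the `L¹` norm of `K` on `(0, b]`. -/
lemma D_stepA_core (b : ℝ) (K K' : ℝ → ℝ)
    (hKL1 : IntegrableOn K (Set.Ioc 0 b))
    (hK : ∀ x ∈ Set.Ioo (0:ℝ) b, 0 ≤ K x)
    (hK' : ∀ t ∈ Set.Ioo (0:ℝ) b, HasDerivAt K (K' t) t ∧ K' t ≤ 0)
    (ε c : ℝ) (hε : 0 < ε) (hεc : ε < c) (hcb : c < b) :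
    ∫⁻ s in Set.Ioo ε c, ENNReal.ofReal (s * -(deriv K s)) ≤
      ENNReal.ofReal (∫ t in Set.Ioc 0 b, |K t|) := by
  have hsub : Set.Icc ε c ⊆ Set.Ioo 0 b := fun x hx => ⟨lt_of_lt_of_le hε hx.1, lt_of_le_of_lt hx.2 hcb⟩
  have hKcont : ContinuousOn K (Set.Ioo 0 b) := fun x hx =>
    ((hK' x hx).1.continuousAt).continuousWithinAt
  have hderivK : ∀ x ∈ Set.Ioo (0:ℝ) b, deriv K x = K' x := fun x hx => (hK' x hx).1.deriv
  -- integrability of -K' on (ε, c]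
  have hK'int : IntegrableOn (fun x => -K' x) (Set.Ioc ε c) := by
    apply intervalIntegral.integrableOn_deriv_of_nonneg (g := fun x => -K x)
    · exact (hKcont.mono hsub).neg
    · intro x hx
      exact ((hK' x (hsub ⟨hx.1.le, hx.2.le⟩)).1.neg)
    · intro x hx
      linarith [(hK' x (hsub ⟨hx.1.le, hx.2.le⟩)).2]
  -- integrability of ψ on (ε, c]
  have hψint : IntegrableOn (fun s => s * -(K' s)) (Set.Ioc ε c) := by
    apply Integrable.mono' (hK'int.const_mul c)
    · exact (continuous_id.aestronglyMeasurable).mul hK'int.1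
    · filter_upwards [ae_restrict_mem measurableSet_Ioc] with x hx
      have hx' := hsub ⟨hx.1.le, hx.2⟩
      have h1 : 0 ≤ -K' x := by linarith [(hK' x hx').2]
      rw [Real.norm_eq_abs, abs_of_nonneg (mul_nonneg (by linarith [hx'.1]) h1)]
      exact mul_le_mul_of_nonneg_right hx.2 h1
  set G : ℝ → ℝ := fun s => (∫ u in ε..s, K u) - s * K s with hG
  have hGderiv : ∀ s ∈ Set.Icc ε c, HasDerivAt G (s * -(K' s)) s := by
    intro s hs
    have hs' : s ∈ Set.Ioo (0:ℝ) b := hsub hs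
    have h1 : HasDerivAt (fun r => ∫ u in ε..r, K u) (K s) s := by
      apply intervalIntegral.integral_hasDerivAt_right
      · rw [intervalIntegrable_iff_integrableOn_Ioc_of_le hs.1]
        exact hKL1.mono_set (Set.Ioc_subset_Ioc hε.le (le_trans hs.2 hcb.le))
      · exact hKcont.stronglyMeasurableAtFilter isOpen_Ioo s hs'
      · exact (hK' s hs').1.continuousAt
    have h2 : HasDerivAt (fun r => r * K r) (1 * K s + s * K' s) s :=
      (hasDerivAt_id s).mul (hK' s hs').1
    have := h1.sub h2
    rw [show s * -(K' s) = K s - (1 * K s + s * K' s) by ring]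
    exact this
  have hGcont : ContinuousOn G (Set.Icc ε c) := fun x hx =>
    (hGderiv x hx).continuousAt.continuousWithinAt
  have hFTC : (∫ s in ε..c, s * -(K' s)) = G c - G ε := by
    apply intervalIntegral.integral_eq_sub_of_hasDerivAt_of_le hεc.le hGcont
    · intro x hx
      exact hGderiv x ⟨hx.1.le, hx.2.le⟩
    · exact (intervalIntegrable_iff_integrableOn_Ioc_of_le hεc.le).2 hψint
  -- K is ≥ K ε on (0, ε]
  have hmono : ∀ x, 0 < x → x ≤ ε → K ε ≤ K x := by
    intro x hx hxε
    rcases eq_or_lt_of_le hxε with h | h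
    · rw [h]
    have hconv : Set.Icc x ε ⊆ Set.Ioo 0 b := fun y hy =>
      ⟨lt_of_lt_of_le hx hy.1, lt_of_le_of_lt hy.2 (hεc.trans hcb)⟩
    have hanti : AntitoneOn K (Set.Icc x ε) := by
      apply antitoneOn_of_deriv_nonpos (convex_Icc x ε) (hKcont.mono hconv)
      · intro y hy
        rw [interior_Icc] at hy
        exact ((hK' y (hconv ⟨hy.1.le, hy.2.le⟩)).1.differentiableAt).differentiableWithinAt
      intro y hy
      rw [interior_Icc] at hy
      have hy' : y ∈ Set.Ioo (0:ℝ) b := hconv ⟨hy.1.le, hy.2.le⟩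
      rw [hderivK y hy']
      exact (hK' y hy').2
    exact hanti ⟨le_refl x, hxε⟩ ⟨hxε, le_refl ε⟩ hxε
  have hεb : ε < b := hεc.trans hcb
  have hεK : ε * K ε ≤ ∫ t in Set.Ioc 0 ε, K t := by
    have h1 : (∫ _t in Set.Ioc (0:ℝ) ε, K ε) ≤ ∫ t in Set.Ioc 0 ε, K t := by
      apply setIntegral_mono_on
      · exact integrableOn_const (by rw [Real.volume_Ioc]; exact ENNReal.ofReal_ne_top)
      · exact hKL1.mono_set (Set.Ioc_subset_Ioc le_rfl hεb.le)
      · exact measurableSet_Ioc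
      · intro x hx
        exact hmono x hx.1 hx.2
    calc ε * K ε = (volume (Set.Ioc (0:ℝ) ε)).toReal • K ε := by
          rw [Real.volume_Ioc, sub_zero, ENNReal.toReal_ofReal hε.le, smul_eq_mul]
      _ = ∫ _t in Set.Ioc (0:ℝ) ε, K ε := (setIntegral_const (K ε)).symm
      _ ≤ _ := h1
  -- chaining the bound
  have hchain : (∫ s in Set.Ioc ε c, s * -(K' s)) ≤ ∫ t in Set.Ioc 0 b, |K t| := by
    have hGc : G c - G ε = (∫ u in ε..c, K u) - c * K c + ε * K ε := by
      simp only [hG, intervalIntegral.integral_same]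
      ring
    have hcK : 0 ≤ c * K c :=
      mul_nonneg (by linarith) (hK c ⟨by linarith, hcb⟩)
    have hKabs : IntegrableOn (fun t => |K t|) (Set.Ioc 0 b) := hKL1.abs
    have hadd : (∫ t in Set.Ioc 0 ε, K t) + (∫ t in Set.Ioc ε c, K t) = ∫ t in Set.Ioc 0 c, K t := by
      rw [← setIntegral_union (Set.Ioc_disjoint_Ioc_of_le le_rfl) measurableSet_Ioc
        (hKL1.mono_set (Set.Ioc_subset_Ioc le_rfl hεb.le))
        (hKL1.mono_set (Set.Ioc_subset_Ioc hε.le hcb.le)),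
        Set.Ioc_union_Ioc_eq_Ioc hε.le hεc.le]
    have hfinal : (∫ t in Set.Ioc 0 c, K t) ≤ ∫ t in Set.Ioc 0 b, |K t| := by
      calc (∫ t in Set.Ioc 0 c, K t) ≤ ∫ t in Set.Ioc 0 c, |K t| := by
            apply integral_mono (hKL1.mono_set (Set.Ioc_subset_Ioc le_rfl hcb.le))
              (hKabs.mono_set (Set.Ioc_subset_Ioc le_rfl hcb.le))
            intro x; exact le_abs_self _
        _ ≤ ∫ t in Set.Ioc 0 b, |K t| := by
            apply setIntegral_mono_set hKabs
            · exact Filter.Eventually.of_forall fun x => abs_nonneg _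
            · exact Filter.Eventually.of_forall (Set.Ioc_subset_Ioc le_rfl hcb.le)
    have hIoc : (∫ s in Set.Ioc ε c, s * -(K' s)) = ∫ s in ε..c, s * -(K' s) := by
      rw [intervalIntegral.integral_of_le hεc.le]
    rw [hIoc, hFTC, hGc, ← intervalIntegral.integral_of_le hεc.le] at *
    have hKεc : (∫ u in ε..c, K u) = ∫ t in Set.Ioc ε c, K t :=
      intervalIntegral.integral_of_le hεc.le
    linarith
  -- convert lintegral to the Bochner integral
  have hnn : 0 ≤ᵐ[volume.restrict (Set.Ioc ε c)] fun s => s * -(K' s) := by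
    filter_upwards [ae_restrict_mem measurableSet_Ioc] with x hx
    have hx' := hsub ⟨hx.1.le, hx.2⟩
    exact mul_nonneg (by linarith [hx'.1]) (by linarith [(hK' x hx').2])
  have h1 : ∫⁻ s in Set.Ioo ε c, ENNReal.ofReal (s * -(deriv K s))
      = ∫⁻ s in Set.Ioo ε c, ENNReal.ofReal (s * -(K' s)) := by
    apply setLIntegral_congr_fun measurableSet_Ioo
    intro x hx
    beta_reduce
    rw [hderivK x (hsub ⟨hx.1.le, hx.2.le⟩)]
  have h2 : ∫⁻ s in Set.Ioo ε c, ENNReal.ofReal (s * -(K' s))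
      = ∫⁻ s in Set.Ioc ε c, ENNReal.ofReal (s * -(K' s)) :=
    setLIntegral_congr Ioo_ae_eq_Ioc
  rw [h1, h2, ← ofReal_integral_eq_lintegral_ofReal hψint hnn]
  exact ENNReal.ofReal_le_ofReal hchain

open Set ENNReal in
/-- Step A: the lintegral of `s ↦ s * (-K'(s))` over `(0, b)` is bounded by the
`L¹` norm of `K` on `(0, b]`. -/
lemma D_stepA (b : ℝ) (hb : 0 < b) (K K' : ℝ → ℝ)
    (hKL1 : IntegrableOn K (Set.Ioc 0 b))
    (hK : ∀ x ∈ Set.Ioo (0:ℝ) b, 0 ≤ K x)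
    (hK' : ∀ t ∈ Set.Ioo (0:ℝ) b, HasDerivAt K (K' t) t ∧ K' t ≤ 0) :
    ∫⁻ s in Set.Ioo 0 b, ENNReal.ofReal (s * -(deriv K s)) ≤
      ENNReal.ofReal (∫ t in Set.Ioc 0 b, |K t|) := by
  have hψm : Measurable fun s => ENNReal.ofReal (s * -(deriv K s)) :=
    (measurable_id.mul (measurable_deriv K).neg).ennreal_ofReal
  set ν := volume.withDensity (fun s => ENNReal.ofReal (s * -(deriv K s))) with hν
  set A : ℕ → Set ℝ := fun n => Set.Ioo (b / (n + 2)) (b - b / (n + 2)) with hA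
  have hεpos : ∀ n : ℕ, 0 < b / (n + 2) := by
    intro n
    apply div_pos hb
    positivity
  have hmonoA : Monotone A := by
    intro m n hmn
    apply Set.Ioo_subset_Ioo
    · apply div_le_div_of_nonneg_left hb.le (by positivity)
      have : (m : ℝ) ≤ n := Nat.cast_le.2 hmn
      linarith
    · have : b / (↑n + 2) ≤ b / (↑m + 2) := by
        apply div_le_div_of_nonneg_left hb.le (by positivity)
        have : (m : ℝ) ≤ n := Nat.cast_le.2 hmn
        linarith
      linarith
  have hcover : Set.Ioo (0:ℝ) b = ⋃ n, A n := by
    apply Set.Subset.antisymm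
    · intro x hx
      set m := min x (b - x) with hm
      have hm0 : 0 < m := lt_min hx.1 (by linarith [hx.2])
      obtain ⟨n, hn⟩ := exists_nat_gt (b / m)
      refine Set.mem_iUnion.2 ⟨n, ?_, ?_⟩
      · have h1 : b / (↑n + 2) < m := by
          rw [div_lt_iff₀ (by positivity)]
          have h2 : b < m * n := by
            rw [div_lt_iff₀ hm0] at hn
            linarith [hn]
          nlinarith [hm0]
        exact lt_of_lt_of_le h1 (min_le_left _ _)
      · have h1 : b / (↑n + 2) < m := by
          rw [div_lt_iff₀ (by positivity)]
          have h2 : b < m * n := by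
            rw [div_lt_iff₀ hm0] at hn
            linarith [hn]
          nlinarith [hm0]
        have := lt_of_lt_of_le h1 (min_le_right _ _)
        linarith
    · apply Set.iUnion_subset
      intro n x hx
      exact ⟨lt_trans (hεpos n) hx.1, by linarith [hx.2, hεpos n]⟩
  have happ : ∀ s : Set ℝ, MeasurableSet s →
      ν s = ∫⁻ x in s, ENNReal.ofReal (x * -(deriv K x)) := by
    intro s hs
    rw [hν, withDensity_apply _ hs]
  rw [← happ _ measurableSet_Ioo, hcover, hmonoA.measure_iUnion]
  apply iSup_le
  intro n
  by_cases h : b / (n + 2) < b - b / (n + 2)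
  · rw [happ _ measurableSet_Ioo]
    exact D_stepA_core b K K' hKL1 hK hK' _ _ (hεpos n) h (by linarith [hεpos n])
  · rw [hA]
    simp only [Set.Ioo_eq_empty h]
    simp

/-- if the nonnegative integrable kernels `k, K` satisfy the Sonine relation
`∫₀ᵗ k(z)K(t-z)dz = 1` on `(0,b]`, `K` is differentiable and nonincreasing on `(0,b)` with
derivative `K'`, and `tK(t) → 0` as `t → 0⁺`, then
`D(t) = -∫₀ᵗ (t-z) k(z) K'(t-z) dz` satisfies
`∫₀ᵇ D(t)dt ≤ b + ‖k‖_{L¹(0,b)} ‖K‖_{L¹(0,b)}`; in particular `D ∈ L¹(0,b)`. -/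
theorem D_integrable
    (b : ℝ) (hb : 0 < b)
    (k K K' : ℝ → ℝ)
    (hkL1 : IntegrableOn k (Set.Ioc 0 b)) (hKL1 : IntegrableOn K (Set.Ioc 0 b))
    (hk : ∀ x ∈ Set.Ioo (0:ℝ) b, 0 ≤ k x) (hK : ∀ x ∈ Set.Ioo (0:ℝ) b, 0 ≤ K x)
    (hSonine : ∀ t ∈ Set.Ioc (0:ℝ) b, (∫ z in (0:ℝ)..t, k z * K (t - z)) = 1)
    (hK' : ∀ t ∈ Set.Ioo (0:ℝ) b, HasDerivAt K (K' t) t ∧ K' t ≤ 0)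
    (hK0 : Filter.Tendsto (fun t => t * K t) (nhdsWithin 0 (Set.Ioi 0)) (nhds 0)) :
    (∫ t in Set.Ioc (0:ℝ) b, -∫ z in (0:ℝ)..t, (t - z) * k z * K' (t - z))
        ≤ b + (∫ t in Set.Ioc (0:ℝ) b, |k t|) * (∫ t in Set.Ioc (0:ℝ) b, |K t|) ∧
    IntegrableOn (fun t => -∫ z in (0:ℝ)..t, (t - z) * k z * K' (t - z))
      (Set.Ioc 0 b) := by
  classical
  set Nk := ∫ t in Set.Ioc (0:ℝ) b, |k t| with hNkdef
  set NK := ∫ t in Set.Ioc (0:ℝ) b, |K t| with hNKdef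
  have hNk0 : 0 ≤ Nk := integral_nonneg fun _ => abs_nonneg _
  have hNK0 : 0 ≤ NK := integral_nonneg fun _ => abs_nonneg _
  -- measurable representative of k
  set g : ℝ → ℝ := hkL1.1.mk k with hgdef
  have hgm : Measurable g := hkL1.1.stronglyMeasurable_mk.measurable
  have hgk : k =ᵐ[volume.restrict (Set.Ioc 0 b)] g := hkL1.1.ae_eq_mk
  -- the nonnegative kernel ψ
  set ψ : ℝ → ℝ := fun s => s * -(deriv K s) with hψdef
  have hψm : Measurable ψ := measurable_id.mul (measurable_deriv K).neg
  have hψnn : ∀ s ∈ Set.Ioo (0:ℝ) b, 0 ≤ ψ s := by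
    intro s hs
    have hψs : ψ s = s * -(K' s) := by
      show s * -(deriv K s) = _
      rw [(hK' s hs).1.deriv]
    rw [hψs]
    exact mul_nonneg hs.1.le (by linarith [(hK' s hs).2])
  -- the region and the product function
  set S : Set (ℝ × ℝ) := {p | p.1 ∈ Set.Ioc 0 b ∧ p.2 ∈ Set.Ioo 0 p.1} with hSdef
  have hS : MeasurableSet S := by
    have : S = ({p : ℝ × ℝ | 0 < p.1} ∩ {p | p.1 ≤ b}) ∩
        ({p : ℝ × ℝ | 0 < p.2} ∩ {p | p.2 < p.1}) := by
      ext p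
      simp only [hSdef, Set.mem_setOf_eq, Set.mem_Ioc, Set.mem_Ioo,
        Set.mem_inter_iff] <;> tauto
    rw [this]
    exact (((measurableSet_lt measurable_const measurable_fst).inter
        (measurableSet_le measurable_fst measurable_const)).inter
      ((measurableSet_lt measurable_const measurable_snd).inter
        (measurableSet_lt measurable_snd measurable_fst)))
  set Fp : ℝ × ℝ → ENNReal :=
    S.indicator (fun p => ENNReal.ofReal (g p.2 * ψ (p.1 - p.2))) with hFpdef
  have hFpm : Measurable Fp :=
    (((hgm.comp measurable_snd).mul
      (hψm.comp (measurable_fst.sub measurable_snd))).ennreal_ofReal).indicator hS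
  set F : ℝ → ℝ → ENNReal := fun t z => Fp (t, z) with hFdef
  have hFunc : Function.uncurry F = Fp := rfl
  set L : ℝ → ENNReal := fun t => ∫⁻ z, F t z with hLdef
  have hLm : Measurable L := by
    apply Measurable.lintegral_prod_right
    rw [hFunc]
    exact hFpm
  -- step A bound
  have hΨ : (∫⁻ s in Set.Ioo 0 b, ENNReal.ofReal (ψ s)) ≤ ENNReal.ofReal NK :=
    D_stepA b hb K K' hKL1 hK hK'
  -- the shift identity
  have hshift : ∀ z : ℝ, (∫⁻ t in Set.Ioc z b, ENNReal.ofReal (ψ (t - z)))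
      = ∫⁻ s in Set.Ioc 0 (b - z), ENNReal.ofReal (ψ s) := by
    intro z
    have hm : Measurable fun s => (Set.Ioc (0:ℝ) (b - z)).indicator
        (fun s => ENNReal.ofReal (ψ s)) s := (hψm.ennreal_ofReal).indicator measurableSet_Ioc
    calc (∫⁻ t in Set.Ioc z b, ENNReal.ofReal (ψ (t - z)))
        = ∫⁻ t, (Set.Ioc z b).indicator (fun t => ENNReal.ofReal (ψ (t - z))) t :=
          (lintegral_indicator measurableSet_Ioc _).symm
      _ = ∫⁻ t, (Set.Ioc (0:ℝ) (b - z)).indicator (fun s => ENNReal.ofReal (ψ s)) (t + -z) := by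
          apply lintegral_congr
          intro t
          by_cases ht : t ∈ Set.Ioc z b
          · rw [Set.indicator_of_mem ht, Set.indicator_of_mem
              (by constructor <;> [linarith [ht.1]; linarith [ht.2]] :
                t + -z ∈ Set.Ioc (0:ℝ) (b - z))]
            rw [sub_eq_add_neg]
          · rw [Set.indicator_of_notMem ht, Set.indicator_of_notMem]
            intro hmem
            exact ht ⟨by linarith [hmem.1], by linarith [hmem.2]⟩
      _ = ∫⁻ s, (Set.Ioc (0:ℝ) (b - z)).indicator (fun s => ENNReal.ofReal (ψ s)) s := by
          rw [← lintegral_map hm (measurable_add_const (-z)), map_add_right_eq_self]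
      _ = ∫⁻ s in Set.Ioc 0 (b - z), ENNReal.ofReal (ψ s) :=
          lintegral_indicator measurableSet_Ioc _
  -- bound for fixed z after swapping
  have hzbound : ∀ z : ℝ, (∫⁻ t, F t z) ≤
      (Set.Ioo 0 b).indicator (fun z => ENNReal.ofReal (g z) * ENNReal.ofReal NK) z := by
    intro z
    by_cases hz : z ∈ Set.Ioo 0 b
    · rw [Set.indicator_of_mem hz]
      have h1 : ∀ t, F t z =
          (Set.Ioc z b).indicator (fun t => ENNReal.ofReal (g z * ψ (t - z))) t := by
        intro t
        by_cases ht : t ∈ Set.Ioc z b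
        · rw [Set.indicator_of_mem ht]
          exact Set.indicator_of_mem
            (show (t, z) ∈ S from ⟨⟨lt_trans hz.1 ht.1, ht.2⟩, hz.1, ht.1⟩) _
        · rw [Set.indicator_of_notMem ht]
          exact Set.indicator_of_notMem (fun hmem => ht ⟨hmem.2.2, hmem.1.2⟩) _
      calc (∫⁻ t, F t z)
          = ∫⁻ t in Set.Ioc z b, ENNReal.ofReal (g z * ψ (t - z)) := by
            rw [show (fun t => F t z) = (Set.Ioc z b).indicator
              (fun t => ENNReal.ofReal (g z * ψ (t - z))) from funext h1]
            exact lintegral_indicator measurableSet_Ioc _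
        _ ≤ ∫⁻ t in Set.Ioc z b, ENNReal.ofReal (g z) * ENNReal.ofReal (ψ (t - z)) := by
            have hmψz : Measurable fun t : ℝ => ENNReal.ofReal (ψ (t - z)) :=
              (hψm.comp (measurable_id.sub measurable_const)).ennreal_ofReal
            apply setLIntegral_mono (measurable_const.mul hmψz)
            intro t ht
            have htz : t - z ∈ Set.Ioo (0:ℝ) b :=
              ⟨by linarith [ht.1], by linarith [ht.2, hz.1]⟩
            by_cases hgz : 0 ≤ g z
            · rw [ENNReal.ofReal_mul hgz]; exact le_rfl
            · rw [ENNReal.ofReal_of_nonpos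
                (mul_nonpos_of_nonpos_of_nonneg (by linarith) (hψnn _ htz))]
              exact zero_le
        _ = ENNReal.ofReal (g z) * ∫⁻ t in Set.Ioc z b, ENNReal.ofReal (ψ (t - z)) :=
            lintegral_const_mul _
              ((hψm.comp (measurable_id.sub measurable_const)).ennreal_ofReal)
        _ = ENNReal.ofReal (g z) * ∫⁻ s in Set.Ioc 0 (b - z), ENNReal.ofReal (ψ s) := by
            rw [hshift z]
        _ ≤ ENNReal.ofReal (g z) * ENNReal.ofReal NK := by
            apply mul_le_mul_right
            have hsub2 : Set.Ioc (0:ℝ) (b - z) ⊆ Set.Ioo 0 b :=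
              fun s hs => ⟨hs.1, by linarith [hs.2, hz.1]⟩
            exact le_trans (lintegral_mono_set hsub2) hΨ
    · rw [Set.indicator_of_notMem hz]
      have h0 : ∀ t, F t z = 0 := by
        intro t
        apply Set.indicator_of_notMem
        intro hmem
        exact hz ⟨hmem.2.1, lt_of_lt_of_le hmem.2.2 hmem.1.2⟩
      simp [h0]
  -- the total mass is finite
  have hI : (∫⁻ t, L t) ≤ ENNReal.ofReal Nk * ENNReal.ofReal NK := by
    have hswap : (∫⁻ t, L t) = ∫⁻ z, ∫⁻ t, F t z := by
      rw [hLdef]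
      exact lintegral_lintegral_swap (by rw [hFunc]; exact hFpm.aemeasurable)
    rw [hswap]
    calc (∫⁻ z, ∫⁻ t, F t z)
        ≤ ∫⁻ z, (Set.Ioo 0 b).indicator
            (fun z => ENNReal.ofReal (g z) * ENNReal.ofReal NK) z := lintegral_mono hzbound
      _ = ∫⁻ z in Set.Ioo 0 b, ENNReal.ofReal (g z) * ENNReal.ofReal NK :=
          lintegral_indicator measurableSet_Ioo _
      _ = (∫⁻ z in Set.Ioo 0 b, ENNReal.ofReal (g z)) * ENNReal.ofReal NK :=
          lintegral_mul_const _ hgm.ennreal_ofReal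
      _ ≤ ENNReal.ofReal Nk * ENNReal.ofReal NK := by
          apply mul_le_mul_left
          have h1 : (∫⁻ z in Set.Ioo 0 b, ENNReal.ofReal (g z))
              = ∫⁻ z in Set.Ioo 0 b, ENNReal.ofReal (k z) := by
            apply lintegral_congr_ae
            filter_upwards [ae_mono (Measure.restrict_mono Set.Ioo_subset_Ioc_self le_rfl) hgk]
              with z hz
            rw [hz]
          have h2 : (∫⁻ z in Set.Ioo 0 b, ENNReal.ofReal (k z))
              = ENNReal.ofReal (∫ z in Set.Ioo 0 b, k z) :=
            (ofReal_integral_eq_lintegral_ofReal (hkL1.mono_set Set.Ioo_subset_Ioc_self)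
              ((ae_restrict_mem measurableSet_Ioo).mono hk)).symm
          rw [h1, h2]
          apply ENNReal.ofReal_le_ofReal
          rw [← integral_Ioc_eq_integral_Ioo]
          exact integral_mono hkL1 hkL1.abs fun x => le_abs_self _
  have hIfin : (∫⁻ t, L t) ≠ ⊤ :=
    (lt_of_le_of_lt hI (ENNReal.mul_lt_top ENNReal.ofReal_lt_top ENNReal.ofReal_lt_top)).ne
  have hae : ∀ᵐ t, L t < ⊤ := ae_lt_top hLm hIfin
  -- identification of D with toReal ∘ L a.e. on (0, b]
  have hDL : (fun t => -∫ z in (0:ℝ)..t, (t - z) * k z * K' (t - z))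
      =ᵐ[volume.restrict (Set.Ioc (0:ℝ) b)] fun t => (L t).toReal := by
    filter_upwards [ae_restrict_mem measurableSet_Ioc, ae_restrict_of_ae hae] with t ht htfin
    show (-∫ z in (0:ℝ)..t, (t - z) * k z * K' (t - z)) = (L t).toReal
    have hLt : L t = ∫⁻ z in Set.Ioo 0 t, ENNReal.ofReal (g z * ψ (t - z)) := by
      rw [hLdef]
      simp only []
      rw [← lintegral_indicator measurableSet_Ioo]
      apply lintegral_congr
      intro z
      by_cases hzz : z ∈ Set.Ioo 0 t
      · rw [Set.indicator_of_mem hzz]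
        exact Set.indicator_of_mem (show (t, z) ∈ S from ⟨ht, hzz⟩) _
      · rw [Set.indicator_of_notMem hzz]
        exact Set.indicator_of_notMem (fun hmem => hzz hmem.2) _
    set v : ℝ → ℝ := fun z => k z * ((t - z) * -(K' (t - z))) with hvdef
    have haemem := ae_restrict_mem (μ := volume) (measurableSet_Ioo (a := (0:ℝ)) (b := t))
    have hsubm : Set.Ioo 0 t ⊆ Set.Ioc 0 b := fun x hx => ⟨hx.1, le_trans hx.2.le ht.2⟩
    have hkg : k =ᵐ[volume.restrict (Set.Ioo 0 t)] g :=
      ae_mono (Measure.restrict_mono hsubm le_rfl) hgk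
    have heq : (fun z => g z * ψ (t - z)) =ᵐ[volume.restrict (Set.Ioo 0 t)] v := by
      filter_upwards [haemem, hkg] with z hz hzg
      have htz : t - z ∈ Set.Ioo (0:ℝ) b := ⟨by linarith [hz.2], by linarith [ht.2, hz.1]⟩
      show g z * ψ (t - z) = k z * ((t - z) * -(K' (t - z)))
      rw [← hzg]
      have hψtz : ψ (t - z) = (t - z) * -(K' (t - z)) := by
        show (t - z) * -(deriv K (t - z)) = _
        rw [(hK' _ htz).1.deriv]
      rw [hψtz]
    have hnn : 0 ≤ᵐ[volume.restrict (Set.Ioo 0 t)] v := by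
      filter_upwards [haemem] with z hz
      have hz' : z ∈ Set.Ioo (0:ℝ) b := ⟨hz.1, lt_of_lt_of_le hz.2 ht.2⟩
      have htz : t - z ∈ Set.Ioo (0:ℝ) b := ⟨by linarith [hz.2], by linarith [ht.2, hz.1]⟩
      exact mul_nonneg (hk z hz')
        (mul_nonneg (by linarith [hz.2]) (by linarith [(hK' _ htz).2]))
    have hvm : AEStronglyMeasurable v (volume.restrict (Set.Ioo 0 t)) :=
      ((hgm.mul (hψm.comp (measurable_const.sub measurable_id))).aestronglyMeasurable).congr heq
    have hL' : (∫⁻ z in Set.Ioo 0 t, ENNReal.ofReal (v z)) = L t := by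
      rw [hLt]
      exact (lintegral_congr_ae (heq.mono fun z hz => congrArg ENNReal.ofReal hz)).symm
    have hvint : IntegrableOn v (Set.Ioo 0 t) := by
      refine ⟨hvm, ?_⟩
      rw [hasFiniteIntegral_iff_ofReal hnn, hL']
      exact htfin
    have hIoc : (∫ z in (0:ℝ)..t, (t - z) * k z * K' (t - z))
        = ∫ z in Set.Ioo 0 t, (t - z) * k z * K' (t - z) := by
      rw [intervalIntegral.integral_of_le ht.1.le, integral_Ioc_eq_integral_Ioo]
    have hring : (fun z => (t - z) * k z * K' (t - z)) = fun z => -v z := by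
      funext z
      rw [hvdef]
      ring
    calc (-∫ z in (0:ℝ)..t, (t - z) * k z * K' (t - z))
        = -∫ z in Set.Ioo 0 t, (t - z) * k z * K' (t - z) := by rw [hIoc]
      _ = ∫ z in Set.Ioo 0 t, v z := by rw [hring, integral_neg, neg_neg]
      _ = (∫⁻ z in Set.Ioo 0 t, ENNReal.ofReal (v z)).toReal :=
          integral_eq_lintegral_of_nonneg_ae hnn hvm
      _ = (L t).toReal := by rw [hL']
  -- integrability
  have hDmeasInt : IntegrableOn (fun t => (L t).toReal) (Set.Ioc 0 b) := by
    refine ⟨(hLm.ennreal_toReal).aestronglyMeasurable.restrict, ?_⟩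
    rw [hasFiniteIntegral_iff_ofReal (Filter.Eventually.of_forall fun t => ENNReal.toReal_nonneg)]
    calc (∫⁻ t in Set.Ioc 0 b, ENNReal.ofReal ((L t).toReal))
        ≤ ∫⁻ t in Set.Ioc 0 b, L t := lintegral_mono fun t => ENNReal.ofReal_toReal_le
      _ ≤ ∫⁻ t, L t := setLIntegral_le_lintegral _ _
      _ < ⊤ := hIfin.lt_top
  have hDint : IntegrableOn (fun t => -∫ z in (0:ℝ)..t, (t - z) * k z * K' (t - z))
      (Set.Ioc 0 b) := hDmeasInt.congr hDL.symm
  refine ⟨?_, hDint⟩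
  have h1 : (∫ t in Set.Ioc (0:ℝ) b, -∫ z in (0:ℝ)..t, (t - z) * k z * K' (t - z))
      = ∫ t in Set.Ioc (0:ℝ) b, (L t).toReal := integral_congr_ae hDL
  have h2 : (∫ t in Set.Ioc (0:ℝ) b, (L t).toReal)
      = (∫⁻ t in Set.Ioc (0:ℝ) b, ENNReal.ofReal ((L t).toReal)).toReal :=
    integral_eq_lintegral_of_nonneg_ae
      (Filter.Eventually.of_forall fun t => ENNReal.toReal_nonneg)
      (hLm.ennreal_toReal).aestronglyMeasurable.restrict
  have h3 : (∫⁻ t in Set.Ioc (0:ℝ) b, ENNReal.ofReal ((L t).toReal))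
      ≤ ENNReal.ofReal (Nk * NK) := by
    calc (∫⁻ t in Set.Ioc (0:ℝ) b, ENNReal.ofReal ((L t).toReal))
        ≤ ∫⁻ t in Set.Ioc (0:ℝ) b, L t := lintegral_mono fun t => ENNReal.ofReal_toReal_le
      _ ≤ ∫⁻ t, L t := setLIntegral_le_lintegral _ _
      _ ≤ ENNReal.ofReal Nk * ENNReal.ofReal NK := hI
      _ = ENNReal.ofReal (Nk * NK) := (ENNReal.ofReal_mul hNk0).symm
  have h4 := ENNReal.toReal_mono ENNReal.ofReal_ne_top h3
  rw [ENNReal.toReal_ofReal (mul_nonneg hNk0 hNK0)] at h4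
  rw [h1, h2]
  linarith
end
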